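/- arXiv:1309.5640 — 7 statements merged into one kernel-verified Lean document; each statement's English description precedes it below -/
import Mathlib

section
/- Let A = M_n(ℂ) and let 𝒞(A) be its poset of commutative unital *-subalgebras, with Σ_e, π and the Σ↓-topology defined as usual. Let U ⊆ 𝒞(A) be a downward-closed subset, and let s : U → Σ_e be a section of π (i.e. π∘s is the inclusion of U into 𝒞(A)) which is continuous when U carries the subspace topology of the lower Alexandroff topology and Σ_e carries the Σ↓-topology. Then s is compatible with restrictions: for all D ⊆ C with C, D ∈ U, writing s(C) = (C, r_C) and s(D) = (D, r_D), one has r_D = ρ_{CD}(r_C). -/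
open scoped ComplexOrder

noncomputable section

/-- `M_n(ℂ)`, the C*-algebra of `n × n` complex matrices. -/
abbrev Mat (n : ℕ) := Matrix (Fin n) (Fin n) ℂ

/-- The spectral projection `χ_S(a)` of a Hermitian matrix `a`, obtained by applying the
indicator function of `S` via the functional calculus from the spectral decomposition. -/
def specProj {n : ℕ} (a : Mat n) (S : Set ℝ) : Mat n :=
  if h : a.IsHermitian then h.cfc (Set.indicator S fun _ => (1 : ℝ)) else 0

/-- The Löwner order: `x ≤ y` iff `y - x` is positive semidefinite. -/
def loewnerLE {n : ℕ} (x y : Mat n) : Prop := (y - x).PosSemidef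

/-- The spectral order on (Hermitian) matrices:
`a ≤ₛ b` iff `χ_{(-∞,x]}(b) ≤ χ_{(-∞,x]}(a)` in the Löwner order for every `x : ℝ`. -/
def specLE {n : ℕ} (a b : Mat n) : Prop :=
  ∀ x : ℝ, loewnerLE (specProj b (Set.Iic x)) (specProj a (Set.Iic x))

/-- A projection: `p = p* = p²`. -/
def IsProjection {n : ℕ} (p : Mat n) : Prop := star p = p ∧ p * p = p

/-- A context: a commutative unital *-subalgebra of `M_n(ℂ)`. -/
structure Ctx (n : ℕ) where
  alg : StarSubalgebra ℂ (Mat n)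
  comm : ∀ x ∈ alg, ∀ y ∈ alg, x * y = y * x

/-- A character of a context: a unital *-algebra homomorphism to `ℂ`. -/
abbrev Character {n : ℕ} (C : StarSubalgebra ℂ (Mat n)) := C →⋆ₐ[ℂ] ℂ

/-- A state on `M_n(ℂ)`: a normalized positive linear functional. -/
structure IsState {n : ℕ} (ψ : Mat n →ₗ[ℂ] ℂ) : Prop where
  map_one : ψ 1 = 1
  pos : ∀ x : Mat n, 0 ≤ ψ (star x * x)


/-- The topology of pointwise convergence on characters (the Gelfand topology). -/
instance {n : ℕ} (C : StarSubalgebra ℂ (Mat n)) : TopologicalSpace (Character C) :=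
  TopologicalSpace.induced (fun φ => (φ : C → ℂ)) inferInstance

/-- The restriction map `ρ_{CD}` on characters along an inclusion of contexts. -/
def resChar {n : ℕ} {C D : StarSubalgebra ℂ (Mat n)} (h : D ≤ C)
    (φ : Character C) : Character D :=
  φ.comp (StarSubalgebra.inclusion h)

/-- The disjoint union `Σ_e = ⨿_C Σ_C` over all contexts. -/
abbrev SigmaE (n : ℕ) := Σ C : Ctx n, Character C.alg

/-- A subset `U ⊆ Σ_e` is Σ↓-open if every `U_C` is open in `Σ_C` and `U` is closed under
restriction of characters to smaller contexts. -/
def IsSigmaDownOpen {n : ℕ} (U : Set (SigmaE n)) : Prop :=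
  (∀ C : Ctx n, IsOpen {φ : Character C.alg | (⟨C, φ⟩ : SigmaE n) ∈ U}) ∧
  (∀ C D : Ctx n, ∀ h : D.alg ≤ C.alg, ∀ φ : Character C.alg,
    (⟨C, φ⟩ : SigmaE n) ∈ U → (⟨D, resChar h φ⟩ : SigmaE n) ∈ U)

lemma char_eval_continuous {n : ℕ} (C : StarSubalgebra ℂ (Mat n)) (x : C) :
    Continuous fun φ : Character C => φ x :=
  (continuous_apply x).comp continuous_induced_dom

lemma resChar_continuous {n : ℕ} {C D : StarSubalgebra ℂ (Mat n)} (h : D ≤ C) :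
    Continuous (resChar (n := n) h) := by
  apply continuous_induced_rng.2
  apply continuous_pi
  intro d
  exact char_eval_continuous C (StarSubalgebra.inclusion h d)

lemma char_singleton_closed {n : ℕ} (C : StarSubalgebra ℂ (Mat n)) (ψ : Character C) :
    IsClosed ({ψ} : Set (Character C)) := by
  have hset : ({ψ} : Set (Character C)) = ⋂ x : C, {φ : Character C | φ x = ψ x} := by
    ext φ
    simp only [Set.mem_singleton_iff, Set.mem_iInter, Set.mem_setOf_eq]
    constructor
    · rintro rfl x; rfl
    · intro hx; ext x; exact hx x
  rw [hset]
  exact isClosed_iInter fun x => isClosed_eq (char_eval_continuous C x) continuous_const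

lemma resChar_refl {n : ℕ} {D : StarSubalgebra ℂ (Mat n)} (φ : Character D) :
    resChar (le_refl D) φ = φ := by
  ext x; rfl

/-- A continuous section of `π : Σ_e → 𝒞(A)` over a downward-closed set `U`
of contexts (Alexandroff topology downstairs, Σ↓-topology upstairs; continuity expressed via
preimages of Σ↓-opens being downward closed) is compatible with restriction of characters. -/
theorem continuous_section_is_compatible {n : ℕ} (hn : 0 < n)
    (U : Set (Ctx n))
    (hU : ∀ C D : Ctx n, D.alg ≤ C.alg → C ∈ U → D ∈ U)
    (s : ∀ C : Ctx n, C ∈ U → Character C.alg)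
    (hcont : ∀ W : Set (SigmaE n), IsSigmaDownOpen W →
      ∀ C D : Ctx n, ∀ hC : C ∈ U, ∀ hD : D ∈ U, D.alg ≤ C.alg →
        (⟨C, s C hC⟩ : SigmaE n) ∈ W → (⟨D, s D hD⟩ : SigmaE n) ∈ W) :
    ∀ C D : Ctx n, ∀ hC : C ∈ U, ∀ hD : D ∈ U, ∀ h : D.alg ≤ C.alg,
      s D hD = resChar h (s C hC) := by
  intro C D hC hD h
  by_contra hne
  set W : Set (SigmaE n) :=
    {p | ∀ hle : D.alg ≤ p.1.alg, resChar hle p.2 ≠ s D hD} with hWdef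
  have hWopen : IsSigmaDownOpen W := by
    constructor
    · intro E
      by_cases hle : D.alg ≤ E.alg
      · have hset : {φ : Character E.alg | (⟨E, φ⟩ : SigmaE n) ∈ W}
            = (resChar hle) ⁻¹' ({s D hD}ᶜ) := by
          ext φ
          simp only [hWdef, Set.mem_setOf_eq, Set.mem_preimage, Set.mem_compl_iff,
            Set.mem_singleton_iff]
          exact ⟨fun hφ => hφ hle, fun hφ _ => hφ⟩
        rw [hset]
        exact (char_singleton_closed _ _).isOpen_compl.preimage (resChar_continuous hle)
      · have hset : {φ : Character E.alg | (⟨E, φ⟩ : SigmaE n) ∈ W} = Set.univ := by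
          ext φ
          simp only [hWdef, Set.mem_setOf_eq, Set.mem_univ, iff_true]
          intro hle'
          exact absurd hle' hle
        rw [hset]; exact isOpen_univ
    · intro E F hEF φ hmem hle'
      have hcomp : resChar hle' (resChar hEF φ) = resChar (hle'.trans hEF) φ := by
        ext x; rfl
      rw [hcomp]
      exact hmem _
  have hCmem : (⟨C, s C hC⟩ : SigmaE n) ∈ W := by
    intro hle heq
    exact hne heq.symm
  have hDmem := hcont W hWopen C D hC hD h hCmem
  exact hDmem (le_refl D.alg) (resChar_refl (s D hD))

end
end

section
/- Let P be a partially ordered set. Let F(P) be the set of filters of P (nonempty, upward-closed, downward-directed subsets of P), partially ordered by inclusion and equipped with the Scott topology. Let i : P → F(P) be the map p ↦ ↑p = {x ∈ P : p ≤ x}. Then the assignment W ↦ i⁻¹(W) = {p ∈ P : ↑p ∈ W} is an order isomorphism (an inclusion-preserving bijection with inclusion-preserving inverse) from the collection of Scott-open subsets of F(P) onto the collection of downward-closed subsets of P; in particular, for each p ∈ P, i⁻¹({F ∈ F(P) : p ∈ F}) = ↓p. -/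
noncomputable section

variable {P : Type*} [PartialOrder P]

/-- A filter of a poset: nonempty, upward closed, downward directed. -/
def IsPosetFilter (F : Set P) : Prop :=
  F.Nonempty ∧ (∀ x ∈ F, ∀ y, x ≤ y → y ∈ F) ∧
    ∀ x ∈ F, ∀ y ∈ F, ∃ z ∈ F, z ≤ x ∧ z ≤ y

/-- The set of filters of `P`, ordered by inclusion. -/
abbrev PosetFilter (P : Type*) [PartialOrder P] := {F : Set P // IsPosetFilter F}

/-- Scott-openness for a set of filters: an upper set inaccessible by suprema of (nonempty)
directed subsets. -/
def ScottOpen (W : Set (PosetFilter P)) : Prop :=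
  (∀ F G : PosetFilter P, F ≤ G → F ∈ W → G ∈ W) ∧
  ∀ D : Set (PosetFilter P), D.Nonempty → DirectedOn (· ≤ ·) D →
    ∀ F : PosetFilter P, IsLUB D F → F ∈ W → ∃ G ∈ D, G ∈ W

/-- The principal filter `↑p`, as an element of the poset of filters. -/
def principalFilter (p : P) : PosetFilter P :=
  ⟨Set.Ici p, ⟨p, le_refl p⟩, fun _ hx y hxy => le_trans hx hxy,
    fun x hx y hy => ⟨p, le_refl p, hx, hy⟩⟩

lemma principalFilter_anti {p q : P} (h : p ≤ q) :
    principalFilter q ≤ principalFilter p := fun x hx => le_trans h hx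

lemma principalFilter_le {p : P} {F : PosetFilter P} (hp : p ∈ F.1) :
    principalFilter p ≤ F := fun x hx => F.2.2.1 p hp x hx

/-- Every filter is the lub of the principal filters of its elements. -/
lemma isLUB_principal (F : PosetFilter P) :
    IsLUB {G : PosetFilter P | ∃ p ∈ F.1, G = principalFilter p} F := by
  constructor
  · rintro G ⟨p, hp, rfl⟩
    exact principalFilter_le hp
  · intro G hG p hp
    exact hG ⟨p, hp, rfl⟩ (le_refl p)

lemma mem_scottOpen_iff {W : Set (PosetFilter P)} (hW : ScottOpen W) (F : PosetFilter P) :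
    F ∈ W ↔ ∃ p ∈ F.1, principalFilter p ∈ W := by
  constructor
  · intro hF
    obtain ⟨q, hq⟩ := F.2.1
    obtain ⟨G, ⟨p, hp, rfl⟩, hGW⟩ := hW.2 {G : PosetFilter P | ∃ p ∈ F.1, G = principalFilter p}
      ⟨principalFilter q, q, hq, rfl⟩
      (by
        rintro _ ⟨p, hp, rfl⟩ _ ⟨q, hq, rfl⟩
        obtain ⟨z, hz, hzp, hzq⟩ := F.2.2.2 p hp q hq
        exact ⟨principalFilter z, ⟨z, hz, rfl⟩, principalFilter_anti hzp,
          principalFilter_anti hzq⟩)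
      F (isLUB_principal F) hF
    exact ⟨p, hp, hGW⟩
  · rintro ⟨p, hp, hpW⟩
    exact hW.1 _ _ (principalFilter_le hp) hpW

/-- The union of a nonempty directed family of filters is a filter. -/
lemma union_isPosetFilter {D : Set (PosetFilter P)} (hne : D.Nonempty)
    (hdir : DirectedOn (· ≤ ·) D) : IsPosetFilter (⋃ G ∈ D, G.1) := by
  refine ⟨?_, ?_, ?_⟩
  · obtain ⟨G, hG⟩ := hne
    obtain ⟨p, hp⟩ := G.2.1
    exact ⟨p, Set.mem_biUnion hG hp⟩
  · intro x hx y hxy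
    obtain ⟨G, hG, hxG⟩ := Set.mem_iUnion₂.mp hx
    exact Set.mem_biUnion hG (G.2.2.1 x hxG y hxy)
  · intro x hx y hy
    obtain ⟨G, hG, hxG⟩ := Set.mem_iUnion₂.mp hx
    obtain ⟨H, hH, hyH⟩ := Set.mem_iUnion₂.mp hy
    obtain ⟨K, hK, hGK, hHK⟩ := hdir G hG H hH
    obtain ⟨z, hz, hzx, hzy⟩ := K.2.2.2 x (hGK hxG) y (hHK hyH)
    exact ⟨z, Set.mem_biUnion hK hz, hzx, hzy⟩

/-- `W ↦ i⁻¹(W)`, for `i : p ↦ ↑p`, is an order isomorphism from the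
Scott-open subsets of the poset of filters of `P` onto the downward-closed subsets of `P`;
in particular `i⁻¹({F : p ∈ F}) = ↓p`. -/
theorem scott_opens_order_iso_lower_sets :
    (∀ W : Set (PosetFilter P), ScottOpen W →
      IsLowerSet ((fun p : P => principalFilter p) ⁻¹' W)) ∧
    (∀ W₁ W₂ : Set (PosetFilter P), ScottOpen W₁ → ScottOpen W₂ →
      (W₁ ⊆ W₂ ↔
        (fun p : P => principalFilter p) ⁻¹' W₁ ⊆
          (fun p : P => principalFilter p) ⁻¹' W₂)) ∧
    (∀ L : Set P, IsLowerSet L →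
      ∃ W : Set (PosetFilter P), ScottOpen W ∧
        (fun p : P => principalFilter p) ⁻¹' W = L) ∧
    (∀ p : P,
      (fun q : P => principalFilter q) ⁻¹' {F : PosetFilter P | p ∈ F.1} = Set.Iic p) := by
  refine ⟨?_, ?_, ?_, ?_⟩
  · intro W hW p q hpq hq
    exact hW.1 _ _ (principalFilter_anti hpq) hq
  · intro W₁ W₂ hW₁ hW₂
    constructor
    · intro h p hp
      exact h hp
    · intro h F hF
      obtain ⟨p, hp, hpW⟩ := (mem_scottOpen_iff hW₁ F).1 hF
      exact (mem_scottOpen_iff hW₂ F).2 ⟨p, hp, h hpW⟩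
  · intro L hL
    refine ⟨{F : PosetFilter P | ∃ p ∈ F.1, p ∈ L}, ⟨?_, ?_⟩, ?_⟩
    · rintro F G hFG ⟨p, hp, hpL⟩
      exact ⟨p, hFG hp, hpL⟩
    · rintro D hne hdir F hF ⟨p, hp, hpL⟩
      have hU : F ≤ (⟨⋃ G ∈ D, G.1, union_isPosetFilter hne hdir⟩ : PosetFilter P) :=
        hF.2 fun G hG => Set.subset_biUnion_of_mem (u := fun G : PosetFilter P => G.1) hG
      obtain ⟨G, hG, hpG⟩ := Set.mem_iUnion₂.mp (hU hp)
      exact ⟨G, hG, p, hpG, hpL⟩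
    · ext p
      simp only [Set.mem_preimage, Set.mem_setOf_eq]
      constructor
      · rintro ⟨q, hq, hqL⟩
        exact hL hq hqL
      · intro hp
        exact ⟨p, le_refl p, hp⟩
  · intro p
    ext q
    simp only [Set.mem_preimage, Set.mem_setOf_eq, Set.mem_Iic]
    exact Iff.rfl

end
end

section
/- Let A = M_n(ℂ), let a ∈ A be Hermitian and let C be a context. Then the set {b ∈ C : b Hermitian, a ≤ₛ b} has a least element δᵒ(a)_C with respect to the spectral order ≤ₛ, and the set {b ∈ C : b Hermitian, b ≤ₛ a} has a greatest element δⁱ(a)_C with respect to ≤ₛ. Moreover the adjunction properties hold: for every Hermitian b ∈ C, δᵒ(a)_C ≤ₛ b if and only if a ≤ₛ b, and b ≤ₛ δⁱ(a)_C if and only if b ≤ₛ a. -/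
open scoped ComplexOrder

noncomputable section

namespace Das
open Matrix

variable {n : ℕ} {A : Mat n}

lemma ofReal_eq : (RCLike.ofReal : ℝ → ℂ) = Complex.ofReal := rfl

section CfcSec
variable (hA : A.IsHermitian)

local notation "U" => (IsHermitian.eigenvectorUnitary hA : Mat n)
local notation "D" f => (Matrix.diagonal (RCLike.ofReal ∘ f ∘ (Matrix.IsHermitian.eigenvalues hA)) : Mat n)

lemma hU1 : star U * U = 1 := Unitary.coe_star_mul_self _

lemma hU2 : U * star U = 1 := by
  rw [← Unitary.coe_star]; exact Unitary.coe_mul_star_self _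

lemma cfc_def (f : ℝ → ℝ) : hA.cfc f = U * (D f) * star U := rfl

lemma cfc_congr {f g : ℝ → ℝ}
    (h : ∀ i, f (hA.eigenvalues i) = g (hA.eigenvalues i)) : hA.cfc f = hA.cfc g := by
  have : (D f) = (D g) :=
    congrArg Matrix.diagonal (funext fun i => by simp only [Function.comp_apply, h i])
  rw [cfc_def, cfc_def, this]

lemma cfc_mul (f g : ℝ → ℝ) :
    hA.cfc f * hA.cfc g = hA.cfc (fun x => f x * g x) := by
  have hd : (D f) * (D g) = (D fun x => f x * g x) := by
    rw [diagonal_mul_diagonal]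
    exact congrArg Matrix.diagonal (funext fun i => by simp [Function.comp])
  rw [cfc_def, cfc_def, cfc_def, ← hd]
  have : ∀ X : Mat n, star U * (U * X) = X := fun X => by
    rw [← mul_assoc, hU1, one_mul]
  simp only [mul_assoc]
  rw [this]

lemma cfc_one : hA.cfc (fun _ => 1) = 1 := by
  have hfun : (RCLike.ofReal ∘ (fun _ : ℝ => (1:ℝ)) ∘ hA.eigenvalues) = (fun _ => (1:ℂ)) := by
    funext i; simp
  rw [cfc_def, hfun, diagonal_one, mul_one, hU2]

lemma cfc_zero : hA.cfc (fun _ => 0) = 0 := by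
  have hfun : (RCLike.ofReal ∘ (fun _ : ℝ => (0:ℝ)) ∘ hA.eigenvalues) = (fun _ => (0:ℂ)) := by
    funext i; simp
  rw [cfc_def, hfun, diagonal_zero, mul_zero, zero_mul]

lemma cfc_isHermitian (f : ℝ → ℝ) : (hA.cfc f).IsHermitian := by
  have hD : (D f)ᴴ = (D f) := by
    rw [diagonal_conjTranspose]
    exact congrArg Matrix.diagonal (funext fun i => by simp [Pi.star_def, Function.comp])
  unfold Matrix.IsHermitian
  rw [cfc_def, conjTranspose_mul, conjTranspose_mul, hD, ← star_eq_conjTranspose,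
    ← star_eq_conjTranspose, star_star, mul_assoc]

lemma cfc_sub (f g : ℝ → ℝ) :
    hA.cfc f - hA.cfc g = hA.cfc (fun x => f x - g x) := by
  have hd : (D f) - (D g) = (D fun x => f x - g x) := by
    rw [diagonal_sub]; exact congrArg Matrix.diagonal (funext fun i => by simp [Function.comp])
  rw [cfc_def, cfc_def, cfc_def, ← hd, mul_sub, sub_mul]

lemma cfc_add (f g : ℝ → ℝ) :
    hA.cfc f + hA.cfc g = hA.cfc (fun x => f x + g x) := by
  have hd : (D f) + (D g) = (D fun x => f x + g x) := by
    rw [diagonal_add]; exact congrArg Matrix.diagonal (funext fun i => by simp [Function.comp])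
  rw [cfc_def, cfc_def, cfc_def, ← hd, mul_add, add_mul]

lemma cfc_smul (r : ℝ) (f : ℝ → ℝ) :
    (r : ℂ) • hA.cfc f = hA.cfc (fun x => r * f x) := by
  have hd : (r : ℂ) • (D f) = (D fun x => r * f x) := by
    rw [← diagonal_smul]; exact congrArg Matrix.diagonal (funext fun i => by simp [Function.comp])
  rw [cfc_def, cfc_def, ← hd, mul_smul_comm, smul_mul_assoc]

lemma cfc_psd (f : ℝ → ℝ)
    (h : ∀ i, 0 ≤ f (hA.eigenvalues i)) : (hA.cfc f).PosSemidef := by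
  rw [cfc_def, star_eq_conjTranspose]
  exact PosSemidef.mul_mul_conjTranspose_same
    (posSemidef_diagonal_iff.mpr (by intro i; simpa using (RCLike.ofReal_nonneg (K := ℂ)).mpr (h i))) _

lemma cfc_id : hA.cfc (fun x => x) = A := by
  rw [cfc_def]
  exact hA.spectral_theorem.symm

lemma cfc_apply_eigvec (f : ℝ → ℝ) (t : ℝ) (M : Mat n)
    (hM : A * M = (t : ℂ) • M) : hA.cfc f * M = ((f t : ℝ) : ℂ) • M := by
  have haux : ∀ X : Mat n, star U * (U * X) = X := fun X => by
    rw [← mul_assoc, hU1, one_mul]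
  set N : Mat n := star U * M with hNdef
  have h1 : (D fun x => x) * N = (t : ℂ) • N := by
    have h2 : star U * A = (D fun x => x) * star U := by
      have h3 := congrArg (fun X : Mat n => star U * X) hA.spectral_theorem
      rw [h3]
      change star U * (U * (D fun x => x) * star U) = _
      simp only [mul_assoc]
      rw [haux]
    calc (D fun x => x) * N = ((D fun x => x) * star U) * M := by
          rw [hNdef, mul_assoc]
      _ = star U * (A * M) := by rw [← h2, mul_assoc]
      _ = (t : ℂ) • N := by rw [hM, hNdef, mul_smul_comm]
  have key : (D f) * N = ((f t : ℝ) : ℂ) • N := by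
    ext i j
    have hij := congrFun (congrFun h1 i) j
    rw [diagonal_mul] at hij
    rw [diagonal_mul]
    simp only [Matrix.smul_apply, smul_eq_mul, Function.comp_apply] at hij ⊢
    by_cases hz : N i j = 0
    · simp [hz]
    · have heq : (RCLike.ofReal (hA.eigenvalues i) : ℂ) = (t : ℂ) :=
        mul_right_cancel₀ hz hij
      rw [ofReal_eq] at heq
      have ht : hA.eigenvalues i = t := by exact_mod_cast heq
      rw [ht]
      try rfl
  calc hA.cfc f * M = U * ((D f) * N) := by
        rw [cfc_def, hNdef]; simp only [mul_assoc]
    _ = ((f t : ℝ) : ℂ) • (U * N) := by rw [key, mul_smul_comm]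
    _ = ((f t : ℝ) : ℂ) • M := by rw [hNdef, ← mul_assoc, hU2, one_mul]

end CfcSec
-- chunk 2 (appended after chunk 1 content, inside namespace Das)
section Loewner
variable {n : ℕ}

lemma isHermitian_of_isProjection {p : Mat n} (hp : IsProjection p) : p.IsHermitian := by
  rw [Matrix.IsHermitian, ← Matrix.star_eq_conjTranspose, hp.1]

lemma proj_psd {p : Mat n} (hp : IsProjection p) : p.PosSemidef := by
  have h : p = pᴴ * p := by
    rw [← Matrix.star_eq_conjTranspose, hp.1, hp.2]
  exact h ▸ Matrix.posSemidef_conjTranspose_mul_self p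

lemma loewnerLE_refl (p : Mat n) : loewnerLE p p := by
  unfold loewnerLE; rw [sub_self]; exact Matrix.PosSemidef.zero

lemma loewnerLE_trans {p q r : Mat n} (h1 : loewnerLE p q) (h2 : loewnerLE q r) :
    loewnerLE p r := by
  unfold loewnerLE at *
  have := h2.add h1
  rwa [sub_add_sub_cancel] at this

lemma psd_add_eq_zero {A B : Mat n} (hA : A.PosSemidef) (hB : B.PosSemidef)
    (h : A + B = 0) : A = 0 := by
  have hv : ∀ x : Fin n → ℂ, A *ᵥ x = 0 := by
    intro x
    rw [← (hA.dotProduct_mulVec_zero_iff x)]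
    have h1 := (posSemidef_iff_dotProduct_mulVec.mp hA).2 x
    have h2 := (posSemidef_iff_dotProduct_mulVec.mp hB).2 x
    have h3 : star x ⬝ᵥ A *ᵥ x + star x ⬝ᵥ B *ᵥ x = 0 := by
      rw [← dotProduct_add, ← Matrix.add_mulVec, h, Matrix.zero_mulVec,
        dotProduct_zero]
    have h4 : star x ⬝ᵥ A *ᵥ x = - (star x ⬝ᵥ B *ᵥ x) := eq_neg_of_add_eq_zero_left h3
    exact le_antisymm (h4 ▸ neg_nonpos.mpr h2) h1
  ext i j
  have := congrFun (hv (Pi.single j 1)) i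
  rw [Matrix.mulVec_single] at this
  simpa using this

lemma loewnerLE_antisymm {p q : Mat n} (h1 : loewnerLE p q) (h2 : loewnerLE q p) : p = q := by
  have h3 : q - p = 0 := psd_add_eq_zero h1 h2 (by unfold loewnerLE at *; abel)
  exact (sub_eq_zero.mp h3).symm

lemma loewnerLE_of_absorb {p q : Mat n} (hp : IsProjection p) (hq : IsProjection q)
    (h1 : q * p = p) (h2 : p * q = p) : loewnerLE p q := by
  have hproj : IsProjection (q - p) := by
    constructor
    · rw [star_sub, hp.1, hq.1]
    · rw [mul_sub, sub_mul, sub_mul, hq.2, h1, h2, hp.2, sub_self, sub_zero]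
  exact proj_psd hproj

lemma proj_le_one {p : Mat n} (hp : IsProjection p) : loewnerLE p 1 := by
  refine loewnerLE_of_absorb hp ⟨star_one _, one_mul 1⟩ (one_mul p) (mul_one p)

lemma absorb_of_loewnerLE {p q : Mat n} (hp : IsProjection p) (hq : IsProjection q)
    (h : loewnerLE p q) : q * p = p ∧ p * q = p := by
  -- first : p * q * p = p
  have hq1 : loewnerLE q 1 := proj_le_one hq
  have hpsd1 : (p * (q - p) * pᴴ).PosSemidef := h.mul_mul_conjTranspose_same p
  have hpsd2 : (p * (1 - q) * pᴴ).PosSemidef := hq1.mul_mul_conjTranspose_same p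
  have hph : pᴴ = p := isHermitian_of_isProjection hp
  rw [hph] at hpsd1 hpsd2
  have hsum : (p * (q - p) * p) + (p * (1 - q) * p) = 0 := by
    have e1 : p * (q - p) * p + p * (1 - q) * p = p * ((q - p) + (1 - q)) * p := by
      noncomm_ring
    rw [e1]
    have e2 : (q - p) + (1 - q) = 1 - p := by abel
    rw [e2]
    have e3 : p * (1 - p) * p = p * p - p * p * p := by noncomm_ring
    rw [e3, hp.2, hp.2, sub_self]
  have h1 := psd_add_eq_zero hpsd1 hpsd2 hsum
  -- p * q * p = p
  have hpqp : p * q * p = p := by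
    have e4 : p * (q - p) * p = p * q * p - p := by
      have : p * (q - p) * p = p * q * p - p * p * p := by noncomm_ring
      rw [this, hp.2, hp.2]
    rw [e4] at h1
    exact sub_eq_zero.mp h1
  -- (1 - q) * p = 0
  have hzero : ((1 - q) * p)ᴴ * ((1 - q) * p) = 0 := by
    have hqh : (1 - q)ᴴ = 1 - q := by
      rw [conjTranspose_sub, conjTranspose_one, isHermitian_of_isProjection hq]
    rw [conjTranspose_mul, hqh, hph]
    have e5 : (1 - q) * (1 - q) = 1 - q := by
      have : (1 - q) * (1 - q) = 1 - q - q + q * q := by noncomm_ring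
      rw [this, hq.2]; abel
    calc p * (1 - q) * ((1 - q) * p) = p * ((1 - q) * (1 - q)) * p := by noncomm_ring
      _ = p * (1 - q) * p := by rw [e5]
      _ = 0 := by
          have : p * (1 - q) * p = p * p - p * q * p := by noncomm_ring
          rw [this, hp.2, hpqp, sub_self]
  have hX : (1 - q) * p = 0 := Matrix.conjTranspose_mul_self_eq_zero.mp hzero
  have hqp : q * p = p := by
    have e6 : (1 - q) * p = p - q * p := by rw [sub_mul, one_mul]
    rw [e6] at hX
    exact (sub_eq_zero.mp hX).symm
  refine ⟨hqp, ?_⟩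
  have h5 := congrArg star hqp
  rwa [Matrix.star_mul, hp.1, hq.1] at h5

lemma psd_sum {ι : Type*} (s : Finset ι) (P : ι → Mat n)
    (h : ∀ i ∈ s, (P i).PosSemidef) : (∑ i ∈ s, P i).PosSemidef := by
  classical
  induction s using Finset.induction_on with
  | empty => simpa using Matrix.PosSemidef.zero
  | insert _ _ hx ih =>
    rename_i a t
    rw [Finset.sum_insert hx]
    exact (h a (Finset.mem_insert_self a t)).add
      (ih fun i hi => h i (Finset.mem_insert_of_mem hi))

lemma sum_isProjection {ι : Type*} (s : Finset ι) (P : ι → Mat n)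
    (hP : ∀ i ∈ s, IsProjection (P i))
    (horth : ∀ i ∈ s, ∀ j ∈ s, i ≠ j → P i * P j = 0) :
    IsProjection (∑ i ∈ s, P i) := by
  classical
  constructor
  · rw [star_sum]
    exact Finset.sum_congr rfl fun i hi => (hP i hi).1
  · rw [Finset.sum_mul_sum]
    exact Finset.sum_congr rfl fun i hi => by
      rw [Finset.sum_eq_single i (fun j hj hne => horth i hi j hj (Ne.symm hne))
        (fun hni => absurd hi hni), (hP i hi).2]

lemma sum_loewnerLE {ι : Type*} (s : Finset ι) (P : ι → Mat n) (q : Mat n)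
    (hP : ∀ i ∈ s, IsProjection (P i))
    (horth : ∀ i ∈ s, ∀ j ∈ s, i ≠ j → P i * P j = 0)
    (hq : IsProjection q) (h : ∀ i ∈ s, loewnerLE (P i) q) :
    loewnerLE (∑ i ∈ s, P i) q := by
  have hr : IsProjection (∑ i ∈ s, P i) := sum_isProjection s P hP horth
  refine loewnerLE_of_absorb hr hq ?_ ?_
  · rw [Finset.mul_sum]
    exact Finset.sum_congr rfl fun i hi => (absorb_of_loewnerLE (hP i hi) hq (h i hi)).1
  · rw [Finset.sum_mul]
    exact Finset.sum_congr rfl fun i hi => (absorb_of_loewnerLE (hP i hi) hq (h i hi)).2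

lemma sum_loewnerLE_sum {ι : Type*} {s t : Finset ι} (P : ι → Mat n)
    (hsub : s ⊆ t) (hP : ∀ i ∈ t, (P i).PosSemidef) :
    loewnerLE (∑ i ∈ s, P i) (∑ i ∈ t, P i) := by
  classical
  unfold loewnerLE
  rw [← Finset.sum_sdiff hsub, add_sub_cancel_right]
  exact psd_sum _ _ fun i hi => hP i (Finset.mem_sdiff.mp hi).1

end Loewner
section SpecProj
variable {n : ℕ} {A : Mat n}

lemma specProj_eq (hA : A.IsHermitian) (S : Set ℝ) :
    specProj A S = hA.cfc (Set.indicator S fun _ => (1 : ℝ)) := dif_pos hA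

lemma specProj_isHermitian (hA : A.IsHermitian) (S : Set ℝ) : (specProj A S).IsHermitian := by
  rw [specProj_eq hA]; exact cfc_isHermitian hA _

lemma specProj_isProjection (hA : A.IsHermitian) (S : Set ℝ) : IsProjection (specProj A S) := by
  constructor
  · rw [Matrix.star_eq_conjTranspose]
    exact specProj_isHermitian hA S
  · rw [specProj_eq hA, cfc_mul]
    apply cfc_congr
    intro i
    by_cases h : hA.eigenvalues i ∈ S <;> simp [Set.indicator_apply, h]

lemma specProj_psd (hA : A.IsHermitian) (S : Set ℝ) : (specProj A S).PosSemidef :=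
  proj_psd (specProj_isProjection hA S)

lemma specProj_mono (hA : A.IsHermitian) {S T : Set ℝ} (h : S ⊆ T) :
    loewnerLE (specProj A S) (specProj A T) := by
  unfold loewnerLE
  rw [specProj_eq hA, specProj_eq hA, cfc_sub]
  apply cfc_psd
  intro i
  by_cases hS : hA.eigenvalues i ∈ S
  · simp [Set.indicator_apply, hS, h hS]
  · by_cases hT : hA.eigenvalues i ∈ T <;> simp [Set.indicator_apply, hS, hT]

lemma specProj_congr (hA : A.IsHermitian) {S T : Set ℝ}
    (h : ∀ i, hA.eigenvalues i ∈ S ↔ hA.eigenvalues i ∈ T) :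
    specProj A S = specProj A T := by
  rw [specProj_eq hA, specProj_eq hA]
  apply cfc_congr
  intro i
  by_cases hS : hA.eigenvalues i ∈ S
  · simp [Set.indicator_apply, hS, (h i).mp hS]
  · have hT : hA.eigenvalues i ∉ T := fun hT => hS ((h i).mpr hT)
    simp [Set.indicator_apply, hS, hT]

lemma specProj_eq_one (hA : A.IsHermitian) {S : Set ℝ} (h : ∀ i, hA.eigenvalues i ∈ S) :
    specProj A S = 1 := by
  rw [specProj_eq hA, ← cfc_one hA]
  apply cfc_congr
  intro i
  simp [Set.indicator_apply, h i]

lemma specProj_eq_zero (hA : A.IsHermitian) {S : Set ℝ} (h : ∀ i, hA.eigenvalues i ∉ S) :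
    specProj A S = 0 := by
  rw [specProj_eq hA, ← cfc_zero hA]
  apply cfc_congr
  intro i
  simp [Set.indicator_apply, h i]

lemma specProj_mul_eigvec (hA : A.IsHermitian) (S : Set ℝ) (t : ℝ) (M : Mat n)
    [Decidable (t ∈ S)] (hM : A * M = (t : ℂ) • M) :
    specProj A S * M = if t ∈ S then M else 0 := by
  rw [specProj_eq hA, cfc_apply_eigvec hA _ t M hM]
  by_cases h : t ∈ S <;> simp [Set.indicator_apply, h]

/-- Decomposition lemma: if `c = ∑ λ_σ p_σ` w.r.t. a family summing to 1, then its
spectral projections are the corresponding sums. -/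
lemma specProj_of_decomp {ι : Type*} [DecidableEq ι] (s : Finset ι) (P : ι → Mat n)
    {c : Mat n} (hc : c.IsHermitian)
    (hone : ∑ σ ∈ s, P σ = 1) (lam : ι → ℝ)
    (heig : ∀ σ ∈ s, c * P σ = ((lam σ : ℝ) : ℂ) • P σ) (S : Set ℝ)
    [DecidablePred fun σ => lam σ ∈ S] :
    specProj c S = ∑ σ ∈ s.filter (fun σ => lam σ ∈ S), P σ := by
  have h0 : specProj c S = ∑ σ ∈ s, specProj c S * P σ := by
    rw [← Finset.mul_sum, hone, mul_one]
  rw [h0, Finset.sum_filter]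
  exact Finset.sum_congr rfl fun σ hσ =>
    specProj_mul_eigvec hc S (lam σ) (P σ) (heig σ hσ)

lemma specLE_trans {a b c : Mat n} (h1 : specLE a b) (h2 : specLE b c) : specLE a c :=
  fun x => loewnerLE_trans (h2 x) (h1 x)

/-- The finset of eigenvalues. -/
def eigsFinset (hA : A.IsHermitian) : Finset ℝ := Finset.image hA.eigenvalues Finset.univ

lemma eigsFinset_nonempty (hn : 0 < n) (hA : A.IsHermitian) : (eigsFinset hA).Nonempty :=
  ⟨hA.eigenvalues ⟨0, hn⟩, Finset.mem_image_of_mem _ (Finset.mem_univ _)⟩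

end SpecProj
section Res
variable {n : ℕ} {A : Mat n}

lemma cfc_pow (hA : A.IsHermitian) (m : ℕ) : hA.cfc (fun x => x ^ m) = A ^ m := by
  induction m with
  | zero =>
    rw [pow_zero, ← cfc_one hA]
    exact cfc_congr hA fun i => pow_zero _
  | succ m ih =>
    calc hA.cfc (fun x => x ^ (m + 1))
        = hA.cfc (fun x => x ^ m) * hA.cfc (fun x => x) := by
          rw [cfc_mul]
          exact cfc_congr hA fun i => pow_succ _ _
      _ = A ^ (m + 1) := by rw [ih, cfc_id, pow_succ]

lemma cfc_finsetSum {ι : Type*} (s : Finset ι) (hA : A.IsHermitian) (f : ι → ℝ → ℝ) :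
    ∑ i ∈ s, hA.cfc (f i) = hA.cfc (fun x => ∑ i ∈ s, f i x) := by
  classical
  induction s using Finset.induction_on with
  | empty =>
    rw [Finset.sum_empty, ← cfc_zero hA]
    exact (cfc_congr hA fun i => by simp).symm
  | insert _ _ hx ih =>
    rename_i a t
    rw [Finset.sum_insert hx, ih, cfc_add]
    exact cfc_congr hA fun i => by rw [Finset.sum_insert hx]

lemma cfc_polynomial (hA : A.IsHermitian) (p : Polynomial ℝ) :
    hA.cfc (fun x => p.eval x) = Polynomial.aeval A (p.map (algebraMap ℝ ℂ)) := by
  induction p using Polynomial.induction_on with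
  | C a =>
    have h1 : hA.cfc (fun x => (Polynomial.C a).eval x)
        = hA.cfc (fun x => a * (fun _ : ℝ => (1:ℝ)) x) := cfc_congr hA fun i => by simp
    rw [h1, ← cfc_smul, cfc_one]
    simp [Algebra.smul_def]
  | add p q hp hq =>
    have h1 : hA.cfc (fun x => (p + q).eval x)
        = hA.cfc (fun x => p.eval x) + hA.cfc (fun x => q.eval x) := by
      rw [cfc_add]
      exact cfc_congr hA fun i => by simp
    rw [h1, hp, hq, Polynomial.map_add, map_add]
  | monomial m a _ =>
    have h1 : hA.cfc (fun x => (Polynomial.C a * Polynomial.X ^ (m + 1)).eval x)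
        = hA.cfc (fun x => a * (fun y : ℝ => y ^ (m + 1)) x) := cfc_congr hA fun i => by simp
    rw [h1, ← cfc_smul, cfc_pow]
    rw [Polynomial.map_mul, Polynomial.map_C, Polynomial.map_pow, Polynomial.map_X,
      _root_.map_mul, Polynomial.aeval_C, _root_.map_pow, Polynomial.aeval_X,
      Algebra.smul_def, Complex.coe_algebraMap]

lemma specProj_mem (C : Ctx n) {g : Mat n} (hg : g ∈ C.alg)
    (hgh : g.IsHermitian) (S : Set ℝ) : specProj g S ∈ C.alg := by
  classical
  set f : ℝ → ℝ := Set.indicator S fun _ => 1 with hf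
  set p : Polynomial ℝ := Lagrange.interpolate (eigsFinset hgh) id f with hp
  have hcong : specProj g S = hgh.cfc (fun x => p.eval x) := by
    rw [specProj_eq hgh]
    apply cfc_congr
    intro i
    rw [hp]
    have hmem : hgh.eigenvalues i ∈ eigsFinset hgh :=
      Finset.mem_image_of_mem _ (Finset.mem_univ i)
    have hthis := Lagrange.eval_interpolate_at_node (v := id) (r := f)
      (s := eigsFinset hgh) (Set.injOn_id _) hmem
    simp only [id_eq] at hthis
    rw [hthis]
  rw [hcong, cfc_polynomial]
  have hadj : Algebra.adjoin ℂ {g} ≤ C.alg.toSubalgebra :=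
    Algebra.adjoin_le (by simpa using hg)
  exact hadj (Polynomial.aeval_mem_adjoin_singleton ℂ g)

lemma mul_specProj_singleton (hA : A.IsHermitian) (t : ℝ) :
    A * specProj A {t} = (t : ℂ) • specProj A {t} := by
  calc A * specProj A {t}
      = hA.cfc (fun x => x) * hA.cfc (Set.indicator {t} fun _ => 1) := by
        rw [cfc_id, specProj_eq hA]
    _ = (t : ℂ) • hA.cfc (Set.indicator {t} fun _ => 1) := by
        rw [cfc_mul, cfc_smul]
        apply cfc_congr
        intro i
        by_cases h : hA.eigenvalues i = t <;>
          simp [Set.indicator_apply, Set.mem_singleton_iff, h]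
    _ = (t : ℂ) • specProj A {t} := by rw [specProj_eq hA]

lemma specProj_singleton_orth (hA : A.IsHermitian) {t t' : ℝ} (h : t ≠ t') :
    specProj A {t} * specProj A {t'} = 0 := by
  rw [specProj_eq hA, specProj_eq hA, cfc_mul, ← cfc_zero hA]
  apply cfc_congr
  intro i
  by_cases h1 : hA.eigenvalues i = t <;> by_cases h2 : hA.eigenvalues i = t' <;>
    simp_all [Set.indicator_apply, Set.mem_singleton_iff]

lemma sum_specProj_singletons (hA : A.IsHermitian) :
    ∑ t ∈ eigsFinset hA, specProj A {t} = 1 := by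
  classical
  have h1 : ∀ t ∈ eigsFinset hA, specProj A {t} = hA.cfc (Set.indicator {t} fun _ => 1) :=
    fun t _ => specProj_eq hA _
  rw [Finset.sum_congr rfl h1, cfc_finsetSum, ← cfc_one hA]
  apply cfc_congr
  intro i
  have hmem : hA.eigenvalues i ∈ eigsFinset hA :=
    Finset.mem_image_of_mem hA.eigenvalues (Finset.mem_univ i)
  calc ∑ t ∈ eigsFinset hA, Set.indicator {t} (fun _ => (1:ℝ)) (hA.eigenvalues i)
      = ∑ t ∈ eigsFinset hA, if t = hA.eigenvalues i then (1:ℝ) else 0 := by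
        apply Finset.sum_congr rfl
        intro t _
        by_cases h : hA.eigenvalues i = t
        · simp [Set.indicator_apply, h]
        · have h' : t ≠ hA.eigenvalues i := fun hh => h hh.symm
          simp [Set.indicator_apply, h, h']
    _ = 1 := by rw [Finset.sum_ite_eq' (eigsFinset hA) (hA.eigenvalues i) fun _ => (1:ℝ)]
                simp [hmem]

/-- A good family for a context: finitely many nonzero orthogonal projections in `C`
summing to one. -/
def GoodFam (C : Ctx n) (s : Finset (Mat n)) : Prop :=
  (∀ p ∈ s, p ∈ C.alg) ∧ (∀ p ∈ s, IsProjection p) ∧ (∀ p ∈ s, p ≠ 0) ∧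
    (∀ p ∈ s, ∀ q ∈ s, p ≠ q → p * q = 0) ∧ (∑ p ∈ s, p = 1)

lemma proj_mul_comm_proj {p q : Mat n} (hp : IsProjection p) (hq : IsProjection q)
    (hcomm : p * q = q * p) : IsProjection (p * q) := by
  constructor
  · rw [Matrix.star_mul, hp.1, hq.1, hcomm]
  · calc p * q * (p * q) = p * (q * p) * q := by noncomm_ring
      _ = p * (p * q) * q := by rw [hcomm]
      _ = (p * p) * (q * q) := by noncomm_ring
      _ = p * q := by rw [hp.2, hq.2]

lemma res_step (C : Ctx n) {g : Mat n} (hg : g ∈ C.alg) (hgh : g.IsHermitian)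
    (s : Finset (Mat n)) (hs : GoodFam C s) :
    ∃ s' : Finset (Mat n), GoodFam C s' ∧
      (∀ p ∈ s', ∃ t : ℝ, g * p = (t : ℂ) • p) ∧
      (∀ p ∈ s', ∃ t : ℝ, ∃ q ∈ s, p = specProj g {t} * q) := by
  classical
  obtain ⟨hmem, hproj, hne, horth, hsum⟩ := hs
  set f : ℝ × Mat n → Mat n := fun tq => specProj g {tq.1} * tq.2 with hfdef
  set pairs : Finset (ℝ × Mat n) :=
    ((eigsFinset hgh) ×ˢ s).filter (fun tq => f tq ≠ 0) with hpairs
  refine ⟨pairs.image f, ⟨?_, ?_, ?_, ?_, ?_⟩, ?_, ?_⟩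
  · -- mem alg
    intro p hp
    obtain ⟨tq, htq, rfl⟩ := Finset.mem_image.mp hp
    obtain ⟨htq2, _⟩ := Finset.mem_filter.mp htq
    exact mul_mem (specProj_mem C hg hgh _) (hmem _ (Finset.mem_product.mp htq2).2)
  · -- projection
    intro p hp
    obtain ⟨⟨t, q⟩, htq, rfl⟩ := Finset.mem_image.mp hp
    obtain ⟨htq2, _⟩ := Finset.mem_filter.mp htq
    have hq : q ∈ s := (Finset.mem_product.mp htq2).2
    exact proj_mul_comm_proj (specProj_isProjection hgh _) (hproj q hq)
      (C.comm _ (specProj_mem C hg hgh _) _ (hmem q hq))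
  · -- nonzero
    intro p hp
    obtain ⟨tq, htq, rfl⟩ := Finset.mem_image.mp hp
    exact (Finset.mem_filter.mp htq).2
  · -- orthogonal
    intro p hp p' hp' hne'
    obtain ⟨⟨t, q⟩, htq, rfl⟩ := Finset.mem_image.mp hp
    obtain ⟨⟨t', q'⟩, htq', rfl⟩ := Finset.mem_image.mp hp'
    have hq : q ∈ s := (Finset.mem_product.mp (Finset.mem_filter.mp htq).1).2
    have hq' : q' ∈ s := (Finset.mem_product.mp (Finset.mem_filter.mp htq').1).2
    have hcomm : q * specProj g {t'} = specProj g {t'} * q :=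
      C.comm _ (hmem q hq) _ (specProj_mem C hg hgh _)
    have hre : f (t, q) * f (t', q') = (specProj g {t} * specProj g {t'}) * (q * q') := by
      rw [hfdef]
      dsimp only
      calc specProj g {t} * q * (specProj g {t'} * q')
          = specProj g {t} * (q * specProj g {t'}) * q' := by noncomm_ring
        _ = specProj g {t} * (specProj g {t'} * q) * q' := by rw [hcomm]
        _ = specProj g {t} * specProj g {t'} * (q * q') := by noncomm_ring
    by_cases htt : t = t'
    · subst htt
      have hqq : q ≠ q' := fun h => hne' (by rw [h])
      rw [hre, horth q hq q' hq' hqq, mul_zero]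
    · rw [hre, specProj_singleton_orth hgh htt, zero_mul]
  · -- sum = 1
    have hinj : ∀ x ∈ pairs, ∀ y ∈ pairs, f x = f y → x = y := by
      intro tq h1 tq' h2 heq
      by_contra hcon
      have h1' := Finset.mem_filter.mp h1
      have h2' := Finset.mem_filter.mp h2
      have hq : tq.2 ∈ s := (Finset.mem_product.mp h1'.1).2
      have hq' : tq'.2 ∈ s := (Finset.mem_product.mp h2'.1).2
      -- product of the two images is zero
      have hcomm : tq.2 * specProj g {tq'.1} = specProj g {tq'.1} * tq.2 :=
        C.comm _ (hmem _ hq) _ (specProj_mem C hg hgh _)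
      have hre : f tq * f tq' = (specProj g {tq.1} * specProj g {tq'.1}) * (tq.2 * tq'.2) := by
        rw [hfdef]
        dsimp only
        calc specProj g {tq.1} * tq.2 * (specProj g {tq'.1} * tq'.2)
            = specProj g {tq.1} * (tq.2 * specProj g {tq'.1}) * tq'.2 := by noncomm_ring
          _ = specProj g {tq.1} * (specProj g {tq'.1} * tq.2) * tq'.2 := by rw [hcomm]
          _ = specProj g {tq.1} * specProj g {tq'.1} * (tq.2 * tq'.2) := by noncomm_ring
      have hzero : f tq * f tq' = 0 := by
        by_cases htt : tq.1 = tq'.1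
        · have hqq : tq.2 ≠ tq'.2 := by
            intro h
            exact hcon (Prod.ext htt h)
          rw [hre, horth _ hq _ hq' hqq, mul_zero]
        · rw [hre, specProj_singleton_orth hgh htt, zero_mul]
      have hprojf : IsProjection (f tq) :=
        proj_mul_comm_proj (specProj_isProjection hgh _) (hproj _ hq)
          (C.comm _ (specProj_mem C hg hgh _) _ (hmem _ hq))
      rw [heq] at hzero hprojf
      exact h2'.2 (by rw [← hprojf.2]; exact hzero)
    rw [Finset.sum_image hinj]
    rw [hpairs, Finset.sum_filter_ne_zero]
    rw [Finset.sum_product]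
    have : ∀ t ∈ eigsFinset hgh, ∑ q ∈ s, f (t, q) = specProj g {t} := by
      intro t _
      rw [hfdef]
      dsimp only
      rw [← Finset.mul_sum, hsum, mul_one]
    rw [Finset.sum_congr rfl this, sum_specProj_singletons hgh]
  · -- eigen
    intro p hp
    obtain ⟨⟨t, q⟩, htq, rfl⟩ := Finset.mem_image.mp hp
    refine ⟨t, ?_⟩
    rw [hfdef]
    dsimp only
    rw [← mul_assoc, mul_specProj_singleton hgh, smul_mul_assoc]
  · -- form
    intro p hp
    obtain ⟨⟨t, q⟩, htq, rfl⟩ := Finset.mem_image.mp hp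
    exact ⟨t, q, (Finset.mem_product.mp (Finset.mem_filter.mp htq).1).2, rfl⟩

end Res
section ResExists
variable {n : ℕ}

lemma exists_goodfam_scalar (hn : 0 < n) (C : Ctx n) (L : List (Mat n))
    (hL : ∀ g ∈ L, g ∈ C.alg ∧ g.IsHermitian) :
    ∃ s : Finset (Mat n), GoodFam C s ∧
      ∀ g ∈ L, ∀ p ∈ s, ∃ t : ℝ, g * p = (t : ℂ) • p := by
  induction L with
  | nil =>
    refine ⟨{1}, ⟨?_, ?_, ?_, ?_, ?_⟩, by simp⟩
    · intro p hp; rw [Finset.mem_singleton.mp hp]; exact one_mem _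
    · intro p hp; rw [Finset.mem_singleton.mp hp]; exact ⟨star_one _, one_mul _⟩
    · intro p hp; rw [Finset.mem_singleton.mp hp]
      intro h01
      have h := congrFun (congrFun h01 ⟨0, hn⟩) ⟨0, hn⟩
      simp [Matrix.one_apply] at h
    · intro p hp q hq hne
      rw [Finset.mem_singleton.mp hp, Finset.mem_singleton.mp hq] at hne
      exact absurd rfl hne
    · simp
  | cons g L' ih =>
    obtain ⟨s, hs, hsc⟩ := ih (fun g' hg' => hL g' (List.mem_cons_of_mem _ hg'))
    obtain ⟨hgC, hgH⟩ := hL g List.mem_cons_self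
    obtain ⟨s', hs', hgs', hform⟩ := res_step C hgC hgH s hs
    refine ⟨s', hs', ?_⟩
    intro g' hg' p hp
    rcases List.mem_cons.mp hg' with h | h
    · subst h; exact hgs' p hp
    · obtain ⟨t, q, hq, rfl⟩ := hform p hp
      obtain ⟨u, hu⟩ := hsc g' h q hq
      have hcomm : g' * specProj g {t} = specProj g {t} * g' :=
        C.comm _ (hL g' (List.mem_cons_of_mem _ h)).1 _ (specProj_mem C hgC hgH _)
      refine ⟨u, ?_⟩
      calc g' * (specProj g {t} * q) = (g' * specProj g {t}) * q := by rw [mul_assoc]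
        _ = specProj g {t} * (g' * q) := by rw [hcomm, mul_assoc]
        _ = specProj g {t} * ((u : ℂ) • q) := by rw [hu]
        _ = (u : ℂ) • (specProj g {t} * q) := by rw [mul_smul_comm]

lemma exists_res (hn : 0 < n) (C : Ctx n) :
    ∃ s : Finset (Mat n), GoodFam C s ∧
      ∀ c ∈ C.alg, c.IsHermitian → ∀ p ∈ s, ∃ t : ℝ, c * p = (t : ℂ) • p := by
  classical
  obtain ⟨S, hS⟩ := IsNoetherian.noetherian (Subalgebra.toSubmodule C.alg.toSubalgebra)
  have hsub : ∀ x ∈ S, x ∈ C.alg := by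
    intro x hx
    have h1 : x ∈ Submodule.span ℂ (↑S : Set (Mat n)) :=
      Submodule.subset_span (Finset.mem_coe.mpr hx)
    rw [hS] at h1
    exact h1
  have hherm1 : ∀ x : Mat n, ((2⁻¹ : ℂ) • (x + star x)).IsHermitian := by
    intro x
    unfold Matrix.IsHermitian
    rw [Matrix.conjTranspose_smul, Matrix.conjTranspose_add, ← Matrix.star_eq_conjTranspose,
      ← Matrix.star_eq_conjTranspose, star_star]
    have h2 : star (2⁻¹ : ℂ) = 2⁻¹ := by simp
    rw [h2, add_comm]
  have hherm2 : ∀ x : Mat n, ((Complex.I * 2⁻¹) • (star x - x)).IsHermitian := by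
    intro x
    unfold Matrix.IsHermitian
    rw [Matrix.conjTranspose_smul, Matrix.conjTranspose_sub, ← Matrix.star_eq_conjTranspose,
      ← Matrix.star_eq_conjTranspose, star_star]
    have h2 : star (Complex.I * 2⁻¹) = -(Complex.I * 2⁻¹) := by
      simp [Complex.star_def]
    rw [h2, neg_smul, ← smul_neg, neg_sub]
  have hdecomp : ∀ x : Mat n,
      x = (2⁻¹ : ℂ) • (x + star x) + Complex.I • ((Complex.I * 2⁻¹) • (star x - x)) := by
    intro x
    rw [smul_smul]
    have h3 : Complex.I * (Complex.I * 2⁻¹) = -(2⁻¹ : ℂ) := by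
      rw [← mul_assoc, Complex.I_mul_I]; ring
    rw [h3]
    module
  set L : List (Mat n) := S.toList.flatMap
    (fun x => [(2⁻¹ : ℂ) • (x + star x), (Complex.I * 2⁻¹) • (star x - x)]) with hLdef
  have hLmem : ∀ g ∈ L, g ∈ C.alg ∧ g.IsHermitian := by
    intro g hgL
    rw [hLdef, List.mem_flatMap] at hgL
    obtain ⟨x, hx, hgx⟩ := hgL
    have hxC : x ∈ C.alg := hsub x (Finset.mem_toList.mp hx)
    simp only [List.mem_cons, List.mem_singleton, List.not_mem_nil, or_false] at hgx
    rcases hgx with h | h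
    · subst h
      exact ⟨SMulMemClass.smul_mem _ (add_mem hxC (star_mem hxC)), hherm1 x⟩
    · subst h
      exact ⟨SMulMemClass.smul_mem _ (sub_mem (star_mem hxC) hxC), hherm2 x⟩
  obtain ⟨s, hs, hsc⟩ := exists_goodfam_scalar hn C L hLmem
  refine ⟨s, hs, ?_⟩
  intro c hcC hcH p hp
  have hmemL : ∀ x ∈ S, ((2⁻¹ : ℂ) • (x + star x)) ∈ L ∧
      ((Complex.I * 2⁻¹) • (star x - x)) ∈ L := by
    intro x hx
    constructor <;>
    · rw [hLdef, List.mem_flatMap]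
      exact ⟨x, Finset.mem_toList.mpr hx, by simp⟩
  have hxact : ∀ x ∈ (↑S : Set (Mat n)), ∃ z : ℂ, x * p = z • p := by
    intro x hx
    have hx' : x ∈ S := Finset.mem_coe.mp hx
    obtain ⟨t1, ht1⟩ := hsc _ (hmemL x hx').1 p hp
    obtain ⟨t2, ht2⟩ := hsc _ (hmemL x hx').2 p hp
    refine ⟨(t1 : ℂ) + Complex.I * t2, ?_⟩
    calc x * p
        = ((2⁻¹ : ℂ) • (x + star x) + Complex.I • ((Complex.I * 2⁻¹) • (star x - x))) * p := by
          rw [← hdecomp x]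
      _ = ((t1 : ℂ) + Complex.I * t2) • p := by
          rw [add_mul, ht1, smul_mul_assoc, ht2, smul_smul, ← add_smul]
  have hcs : c ∈ Submodule.span ℂ (↑S : Set (Mat n)) := by rw [hS]; exact hcC
  have hsubmod : ∀ y ∈ Submodule.span ℂ (↑S : Set (Mat n)), ∃ z : ℂ, y * p = z • p := by
    intro y hy
    induction hy using Submodule.span_induction with
    | mem x hx => exact hxact x hx
    | zero => exact ⟨0, by simp⟩
    | add y y' hy hy' ihy ihy' =>
      obtain ⟨z1, h1⟩ := ihy
      obtain ⟨z2, h2⟩ := ihy'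
      exact ⟨z1 + z2, by rw [add_mul, h1, h2, add_smul]⟩
    | smul a y hy ihy =>
      obtain ⟨z1, h1⟩ := ihy
      exact ⟨a * z1, by rw [smul_mul_assoc, h1, smul_smul]⟩
  obtain ⟨z, hz⟩ := hsubmod c hcs
  have hpC : p ∈ C.alg := hs.1 p hp
  have hpProj : IsProjection p := hs.2.1 p hp
  have hpne : p ≠ 0 := hs.2.2.1 p hp
  have hstar : star (c * p) = c * p := by
    rw [Matrix.star_mul, hpProj.1]
    have hcstar : star c = c := by
      rw [Matrix.star_eq_conjTranspose, hcH]
    rw [hcstar]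
    exact (C.comm p hpC c hcC)
  have hzreal : (starRingEnd ℂ) z = z := by
    have h1 := hstar
    rw [hz, star_smul, hpProj.1] at h1
    by_contra hzz
    have h2 : (star z - z) • p = 0 := by
      rw [sub_smul, h1, sub_self]
    rcases smul_eq_zero.mp h2 with h3 | h3
    · exact hzz (by rwa [sub_eq_zero] at h3)
    · exact hpne h3
  obtain ⟨r, hr⟩ := Complex.conj_eq_iff_real.mp hzreal
  exact ⟨r, by rw [hz, hr]⟩

end ResExists
section Das
variable {n : ℕ}

lemma one_sub_proj {p : Mat n} (hp : IsProjection p) : IsProjection (1 - p) := by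
  constructor
  · rw [star_sub, star_one, hp.1]
  · have : (1 - p) * (1 - p) = 1 - p - p + p * p := by noncomm_ring
    rw [this, hp.2]; abel

lemma loewnerLE_one_sub {A B : Mat n} (h : loewnerLE A B) : loewnerLE (1 - B) (1 - A) := by
  unfold loewnerLE at *
  have e : (1 - A) - (1 - B) = B - A := by abel
  rw [e]; exact h

lemma comb_mem (C : Ctx n) (s : Finset (Mat n)) (hmem : ∀ p ∈ s, p ∈ C.alg)
    (w : Mat n → ℝ) : (∑ p ∈ s, (w p : ℂ) • p) ∈ C.alg :=
  sum_mem fun p hp => SMulMemClass.smul_mem _ (hmem p hp)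

lemma comb_herm (s : Finset (Mat n)) (hproj : ∀ p ∈ s, IsProjection p)
    (w : Mat n → ℝ) : (∑ p ∈ s, (w p : ℂ) • p).IsHermitian := by
  unfold Matrix.IsHermitian
  rw [Matrix.conjTranspose_sum]
  apply Finset.sum_congr rfl
  intro p hp
  rw [Matrix.conjTranspose_smul, ← Matrix.star_eq_conjTranspose, (hproj p hp).1]
  congr 1
  simp [Complex.star_def, Complex.conj_ofReal]

lemma comb_mul_self (s : Finset (Mat n)) (hproj : ∀ p ∈ s, IsProjection p)
    (horth : ∀ p ∈ s, ∀ q ∈ s, p ≠ q → p * q = 0) (w : Mat n → ℝ)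
    {p : Mat n} (hp : p ∈ s) :
    (∑ q ∈ s, (w q : ℂ) • q) * p = (w p : ℂ) • p := by
  rw [Finset.sum_mul]
  rw [Finset.sum_eq_single p (fun q hq hne => by
      rw [smul_mul_assoc, horth q hq p hp hne, smul_zero])
    (fun hnp => absurd hp hnp)]
  rw [smul_mul_assoc, (hproj p hp).2]

lemma comb_spec (C : Ctx n) (s : Finset (Mat n)) (hs : GoodFam C s) (w : Mat n → ℝ)
    (S : Set ℝ) [DecidablePred fun p : Mat n => w p ∈ S] :
    specProj (∑ p ∈ s, (w p : ℂ) • p) S = ∑ p ∈ s.filter (fun p => w p ∈ S), p := by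
  classical
  obtain ⟨hmem, hproj, hne0, horth, hsum⟩ := hs
  have h := specProj_of_decomp (c := ∑ p ∈ s, (w p : ℂ) • p) s id
    (comb_herm s hproj w) hsum w
    (fun p hp => comb_mul_self s hproj horth w hp) S
  simpa only [id_eq] using h

/-- Outer daseinisation. -/
lemma outer_das (hn : 0 < n) {a : Mat n} (ha : a.IsHermitian) (C : Ctx n)
    (s : Finset (Mat n)) (hs : GoodFam C s)
    (hlam : ∀ b ∈ C.alg, b.IsHermitian → ∃ lam : Mat n → ℝ,
      ∀ p ∈ s, b * p = (lam p : ℂ) • p) :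
    ∃ dO : Mat n, dO ∈ C.alg ∧ dO.IsHermitian ∧ specLE a dO ∧
      ∀ b ∈ C.alg, b.IsHermitian → specLE a b → specLE dO b := by
  classical
  obtain ⟨hmem, hproj, hne0, horth, hsum⟩ := hs
  have hEne : (eigsFinset ha).Nonempty := eigsFinset_nonempty hn ha
  set M : ℝ := (eigsFinset ha).max' hEne with hMdef
  have honeM : specProj a (Set.Iic M) = 1 :=
    specProj_eq_one ha fun i => Set.mem_Iic.mpr
      (Finset.le_max' (eigsFinset ha) _ (Finset.mem_image_of_mem _ (Finset.mem_univ i)))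
  set Fil : Mat n → Finset ℝ :=
    fun p => (eigsFinset ha).filter (fun t => loewnerLE p (specProj a (Set.Iic t)))
      with hFil
  have hSne : ∀ p ∈ s, (Fil p).Nonempty := by
    intro p hp
    exact ⟨M, Finset.mem_filter.mpr ⟨Finset.max'_mem _ _,
      by rw [honeM]; exact proj_le_one (hproj p hp)⟩⟩
  set μ : Mat n → ℝ := fun p => if h : (Fil p).Nonempty then (Fil p).min' h else 0
    with hμdef
  have hμ1 : ∀ p ∈ s, loewnerLE p (specProj a (Set.Iic (μ p))) := by
    intro p hp
    have h1 : μ p = (Fil p).min' (hSne p hp) := dif_pos (hSne p hp)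
    have h2 := Finset.mem_filter.mp (Finset.min'_mem (Fil p) (hSne p hp))
    rw [h1]; exact h2.2
  have hμ2 : ∀ p ∈ s, ∀ x : ℝ, μ p ≤ x → loewnerLE p (specProj a (Set.Iic x)) := by
    intro p hp x hx
    exact loewnerLE_trans (hμ1 p hp) (specProj_mono ha (Set.Iic_subset_Iic.mpr hx))
  have hμ3 : ∀ p ∈ s, ∀ x : ℝ, loewnerLE p (specProj a (Set.Iic x)) → μ p ≤ x := by
    intro p hp x hx
    by_cases hcase : ∃ e ∈ eigsFinset ha, e ≤ x
    · set F := (eigsFinset ha).filter (· ≤ x) with hFdef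
      have hFne : F.Nonempty := by
        obtain ⟨e, he, hex⟩ := hcase
        exact ⟨e, Finset.mem_filter.mpr ⟨he, hex⟩⟩
      set t := F.max' hFne with htdef
      have htmem := Finset.mem_filter.mp (Finset.max'_mem F hFne)
      have hcongr : specProj a (Set.Iic x) = specProj a (Set.Iic t) := by
        apply specProj_congr ha
        intro i
        simp only [Set.mem_Iic]
        constructor
        · intro h
          exact Finset.le_max' F _ (Finset.mem_filter.mpr
            ⟨Finset.mem_image_of_mem _ (Finset.mem_univ i), h⟩)
        · intro h; exact h.trans htmem.2
      have htFil : t ∈ Fil p := Finset.mem_filter.mpr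
        ⟨htmem.1, by rw [← hcongr]; exact hx⟩
      have h1 : μ p = (Fil p).min' (hSne p hp) := dif_pos (hSne p hp)
      rw [h1]
      exact le_trans (Finset.min'_le _ t htFil) htmem.2
    · exfalso
      push_neg at hcase
      have hzero : specProj a (Set.Iic x) = 0 :=
        specProj_eq_zero ha fun i hmemS => absurd (Set.mem_Iic.mp hmemS)
          (not_le.mpr (hcase _ (Finset.mem_image_of_mem _ (Finset.mem_univ i))))
      rw [hzero] at hx
      have hp0 : p = 0 := by
        apply psd_add_eq_zero (proj_psd (hproj p hp)) (B := 0 - p)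
        · exact hx
        · abel
      exact hne0 p hp hp0
  refine ⟨∑ p ∈ s, (μ p : ℂ) • p, comb_mem C s hmem μ, comb_herm s hproj μ, ?_, ?_⟩
  · -- specLE a dO
    intro x
    rw [comb_spec C s ⟨hmem, hproj, hne0, horth, hsum⟩ μ (Set.Iic x)]
    apply sum_loewnerLE _ _ _ (fun p hp => hproj p (Finset.mem_filter.mp hp).1)
      (fun p hp q hq hne => horth p (Finset.mem_filter.mp hp).1 q (Finset.mem_filter.mp hq).1 hne)
      (specProj_isProjection ha _)
    intro p hp
    obtain ⟨hps, hpx⟩ := Finset.mem_filter.mp hp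
    exact hμ2 p hps x (Set.mem_Iic.mp hpx)
  · -- minimality
    intro b hb hbh hab x
    obtain ⟨lam, hblam⟩ := hlam b hb hbh
    have hspecb : ∀ y : ℝ, specProj b (Set.Iic y) =
        ∑ p ∈ s.filter (fun p => lam p ∈ Set.Iic y), p := by
      intro y
      have h := specProj_of_decomp (c := b) s id hbh hsum lam hblam (Set.Iic y)
      simpa only [id_eq] using h
    have hkey : ∀ p ∈ s, μ p ≤ lam p := by
      intro p hp
      have h1 : loewnerLE p (specProj b (Set.Iic (lam p))) := by
        rw [hspecb (lam p)]
        have hsingle : loewnerLE (∑ q ∈ {p}, q)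
            (∑ q ∈ s.filter (fun q => lam q ∈ Set.Iic (lam p)), q) := by
          apply sum_loewnerLE_sum
          · intro q hq
            rw [Finset.mem_singleton.mp hq]
            exact Finset.mem_filter.mpr ⟨hp, Set.mem_Iic.mpr le_rfl⟩
          · intro q hq
            exact proj_psd (hproj q (Finset.mem_filter.mp hq).1)
        rwa [Finset.sum_singleton] at hsingle
      have h2 : loewnerLE p (specProj a (Set.Iic (lam p))) :=
        loewnerLE_trans h1 (hab (lam p))
      exact hμ3 p hp _ h2
    rw [hspecb x, comb_spec C s ⟨hmem, hproj, hne0, horth, hsum⟩ μ (Set.Iic x)]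
    apply sum_loewnerLE_sum
    · intro p hp
      obtain ⟨hps, hpx⟩ := Finset.mem_filter.mp hp
      exact Finset.mem_filter.mpr ⟨hps,
        Set.mem_Iic.mpr (le_trans (hkey p hps) (Set.mem_Iic.mp hpx))⟩
    · intro p hp
      exact proj_psd (hproj p (Finset.mem_filter.mp hp).1)

end Das
section DasInner
variable {n : ℕ}

/-- Inner daseinisation. -/
lemma inner_das (hn : 0 < n) {a : Mat n} (ha : a.IsHermitian) (C : Ctx n)
    (s : Finset (Mat n)) (hs : GoodFam C s)
    (hlam : ∀ b ∈ C.alg, b.IsHermitian → ∃ lam : Mat n → ℝ,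
      ∀ p ∈ s, b * p = (lam p : ℂ) • p) :
    ∃ dI : Mat n, dI ∈ C.alg ∧ dI.IsHermitian ∧ specLE dI a ∧
      ∀ b ∈ C.alg, b.IsHermitian → specLE b a → specLE b dI := by
  classical
  obtain ⟨hmem, hproj, hne0, horth, hsum⟩ := hs
  have hEne : (eigsFinset ha).Nonempty := eigsFinset_nonempty hn ha
  set M : ℝ := (eigsFinset ha).max' hEne with hMdef
  have honeM : specProj a (Set.Iic M) = 1 :=
    specProj_eq_one ha fun i => Set.mem_Iic.mpr
      (Finset.le_max' (eigsFinset ha) _ (Finset.mem_image_of_mem _ (Finset.mem_univ i)))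
  set m0 : ℝ := (eigsFinset ha).min' hEne with hm0def
  set Hν : Mat n → ℝ → Prop :=
    fun p t => ∀ x : ℝ, x < t → loewnerLE p (1 - specProj a (Set.Iic x)) with hHν
  set Gil : Mat n → Finset ℝ := fun p => (eigsFinset ha).filter (Hν p) with hGil
  have hGne : ∀ p ∈ s, (Gil p).Nonempty := by
    intro p hp
    refine ⟨m0, Finset.mem_filter.mpr ⟨Finset.min'_mem _ _, ?_⟩⟩
    intro x hx
    have hzero : specProj a (Set.Iic x) = 0 :=
      specProj_eq_zero ha fun i hmemS => absurd (Set.mem_Iic.mp hmemS)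
        (not_le.mpr (lt_of_lt_of_le hx
          (Finset.min'_le _ _ (Finset.mem_image_of_mem _ (Finset.mem_univ i)))))
    rw [hzero, sub_zero]
    exact proj_le_one (hproj p hp)
  set ν : Mat n → ℝ := fun p => if h : (Gil p).Nonempty then (Gil p).max' h else 0
    with hνdef
  have hν1 : ∀ p ∈ s, ∀ x : ℝ, x < ν p → loewnerLE p (1 - specProj a (Set.Iic x)) := by
    intro p hp
    have h1 : ν p = (Gil p).max' (hGne p hp) := dif_pos (hGne p hp)
    have h2 := Finset.mem_filter.mp (Finset.max'_mem (Gil p) (hGne p hp))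
    rw [h1]; exact h2.2
  have hν2 : ∀ p ∈ s, ∀ c : ℝ,
      (∀ x : ℝ, x < c → loewnerLE p (1 - specProj a (Set.Iic x))) → c ≤ ν p := by
    intro p hp c hyp
    by_cases hup : ∃ e ∈ eigsFinset ha, c ≤ e
    · set F := (eigsFinset ha).filter (c ≤ ·) with hFdef
      have hFne : F.Nonempty := by
        obtain ⟨e, he, hce⟩ := hup
        exact ⟨e, Finset.mem_filter.mpr ⟨he, hce⟩⟩
      set t := F.min' hFne with htdef
      have htmem := Finset.mem_filter.mp (Finset.min'_mem F hFne)
      have hHT : Hν p t := by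
        intro x hx
        by_cases hxc : x < c
        · exact hyp x hxc
        · push_neg at hxc
          by_cases hlow : ∃ e ∈ eigsFinset ha, e ≤ x
          · set G := (eigsFinset ha).filter (· ≤ x) with hGdef
            have hGne' : G.Nonempty := by
              obtain ⟨e, he, hex⟩ := hlow
              exact ⟨e, Finset.mem_filter.mpr ⟨he, hex⟩⟩
            set y := G.max' hGne' with hydef
            have hymem := Finset.mem_filter.mp (Finset.max'_mem G hGne')
            have hyc : y < c := by
              by_contra hyc'
              push_neg at hyc'
              have hyF : y ∈ F := Finset.mem_filter.mpr ⟨hymem.1, hyc'⟩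
              have := Finset.min'_le F y hyF
              have hyx := hymem.2
              linarith
            have hcongr : specProj a (Set.Iic x) = specProj a (Set.Iic y) := by
              apply specProj_congr ha
              intro i
              simp only [Set.mem_Iic]
              constructor
              · intro h
                exact Finset.le_max' G _ (Finset.mem_filter.mpr
                  ⟨Finset.mem_image_of_mem _ (Finset.mem_univ i), h⟩)
              · intro h; exact h.trans hymem.2
            rw [hcongr]
            exact hyp y hyc
          · push_neg at hlow
            have hzero : specProj a (Set.Iic x) = 0 :=
              specProj_eq_zero ha fun i hmemS => absurd (Set.mem_Iic.mp hmemS)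
                (not_le.mpr (hlow _ (Finset.mem_image_of_mem _ (Finset.mem_univ i))))
            rw [hzero, sub_zero]
            exact proj_le_one (hproj p hp)
      have htGil : t ∈ Gil p := Finset.mem_filter.mpr ⟨htmem.1, hHT⟩
      have h1 : ν p = (Gil p).max' (hGne p hp) := dif_pos (hGne p hp)
      rw [h1]
      exact le_trans htmem.2 (Finset.le_max' _ t htGil)
    · exfalso
      push_neg at hup
      have hMc : M < c := hup M (Finset.max'_mem _ _)
      have h1 := hyp M hMc
      rw [honeM, sub_self] at h1
      have hp0 : p = 0 := by
        apply psd_add_eq_zero (proj_psd (hproj p hp)) (B := 0 - p)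
        · exact h1
        · abel
      exact hne0 p hp hp0
  refine ⟨∑ p ∈ s, (ν p : ℂ) • p, comb_mem C s hmem ν, comb_herm s hproj ν, ?_, ?_⟩
  · -- specLE dI a
    intro x
    rw [comb_spec C s ⟨hmem, hproj, hne0, horth, hsum⟩ ν (Set.Iic x)]
    have hsplit : (∑ p ∈ s.filter (fun p => ν p ∈ Set.Iic x), p) +
        (∑ p ∈ s.filter (fun p => ¬ (ν p ∈ Set.Iic x)), p) = 1 := by
      rw [Finset.sum_filter_add_sum_filter_not s _ (fun p => p)]
      exact hsum
    have h2 : loewnerLE (∑ p ∈ s.filter (fun p => ¬ (ν p ∈ Set.Iic x)), p)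
        (1 - specProj a (Set.Iic x)) := by
      apply sum_loewnerLE _ _ _ (fun p hp => hproj p (Finset.mem_filter.mp hp).1)
        (fun p hp q hq hne => horth p (Finset.mem_filter.mp hp).1 q
          (Finset.mem_filter.mp hq).1 hne)
        (one_sub_proj (specProj_isProjection ha _))
      intro p hp
      obtain ⟨hps, hpx⟩ := Finset.mem_filter.mp hp
      exact hν1 p hps x (not_le.mp (fun h => hpx (Set.mem_Iic.mpr h)))
    unfold loewnerLE at h2 ⊢
    have e : (∑ p ∈ s.filter (fun p => ν p ∈ Set.Iic x), p) - specProj a (Set.Iic x) =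
        (1 - specProj a (Set.Iic x)) - ∑ p ∈ s.filter (fun p => ¬ (ν p ∈ Set.Iic x)), p := by
      have h1 : (∑ p ∈ s.filter (fun p => ν p ∈ Set.Iic x), p) =
          1 - ∑ p ∈ s.filter (fun p => ¬ (ν p ∈ Set.Iic x)), p := eq_sub_of_add_eq hsplit
      rw [h1]; abel
    rw [e]; exact h2
  · -- maximality
    intro b hb hbh hba x
    obtain ⟨lam, hblam⟩ := hlam b hb hbh
    have hspecb : ∀ y : ℝ, specProj b (Set.Iic y) =
        ∑ p ∈ s.filter (fun p => lam p ∈ Set.Iic y), p := by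
      intro y
      have h := specProj_of_decomp (c := b) s id hbh hsum lam hblam (Set.Iic y)
      simpa only [id_eq] using h
    have hkey : ∀ p ∈ s, lam p ≤ ν p := by
      intro p hp
      apply hν2 p hp
      intro x' hx'
      have hb1 : loewnerLE p (∑ q ∈ s.filter (fun q => ¬ (lam q ∈ Set.Iic x')), q) := by
        have hsingle : loewnerLE (∑ q ∈ {p}, q)
            (∑ q ∈ s.filter (fun q => ¬ (lam q ∈ Set.Iic x')), q) := by
          apply sum_loewnerLE_sum
          · intro q hq
            rw [Finset.mem_singleton.mp hq]
            exact Finset.mem_filter.mpr ⟨hp, fun h => absurd (Set.mem_Iic.mp h) (not_le.mpr hx')⟩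
          · intro q hq
            exact proj_psd (hproj q (Finset.mem_filter.mp hq).1)
        rwa [Finset.sum_singleton] at hsingle
      have hsplitb : (∑ q ∈ s.filter (fun q => lam q ∈ Set.Iic x'), q) +
          (∑ q ∈ s.filter (fun q => ¬ (lam q ∈ Set.Iic x')), q) = 1 := by
        rw [Finset.sum_filter_add_sum_filter_not s _ (fun p => p)]
        exact hsum
      have hb2 : (∑ q ∈ s.filter (fun q => ¬ (lam q ∈ Set.Iic x')), q) =
          1 - specProj b (Set.Iic x') := by
        rw [hspecb x']
        exact eq_sub_of_add_eq' hsplitb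
      have hb3 : loewnerLE (1 - specProj b (Set.Iic x')) (1 - specProj a (Set.Iic x')) :=
        loewnerLE_one_sub (hba x')
      rw [hb2] at hb1
      exact loewnerLE_trans hb1 hb3
    rw [comb_spec C s ⟨hmem, hproj, hne0, horth, hsum⟩ ν (Set.Iic x), hspecb x]
    apply sum_loewnerLE_sum
    · intro p hp
      obtain ⟨hps, hpx⟩ := Finset.mem_filter.mp hp
      exact Finset.mem_filter.mpr ⟨hps,
        Set.mem_Iic.mpr (le_trans (hkey p hps) (Set.mem_Iic.mp hpx))⟩
    · intro p hp
      exact proj_psd (hproj p (Finset.mem_filter.mp hp).1)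

end DasInner

end Das

/-- Existence of outer and inner daseinisation of a Hermitian matrix in a
context, with respect to the spectral order, together with the adjunction properties. -/
theorem daseinisation_exists_and_adjunction {n : ℕ} (hn : 0 < n)
    (a : Mat n) (ha : a.IsHermitian) (C : Ctx n) :
    ∃ dO dI : Mat n,
      (dO ∈ C.alg ∧ dO.IsHermitian ∧ specLE a dO ∧
        ∀ b ∈ C.alg, b.IsHermitian → specLE a b → specLE dO b) ∧
      (dI ∈ C.alg ∧ dI.IsHermitian ∧ specLE dI a ∧
        ∀ b ∈ C.alg, b.IsHermitian → specLE b a → specLE b dI) ∧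
      (∀ b ∈ C.alg, b.IsHermitian →
        (specLE dO b ↔ specLE a b) ∧ (specLE b dI ↔ specLE b a)) := by
  classical
  obtain ⟨s, hs, hsc⟩ := Das.exists_res hn C
  have hlam : ∀ b ∈ C.alg, b.IsHermitian → ∃ lam : Mat n → ℝ,
      ∀ p ∈ s, b * p = (lam p : ℂ) • p := by
    intro b hb hbh
    choose lam0 hlam0 using fun (p : {q // q ∈ s}) => hsc b hb hbh p.1 p.2
    refine ⟨fun p => if h : p ∈ s then lam0 ⟨p, h⟩ else 0, ?_⟩
    intro p hp
    have h := hlam0 ⟨p, hp⟩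
    simpa only [dif_pos hp] using h
  obtain ⟨dO, hdO1, hdO2, hdO3, hdO4⟩ := Das.outer_das hn ha C s hs hlam
  obtain ⟨dI, hdI1, hdI2, hdI3, hdI4⟩ := Das.inner_das hn ha C s hs hlam
  refine ⟨dO, dI, ⟨hdO1, hdO2, hdO3, hdO4⟩, ⟨hdI1, hdI2, hdI3, hdI4⟩, ?_⟩
  intro b hb hbh
  constructor
  · exact ⟨fun h => Das.specLE_trans hdO3 h, fun h => hdO4 b hb hbh h⟩
  · exact ⟨fun h => Das.specLE_trans h hdI3, fun h => hdI4 b hb hbh h⟩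


end
end

section
/- Let A = M_n(ℂ), let a ∈ A be Hermitian, let C be a context and let r ∈ ℝ. Suppose d_i ∈ C is Hermitian and is the ≤ₛ-greatest element of {b ∈ C : b Hermitian, b ≤ₛ a} (the inner daseinisation δⁱ(a)_C), and suppose d ∈ Proj(C) is the least element of {p ∈ Proj(C) : χ_{(−∞,r)}(a) ≤ p} in the Löwner order (the outer daseinisation δᵒ(χ_{(−∞,r)}(a))_C). Then for every character λ of C: (i) if λ(d_i) < r then λ(d) = 1; and (ii) if λ(d) = 1 then λ(d_i) ≤ r. -/
open scoped ComplexOrder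

noncomputable section

namespace Hlp

open Polynomial Matrix

variable {n : ℕ}

lemma contOn (f : ℝ → ℝ) (m : Mat n) : ContinuousOn f (spectrum ℝ m) :=
  (Matrix.finite_real_spectrum (A := m)).continuousOn f

lemma isSA {m : Mat n} (hm : m.IsHermitian) : IsSelfAdjoint m :=
  hm.isSelfAdjoint

lemma specProj_eq {m : Mat n} (hm : m.IsHermitian) (S : Set ℝ) :
    specProj m S = cfc (Set.indicator S fun _ => (1 : ℝ)) m := by
  rw [specProj, dif_pos hm, hm.cfc_eq]

lemma cfc_eq_aeval {m : Mat n} (hm : m.IsHermitian) (f : ℝ → ℝ) (q : ℝ[X])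
    (hq : ∀ x ∈ spectrum ℝ m, q.eval x = f x) : cfc f m = aeval m q := by
  rw [← cfc_polynomial q m (isSA hm)]
  exact cfc_congr fun x hx => (hq x hx).symm

lemma exists_interp (s : Finset ℝ) (f : ℝ → ℝ) :
    ∃ q : ℝ[X], ∀ x ∈ s, q.eval x = f x := by
  refine ⟨Lagrange.interpolate s id f, fun x hx => ?_⟩
  exact Lagrange.eval_interpolate_at_node f (Set.injOn_id _) hx


lemma coe_aeval (S : StarSubalgebra ℂ (Mat n)) (x : S) (p : ℂ[X]) :
    ((aeval x p : S) : Mat n) = aeval (x : Mat n) p := by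
  have := Polynomial.aeval_algHom_apply (S.subtype) x p
  rw [StarSubalgebra.subtype_apply, StarSubalgebra.subtype_apply] at this
  exact this.symm

lemma cfc_mem (C : Ctx n) {m : Mat n} (hmem : m ∈ C.alg) (hm : m.IsHermitian)
    (f : ℝ → ℝ) : cfc f m ∈ C.alg := by
  obtain ⟨q, hq⟩ := exists_interp (Matrix.finite_real_spectrum (A := m)).toFinset f
  have h1 : cfc f m = aeval m q :=
    cfc_eq_aeval hm f q fun x hx => hq x ((Matrix.finite_real_spectrum (A := m)).mem_toFinset.mpr hx)
  have h2 : aeval m q = aeval m (q.map (algebraMap ℝ ℂ)) :=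
    (Polynomial.aeval_map_algebraMap ℂ m q).symm
  have h3 : aeval m (q.map (algebraMap ℝ ℂ)) =
      ((aeval (⟨m, hmem⟩ : C.alg) (q.map (algebraMap ℝ ℂ)) : C.alg) : Mat n) :=
    (coe_aeval C.alg ⟨m, hmem⟩ (q.map (algebraMap ℝ ℂ))).symm
  rw [h1, h2, h3]
  exact SetLike.coe_mem _

lemma char_cfc_eval (C : Ctx n) {m : Mat n} (hmem : m ∈ C.alg) (hm : m.IsHermitian)
    (lam : Character C.alg) {t : ℝ} (htsp : t ∈ spectrum ℝ m)
    (hlam : lam ⟨m, hmem⟩ = (t : ℂ)) (f : ℝ → ℝ) (h' : cfc f m ∈ C.alg) :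
    lam ⟨cfc f m, h'⟩ = (f t : ℂ) := by
  obtain ⟨q, hq⟩ := exists_interp (Matrix.finite_real_spectrum (A := m)).toFinset f
  have hq' : ∀ x ∈ spectrum ℝ m, q.eval x = f x := fun x hx =>
    hq x ((Matrix.finite_real_spectrum (A := m)).mem_toFinset.mpr hx)
  have h1 : cfc f m = aeval m (q.map (algebraMap ℝ ℂ)) := by
    rw [cfc_eq_aeval hm f q hq', Polynomial.aeval_map_algebraMap ℂ m q]
  have h3 : (⟨cfc f m, h'⟩ : C.alg) = aeval (⟨m, hmem⟩ : C.alg) (q.map (algebraMap ℝ ℂ)) := by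
    apply Subtype.ext
    show cfc f m = _
    rw [h1]
    exact (coe_aeval C.alg ⟨m, hmem⟩ (q.map (algebraMap ℝ ℂ))).symm
  rw [h3, ← Polynomial.aeval_algHom_apply lam, hlam]
  have : (aeval ((t : ℂ)) (q.map (algebraMap ℝ ℂ)) : ℂ) = ((q.eval t : ℝ) : ℂ) := by
    rw [Polynomial.aeval_map_algebraMap ℂ]
    simpa using Polynomial.aeval_algebraMap_apply_eq_algebraMap_eval (A := ℂ) t q
  rw [this, hq' t htsp]

lemma char_exists (C : Ctx n) {m : Mat n} (hmem : m ∈ C.alg) (hm : m.IsHermitian)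
    (lam : Character C.alg) : ∃ t ∈ spectrum ℝ m, lam ⟨m, hmem⟩ = (t : ℂ) := by
  classical
  set s := (Matrix.finite_real_spectrum (A := m)).toFinset with hs
  set P : ℝ[X] := ∏ x ∈ s, (X - Polynomial.C x) with hP
  have hPz : aeval m P = 0 := by
    rw [← cfc_eq_aeval hm (fun x => P.eval x) P (fun _ _ => rfl)]
    have h0 : cfc (fun x => P.eval x) m = cfc (fun _ : ℝ => (0:ℝ)) m := by
      apply cfc_congr
      intro x hx
      have hxs : x ∈ s := (Matrix.finite_real_spectrum (A := m)).mem_toFinset.mpr hx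
      simp only [hP, Polynomial.eval_prod]
      exact Finset.prod_eq_zero hxs (by simp)
    rw [h0, cfc_const_zero]
  have hPz' : aeval (⟨m, hmem⟩ : C.alg) (P.map (algebraMap ℝ ℂ)) = 0 := by
    apply Subtype.ext
    have h4 := coe_aeval C.alg ⟨m, hmem⟩ (P.map (algebraMap ℝ ℂ))
    have h5 : aeval m (P.map (algebraMap ℝ ℂ)) = aeval m P :=
      Polynomial.aeval_map_algebraMap ℂ m P
    show _ = (0 : Mat n)
    rw [h4]
    show aeval m (P.map (algebraMap ℝ ℂ)) = 0
    rw [h5, hPz]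
  have h6 : (aeval (lam ⟨m, hmem⟩) (P.map (algebraMap ℝ ℂ)) : ℂ) = 0 := by
    rw [Polynomial.aeval_algHom_apply lam, hPz', map_zero]
  have h7 : ∏ x ∈ s, (lam ⟨m, hmem⟩ - (x : ℂ)) = 0 := by
    rw [← h6, hP]
    rw [Polynomial.map_prod]
    simp [Polynomial.eval_prod]
  obtain ⟨x, hxs, hx0⟩ := Finset.prod_eq_zero_iff.mp h7
  exact ⟨x, (Matrix.finite_real_spectrum (A := m)).mem_toFinset.mp hxs, by linear_combination hx0⟩

lemma ind_mul (S : Set ℝ) (x : ℝ) :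
    Set.indicator S (fun _ => (1:ℝ)) x * Set.indicator S (fun _ => (1:ℝ)) x
      = Set.indicator S (fun _ => (1:ℝ)) x := by
  by_cases h : x ∈ S <;> simp [h]

lemma psd_of_cfc {m : Mat n} (hm : m.IsHermitian) {f : ℝ → ℝ}
    (hf : ∀ x ∈ spectrum ℝ m, 0 ≤ f x) : (cfc f m).PosSemidef := by
  rw [hm.cfc_eq, Matrix.IsHermitian.cfc]
  have hd : (Matrix.diagonal (RCLike.ofReal ∘ f ∘ hm.eigenvalues) : Mat n).PosSemidef := by
    rw [Matrix.posSemidef_diagonal_iff]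
    intro i
    have h0 := hf _ (hm.eigenvalues_mem_spectrum_real i)
    simp only [Function.comp_apply]
    exact RCLike.ofReal_nonneg.mpr h0
  have h1 := hd.mul_mul_conjTranspose_same (hm.eigenvectorUnitary : Mat n)
  rwa [← Matrix.star_eq_conjTranspose] at h1

lemma proj_of_cfc {m : Mat n} (hm : m.IsHermitian) {f : ℝ → ℝ}
    (hf : ∀ x, f x * f x = f x) : IsProjection (cfc f m) := by
  constructor
  · exact (cfc_predicate f m : IsSelfAdjoint _).star_eq
  · rw [← cfc_mul f f m (contOn f m) (contOn f m)]
    exact cfc_congr fun x _ => hf x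

lemma proj_psd {p : Mat n} (hp : IsProjection p) : p.PosSemidef := by
  have h : p = pᴴ * p := by
    rw [← Matrix.star_eq_conjTranspose, hp.1, hp.2]
  rw [h]
  exact Matrix.posSemidef_conjTranspose_mul_self p

lemma loewner_trans {x y z : Mat n} (h1 : loewnerLE x y) (h2 : loewnerLE y z) :
    loewnerLE x z := by
  have h := h2.add h1
  rwa [sub_add_sub_cancel] at h

lemma specProj_mono {m : Mat n} (hm : m.IsHermitian) {S T : Set ℝ} (h : S ⊆ T) :
    loewnerLE (specProj m S) (specProj m T) := by
  rw [specProj_eq hm, specProj_eq hm]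
  show (cfc (Set.indicator T fun _ => (1:ℝ)) m - cfc (Set.indicator S fun _ => (1:ℝ)) m).PosSemidef
  rw [← cfc_sub _ _ m (contOn _ m) (contOn _ m)]
  refine psd_of_cfc hm fun x _ => ?_
  by_cases hx : x ∈ S
  · simp [hx, h hx]
  · by_cases hx' : x ∈ T <;> simp [hx, hx']

lemma loewner_of_mul {e q : Mat n} (he : IsProjection e) (hq : IsProjection q)
    (h : q * e = e) : loewnerLE e q := by
  have heq : e * q = e := by
    have h2 := congrArg star h
    rwa [StarMul.star_mul, he.1, hq.1] at h2
  apply proj_psd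
  constructor
  · rw [star_sub, he.1, hq.1]
  · rw [sub_mul, mul_sub, mul_sub, hq.2, h, heq, he.2, sub_self, sub_zero]

lemma mul_of_loewner {e q : Mat n} (he : IsProjection e) (hq : IsProjection q)
    (h : loewnerLE e q) : q * e = e := by
  have hq' : IsProjection (1 - q) := by
    constructor
    · rw [star_sub, star_one, hq.1]
    · have h2 : (1 - q) * (1 - q) = 1 - q - q + q * q := by noncomm_ring
      rw [h2, hq.2]
      abel
  have hpsd1 := proj_psd hq'
  have key : ∀ v : Fin n → ℂ, q *ᵥ (e *ᵥ v) = e *ᵥ v := by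
    intro v
    set w := e *ᵥ v with hw
    have hew : e *ᵥ w = w := by rw [hw, Matrix.mulVec_mulVec, he.2]
    have h2 := Matrix.PosSemidef.dotProduct_mulVec_nonneg h w
    rw [Matrix.sub_mulVec, hew, dotProduct_sub] at h2
    have h3 := Matrix.PosSemidef.dotProduct_mulVec_nonneg hpsd1 w
    have h4 : dotProduct (star w) ((1 - q) *ᵥ w) = 0 := by
      apply le_antisymm _ h3
      rw [sub_nonneg] at h2
      rw [Matrix.sub_mulVec, Matrix.one_mulVec, dotProduct_sub]
      exact sub_nonpos.mpr h2
    have h5 := (hpsd1.dotProduct_mulVec_zero_iff w).mp h4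
    rw [Matrix.sub_mulVec, Matrix.one_mulVec, sub_eq_zero] at h5
    exact h5.symm
  ext i j
  have h6 := congrFun (key (Pi.single j 1)) i
  rw [Matrix.mulVec_mulVec] at h6
  simpa [Matrix.mulVec_single] using h6

lemma pow_split (C : Ctx n) {c₁ c₂ p : Mat n} (m₁ : c₁ ∈ C.alg) (m₂ : c₂ ∈ C.alg)
    (mp : p ∈ C.alg) (hp : IsProjection p) (k : ℕ) :
    (c₁ * p + c₂ * (1 - p)) ^ k = c₁ ^ k * p + c₂ ^ k * (1 - p) := by
  have h1p : p * c₁ = c₁ * p := C.comm p mp c₁ m₁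
  have h2p : p * c₂ = c₂ * p := C.comm p mp c₂ m₂
  have hpp : p * p = p := hp.2
  have hpp' : p * (1 - p) = 0 := by rw [mul_sub, mul_one, hpp, sub_self]
  have hp'p : (1 - p) * p = 0 := by rw [sub_mul, one_mul, hpp, sub_self]
  have hp'p' : (1 - p) * (1 - p) = 1 - p := by rw [mul_sub, mul_one, hp'p, sub_zero]
  have h1p' : (1 - p) * c₁ = c₁ * (1 - p) := by
    rw [sub_mul, one_mul, mul_sub, mul_one, h1p]
  have h2p' : (1 - p) * c₂ = c₂ * (1 - p) := by
    rw [sub_mul, one_mul, mul_sub, mul_one, h2p]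
  induction k with
  | zero =>
    rw [pow_zero, pow_zero, pow_zero, one_mul, one_mul]
    abel
  | succ k ih =>
    rw [pow_succ, ih]
    have e1 : c₁ ^ k * p * (c₁ * p) = c₁ ^ (k + 1) * p := by
      rw [mul_assoc (c₁ ^ k) p, ← mul_assoc p c₁ p, h1p, mul_assoc c₁ p p, hpp,
        ← mul_assoc, ← pow_succ]
    have e2 : c₁ ^ k * p * (c₂ * (1 - p)) = 0 := by
      rw [mul_assoc (c₁ ^ k) p, ← mul_assoc p c₂ (1 - p), h2p, mul_assoc c₂ p (1 - p),
        hpp', mul_zero, mul_zero]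
    have e3 : c₂ ^ k * (1 - p) * (c₁ * p) = 0 := by
      rw [mul_assoc (c₂ ^ k) (1 - p), ← mul_assoc (1 - p) c₁ p, h1p', mul_assoc c₁ (1 - p) p,
        hp'p, mul_zero, mul_zero]
    have e4 : c₂ ^ k * (1 - p) * (c₂ * (1 - p)) = c₂ ^ (k + 1) * (1 - p) := by
      rw [mul_assoc (c₂ ^ k) (1 - p), ← mul_assoc (1 - p) c₂ (1 - p), h2p',
        mul_assoc c₂ (1 - p) (1 - p), hp'p', ← mul_assoc, ← pow_succ]
    rw [add_mul, mul_add, mul_add, e1, e2, e3, e4, add_zero, zero_add]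

lemma aeval_split (C : Ctx n) {c₁ c₂ p : Mat n} (m₁ : c₁ ∈ C.alg) (m₂ : c₂ ∈ C.alg)
    (mp : p ∈ C.alg) (hp : IsProjection p) (q : ℝ[X]) :
    aeval (c₁ * p + c₂ * (1 - p)) q = aeval c₁ q * p + aeval c₂ q * (1 - p) := by
  rw [Polynomial.aeval_eq_sum_range' (lt_add_one q.natDegree),
    Polynomial.aeval_eq_sum_range' (lt_add_one q.natDegree),
    Polynomial.aeval_eq_sum_range' (lt_add_one q.natDegree),
    Finset.sum_mul, Finset.sum_mul, ← Finset.sum_add_distrib]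
  refine Finset.sum_congr rfl fun i _ => ?_
  rw [pow_split C m₁ m₂ mp hp i, smul_add, smul_mul_assoc, smul_mul_assoc]

lemma cfc_split (C : Ctx n) {c₁ c₂ p : Mat n} (m₁ : c₁ ∈ C.alg) (m₂ : c₂ ∈ C.alg)
    (mp : p ∈ C.alg) (h₁ : c₁.IsHermitian) (h₂ : c₂.IsHermitian) (hp : IsProjection p)
    (hb : (c₁ * p + c₂ * (1 - p)).IsHermitian) (f : ℝ → ℝ) :
    cfc f (c₁ * p + c₂ * (1 - p)) = cfc f c₁ * p + cfc f c₂ * (1 - p) := by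
  obtain ⟨q, hq⟩ := exists_interp
    ((Matrix.finite_real_spectrum (A := c₁ * p + c₂ * (1 - p))).toFinset ∪
      (Matrix.finite_real_spectrum (A := c₁)).toFinset ∪
      (Matrix.finite_real_spectrum (A := c₂)).toFinset) f
  have hqb : ∀ x ∈ spectrum ℝ (c₁ * p + c₂ * (1 - p)), q.eval x = f x := fun x hx =>
    hq x (by simp only [Finset.mem_union, Set.Finite.mem_toFinset]; tauto)
  have hq1 : ∀ x ∈ spectrum ℝ c₁, q.eval x = f x := fun x hx =>
    hq x (by simp only [Finset.mem_union, Set.Finite.mem_toFinset]; tauto)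
  have hq2 : ∀ x ∈ spectrum ℝ c₂, q.eval x = f x := fun x hx =>
    hq x (by simp only [Finset.mem_union, Set.Finite.mem_toFinset]; tauto)
  rw [cfc_eq_aeval hb f q hqb, cfc_eq_aeval h₁ f q hq1, cfc_eq_aeval h₂ f q hq2,
    aeval_split C m₁ m₂ mp hp]

end Hlp

/-- Relation between the inner daseinisation `δⁱ(a)_C` and the outer
daseinisation of the spectral projection `χ_{(-∞,r)}(a)` in `C`, evaluated at characters. -/
theorem inner_daseinisation_vs_proj {n : ℕ} (hn : 0 < n)
    (a : Mat n) (ha : a.IsHermitian) (C : Ctx n) (r : ℝ)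
    (dI : Mat n) (hdImem : dI ∈ C.alg) (hdIherm : dI.IsHermitian)
    (hdIle : specLE dI a)
    (hdIgreatest : ∀ b ∈ C.alg, b.IsHermitian → specLE b a → specLE b dI)
    (d : Mat n) (hdmem : d ∈ C.alg) (hdproj : IsProjection d)
    (hdge : loewnerLE (specProj a (Set.Iio r)) d)
    (hdleast : ∀ p ∈ C.alg, IsProjection p →
      loewnerLE (specProj a (Set.Iio r)) p → loewnerLE d p) :
    ∀ lam : Character C.alg,
      (lam ⟨dI, hdImem⟩ < (r : ℂ) → lam ⟨d, hdmem⟩ = 1) ∧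
      (lam ⟨d, hdmem⟩ = 1 → lam ⟨dI, hdImem⟩ ≤ (r : ℂ)) := by
  classical
  intro lam
  obtain ⟨t, htsp, hlam⟩ := Hlp.char_exists C hdImem hdIherm lam
  constructor
  · -- Part (i)
    intro hlt
    have htr : t < r := by
      rw [hlam] at hlt
      exact Complex.real_lt_real.mp hlt
    set g : ℝ → ℝ := fun s => max s r with hg
    set c₂ : Mat n := cfc g dI with hc₂
    have hc₂mem : c₂ ∈ C.alg := Hlp.cfc_mem C hdImem hdIherm g
    have hc₂sa : IsSelfAdjoint c₂ := cfc_predicate g dI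
    have hc₂herm : c₂.IsHermitian := by
      rw [Matrix.IsHermitian, ← Matrix.star_eq_conjTranspose]
      exact hc₂sa.star_eq
    set b : Mat n := dI * d + c₂ * (1 - d) with hb
    have h1md : (1 : Mat n) - d ∈ C.alg := sub_mem (one_mem _) hdmem
    have hbmem : b ∈ C.alg := add_mem (mul_mem hdImem hdmem) (mul_mem hc₂mem h1md)
    have hbherm : b.IsHermitian := by
      rw [Matrix.IsHermitian, ← Matrix.star_eq_conjTranspose, hb, star_add,
        StarMul.star_mul, StarMul.star_mul, hdproj.1]
      rw [show star dI = dI from by rw [Matrix.star_eq_conjTranspose, hdIherm]]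
      rw [show star ((1 : Mat n) - d) = 1 - d from by rw [star_sub, star_one, hdproj.1]]
      rw [hc₂sa.star_eq, C.comm d hdmem dI hdImem, C.comm _ h1md c₂ hc₂mem]
    -- spectrum of c₂ lies in [r, ∞)
    have hspc₂ : ∀ y ∈ spectrum ℝ c₂, r ≤ y := by
      intro y hy
      rw [hc₂, cfc_map_spectrum g dI hdIherm.isSelfAdjoint (Hlp.contOn g dI)] at hy
      obtain ⟨sx, _, rfl⟩ := hy
      exact le_max_right _ _
    -- spectral projections of b below r
    have hsplit : ∀ x : ℝ, x < r → specProj b (Set.Iic x)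
        = cfc (Set.indicator (Set.Iic x) fun _ => (1:ℝ)) dI * d := by
      intro x hx
      rw [Hlp.specProj_eq hbherm, hb,
        Hlp.cfc_split C hdImem hc₂mem hdmem hdIherm hc₂herm hdproj (hb ▸ hbherm)]
      have hzero : cfc (Set.indicator (Set.Iic x) fun _ => (1:ℝ)) c₂ = 0 := by
        have h0 : cfc (Set.indicator (Set.Iic x) fun _ => (1:ℝ)) c₂
            = cfc (fun _ : ℝ => (0:ℝ)) c₂ := by
          apply cfc_congr
          intro y hy
          have : ¬ y ≤ x := fun hc => absurd (lt_of_le_of_lt hc hx) (not_lt.mpr (hspc₂ y hy))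
          simp [Set.indicator, this]
        rw [h0, cfc_const_zero]
      rw [hzero, zero_mul, add_zero]
    -- spectral projections of b at or above r
    have hsplit2 : ∀ x : ℝ, r ≤ x → specProj b (Set.Iic x)
        = cfc (Set.indicator (Set.Iic x) fun _ => (1:ℝ)) dI := by
      intro x hx
      rw [Hlp.specProj_eq hbherm, hb,
        Hlp.cfc_split C hdImem hc₂mem hdmem hdIherm hc₂herm hdproj (hb ▸ hbherm)]
      have hcomp : cfc (Set.indicator (Set.Iic x) fun _ => (1:ℝ)) c₂
          = cfc (Set.indicator (Set.Iic x) fun _ => (1:ℝ)) dI := by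
        rw [hc₂, ← cfc_comp' (Set.indicator (Set.Iic x) fun _ => (1:ℝ)) g dI
          (((Matrix.finite_real_spectrum (A := dI)).image g).continuousOn _)
          (Hlp.contOn g dI) hdIherm.isSelfAdjoint]
        apply cfc_congr
        intro y _
        by_cases hyx : y ≤ x
        · have : max y r ≤ x := max_le hyx hx
          simp [Set.indicator, hyx, this, hg]
        · have : ¬ max y r ≤ x := fun hc => hyx (le_trans (le_max_left _ _) hc)
          simp [Set.indicator, hyx, this, hg]
      rw [hcomp, ← mul_add, show d + (1 - d) = (1 : Mat n) from by abel, mul_one]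
    -- b ≤ₛ a
    have hble : specLE b a := by
      intro x
      by_cases hx : x < r
      · rw [hsplit x hx]
        set P : Mat n := cfc (Set.indicator (Set.Iic x) fun _ => (1:ℝ)) dI with hPdef
        have hPproj : IsProjection P := Hlp.proj_of_cfc hdIherm (Hlp.ind_mul _)
        have hPmem : P ∈ C.alg := Hlp.cfc_mem C hdImem hdIherm _
        have hEP : loewnerLE (specProj a (Set.Iic x)) P := by
          have h0 := hdIle x
          rwa [Hlp.specProj_eq hdIherm] at h0
        have hEd : loewnerLE (specProj a (Set.Iic x)) d :=
          Hlp.loewner_trans (Hlp.specProj_mono ha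
            (fun y (hy : y ≤ x) => lt_of_le_of_lt hy hx)) hdge
        have hEproj : IsProjection (specProj a (Set.Iic x)) := by
          rw [Hlp.specProj_eq ha]
          exact Hlp.proj_of_cfc ha (Hlp.ind_mul _)
        have h1 := Hlp.mul_of_loewner hEproj hPproj hEP
        have h2 := Hlp.mul_of_loewner hEproj hdproj hEd
        have hcomm : d * P = P * d := C.comm d hdmem P hPmem
        have hPd : IsProjection (P * d) := by
          constructor
          · rw [StarMul.star_mul, hdproj.1,
              show star P = P from hPproj.1, hcomm]
          · rw [mul_assoc P d (P * d), ← mul_assoc d P d, hcomm, mul_assoc P d d,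
              hdproj.2, ← mul_assoc, hPproj.2]
        apply Hlp.loewner_of_mul hEproj hPd
        rw [mul_assoc, h2, h1]
      · push_neg at hx
        rw [hsplit2 x hx]
        have h0 := hdIle x
        rwa [Hlp.specProj_eq hdIherm] at h0
    -- maximality
    have hgd := hdIgreatest b hbmem hbherm hble t
    rw [hsplit t htr, Hlp.specProj_eq hdIherm] at hgd
    set P : Mat n := cfc (Set.indicator (Set.Iic t) fun _ => (1:ℝ)) dI with hPdef
    have hPproj : IsProjection P := Hlp.proj_of_cfc hdIherm (Hlp.ind_mul _)
    have hPmem : P ∈ C.alg := Hlp.cfc_mem C hdImem hdIherm _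
    have hcomm : d * P = P * d := C.comm d hdmem P hPmem
    have hPd : IsProjection (P * d) := by
      constructor
      · rw [StarMul.star_mul, hdproj.1, show star P = P from hPproj.1, hcomm]
      · rw [mul_assoc P d (P * d), ← mul_assoc d P d, hcomm, mul_assoc P d d,
          hdproj.2, ← mul_assoc, hPproj.2]
    have h3 := Hlp.mul_of_loewner hPproj hPd hgd
    rw [mul_assoc, hcomm, ← mul_assoc, hPproj.2] at h3
    -- h3 : P * d = P
    have h5 : lam (⟨P, hPmem⟩ * ⟨d, hdmem⟩) = lam ⟨P, hPmem⟩ := by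
      congr 1
      exact Subtype.ext (by rw [MulMemClass.coe_mul]; exact h3)
    rw [_root_.map_mul] at h5
    have h7 : lam ⟨P, hPmem⟩ = 1 := by
      have h8 := Hlp.char_cfc_eval C hdImem hdIherm lam htsp hlam
        (Set.indicator (Set.Iic t) fun _ => (1:ℝ)) hPmem
      rw [h8, Set.indicator_of_mem (Set.mem_Iic.mpr le_rfl)]
      norm_num
    rw [h7, one_mul] at h5
    exact h5
  · -- Part (ii)
    intro hd1
    set p : Mat n := cfc (Set.indicator (Set.Iio r) fun _ => (1:ℝ)) dI with hpdef
    have hpmem : p ∈ C.alg := Hlp.cfc_mem C hdImem hdIherm _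
    have hpproj : IsProjection p := Hlp.proj_of_cfc hdIherm (Hlp.ind_mul _)
    have hge : loewnerLE (specProj a (Set.Iio r)) p := by
      set s := ((Matrix.finite_real_spectrum (A := a)).toFinset.filter (fun y => y < r))
        with hs
      by_cases hne : s.Nonempty
      · set x₀ := s.max' hne with hx0
        have hx₀mem := s.max'_mem hne
        have hx₀r : x₀ < r := (Finset.mem_filter.mp hx₀mem).2
        have hEx : specProj a (Set.Iio r) = specProj a (Set.Iic x₀) := by
          rw [Hlp.specProj_eq ha, Hlp.specProj_eq ha]
          apply cfc_congr
          intro y hy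
          by_cases hyr : y < r
          · have hyx : y ≤ x₀ := Finset.le_max' s y (Finset.mem_filter.mpr
              ⟨(Matrix.finite_real_spectrum (A := a)).mem_toFinset.mpr hy, hyr⟩)
            simp [Set.indicator, hyr, hyx]
          · have hyx : ¬ y ≤ x₀ := fun hc => hyr (lt_of_le_of_lt hc hx₀r)
            simp [Set.indicator, hyr, hyx]
        rw [hEx]
        refine Hlp.loewner_trans (hdIle x₀) ?_
        have h0 := Hlp.specProj_mono hdIherm
          (show Set.Iic x₀ ⊆ Set.Iio r from fun y hy => lt_of_le_of_lt hy hx₀r)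
        rwa [Hlp.specProj_eq hdIherm (Set.Iio r)] at h0
      · have hE0 : specProj a (Set.Iio r) = 0 := by
          rw [Hlp.specProj_eq ha]
          have h0 : cfc (Set.indicator (Set.Iio r) fun _ => (1:ℝ)) a
              = cfc (fun _ : ℝ => (0:ℝ)) a := by
            apply cfc_congr
            intro y hy
            have hyr : ¬ y < r := fun hc => hne ⟨y, Finset.mem_filter.mpr
              ⟨(Matrix.finite_real_spectrum (A := a)).mem_toFinset.mpr hy, hc⟩⟩
            simp [Set.indicator, hyr]
          rw [h0, cfc_const_zero]
        rw [loewnerLE, hE0, sub_zero]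
        exact Hlp.proj_psd hpproj
    have hdlep := hdleast p hpmem hpproj hge
    have hmul := Hlp.mul_of_loewner hdproj hpproj hdlep
    have h5 : lam (⟨p, hpmem⟩ * ⟨d, hdmem⟩) = lam ⟨d, hdmem⟩ := by
      congr 1
      exact Subtype.ext (by rw [MulMemClass.coe_mul]; exact hmul)
    rw [_root_.map_mul, hd1, mul_one] at h5
    have h7 := Hlp.char_cfc_eval C hdImem hdIherm lam htsp hlam
      (Set.indicator (Set.Iio r) fun _ => (1:ℝ)) hpmem
    rw [h5] at h7
    by_cases htr : t < r
    · rw [hlam]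
      exact Complex.real_le_real.mpr htr.le
    · exfalso
      rw [Set.indicator_of_notMem (by simpa using htr)] at h7
      norm_num at h7


end
end

section
/- Let A = M_n(ℂ), let a ∈ A be Hermitian, let C be a context and let s ∈ ℝ. Suppose d_o ∈ C is Hermitian and is the ≤ₛ-least element of {b ∈ C : b Hermitian, a ≤ₛ b} (the outer daseinisation δᵒ(a)_C), and suppose d ∈ Proj(C) is the least element of {p ∈ Proj(C) : χ_{(s,∞)}(a) ≤ p} in the Löwner order (the outer daseinisation δᵒ(χ_{(s,∞)}(a))_C). Then for every character λ of C: (i) if λ(d_o) > s then λ(d) = 1; and (ii) if λ(d) = 1 then λ(d_o) ≥ s. -/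
open scoped ComplexOrder
open Polynomial

noncomputable section

namespace Aux
variable {n : ℕ} {S : StarSubalgebra ℂ (Mat n)}


lemma contOn {m : Mat n} (f : ℝ → ℝ) : ContinuousOn f (spectrum ℝ m) :=
  (Matrix.finite_real_spectrum).continuousOn f

lemma cfc_psd {m : Mat n} (hm : m.IsHermitian) {f : ℝ → ℝ}
    (hf : ∀ x, 0 ≤ f x) : (cfc f m).PosSemidef := by
  rw [hm.cfc_eq, Matrix.IsHermitian.cfc]
  rw [Unitary.conjStarAlgAut_apply, Matrix.star_eq_conjTranspose]
  exact (Matrix.posSemidef_diagonal_iff.mpr fun i => by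
    simpa using Complex.zero_le_real.mpr (hf _)).mul_mul_conjTranspose_same _

lemma exists_poly {m : Mat n} (hm : m.IsHermitian) (f : ℝ → ℝ) :
    ∃ q : ℝ[X], (∀ x ∈ spectrum ℝ m, q.eval x = f x) ∧ cfc f m = Polynomial.aeval m q := by
  classical
  have hfin : (spectrum ℝ m).Finite := Matrix.finite_real_spectrum
  set q := Lagrange.interpolate hfin.toFinset id f with hqdef
  have hq : ∀ x ∈ spectrum ℝ m, q.eval x = f x := by
    intro x hx
    have := Lagrange.eval_interpolate_at_node (v := id) (r := f)
      (Set.injOn_id _) (hfin.mem_toFinset.mpr hx)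
    simpa [hqdef] using this
  refine ⟨q, hq, ?_⟩
  rw [← cfc_polynomial q m hm.isSelfAdjoint]
  exact cfc_congr fun x hx => (hq x hx).symm



lemma aeval_memC {m : Mat n} (hm : m ∈ S) (q : ℂ[X]) : Polynomial.aeval m q ∈ S := by
  have : Polynomial.aeval m q = S.subtype (Polynomial.aeval (⟨m, hm⟩ : S) q) := by
    rw [← Polynomial.aeval_algHom_apply]; rfl
  rw [this]
  exact SetLike.coe_mem _

lemma aeval_memR {m : Mat n} (hm : m ∈ S) (q : ℝ[X]) : Polynomial.aeval m q ∈ S := by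
  rw [← Polynomial.aeval_map_algebraMap ℂ]
  exact aeval_memC hm _

lemma inv_mem {u : Mat n} (hu : u ∈ S) (h : IsUnit u) :
    ∃ v ∈ S, u * v = 1 ∧ v * u = 1 := by
  have hint : IsIntegral ℂ u := Algebra.IsIntegral.isIntegral u
  set p := minpoly ℂ u with hp
  have hpne : p ≠ 0 := minpoly.ne_zero hint
  have haev : Polynomial.aeval u p = 0 := minpoly.aeval ℂ u
  have hc : p.coeff 0 ≠ 0 := by
    intro hc0
    obtain ⟨q, hq⟩ : Polynomial.X ∣ p := Polynomial.X_dvd_iff.mpr hc0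
    have hqne : q ≠ 0 := by rintro rfl; simp at hq; exact hpne hq
    have haevq : Polynomial.aeval u q = 0 := by
      have : u * Polynomial.aeval u q = 0 := by
        have := haev; rw [hq] at this; simpa using this
      exact h.mul_left_cancel (by simpa using this)
    have hle := Polynomial.natDegree_le_natDegree (minpoly.degree_le_of_ne_zero ℂ u hqne haevq)
    rw [← hp, hq, Polynomial.natDegree_mul Polynomial.X_ne_zero hqne,
      Polynomial.natDegree_X] at hle
    omega
  -- now build the inverse
  set c := p.coeff 0 with hcdef
  set w := Polynomial.aeval u p.divX with hwdef
  have hkey : w * u + algebraMap ℂ (Mat n) c = 0 := by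
    have h0 := haev
    conv at h0 => rw [← Polynomial.divX_mul_X_add p]
    simpa [map_add, map_mul] using h0
  have hwu : w * u = (-c) • (1 : Mat n) := by
    rw [neg_smul, ← Algebra.algebraMap_eq_smul_one]
    exact eq_neg_of_add_eq_zero_left hkey
  have hcomm : u * w = w * u := by
    have h1 : Polynomial.aeval u (Polynomial.X * p.divX) =
        Polynomial.aeval u (p.divX * Polynomial.X) := by ring_nf
    simpa [map_mul, hwdef] using h1
  have hcne : (-c) ≠ 0 := neg_ne_zero.mpr hc
  refine ⟨(-c)⁻¹ • w, S.smul_mem (aeval_memC hu _) _, ?_, ?_⟩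
  · rw [mul_smul_comm, hcomm, hwu, smul_smul, inv_mul_cancel₀ hcne, one_smul]
  · rw [smul_mul_assoc, hwu, smul_smul, inv_mul_cancel₀ hcne, one_smul]

lemma lam_mem_spectrum (lam : S →⋆ₐ[ℂ] ℂ) {m : Mat n} (hm : m ∈ S) :
    lam ⟨m, hm⟩ ∈ spectrum ℂ m := by
  set z := lam ⟨m, hm⟩ with hz
  by_contra hns
  have hunit : IsUnit (algebraMap ℂ (Mat n) z - m) := by
    simpa [spectrum.mem_iff, not_not] using hns
  have humem : algebraMap ℂ (Mat n) z - m ∈ S :=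
    sub_mem (S.algebraMap_mem z) hm
  obtain ⟨v, hv, huv, -⟩ := inv_mem humem hunit
  have : (⟨algebraMap ℂ (Mat n) z - m, humem⟩ : S) * ⟨v, hv⟩ = 1 :=
    Subtype.ext (by simpa using huv)
  have h1 : lam ⟨algebraMap ℂ (Mat n) z - m, humem⟩ * lam ⟨v, hv⟩ = 1 := by
    rw [← map_mul, this, map_one]
  have h2 : (⟨algebraMap ℂ (Mat n) z - m, humem⟩ : S) =
      algebraMap ℂ S z - ⟨m, hm⟩ := Subtype.ext (by simp)
  rw [h2, map_sub, AlgHomClass.commutes, ← hz] at h1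
  simp at h1

lemma lam_real (lam : S →⋆ₐ[ℂ] ℂ) {m : Mat n} (hm : m ∈ S) (hherm : m.IsHermitian) :
    ∃ r : ℝ, r ∈ spectrum ℝ m ∧ lam ⟨m, hm⟩ = (r : ℂ) := by
  set z := lam ⟨m, hm⟩ with hz
  have hstar : (starRingEnd ℂ) z = z := by
    have h1 : star (⟨m, hm⟩ : S) = ⟨m, hm⟩ :=
      Subtype.ext (by simpa [Matrix.star_eq_conjTranspose] using hherm.eq)
    have := map_star lam (⟨m, hm⟩ : S)
    rw [h1] at this
    simpa [hz] using this.symm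
  have hre : z = ((z.re : ℝ) : ℂ) := (Complex.conj_eq_iff_re.mp hstar).symm
  refine ⟨z.re, ?_, hre⟩
  rw [← spectrum.algebraMap_mem_iff ℂ]
  have hmem := lam_mem_spectrum lam hm
  rw [← hz] at hmem
  simpa [← hre] using hmem

lemma cfc_memS {m : Mat n} (hm : m ∈ S) (hherm : m.IsHermitian) (f : ℝ → ℝ) :
    cfc f m ∈ S := by
  obtain ⟨q, -, hq⟩ := exists_poly hherm f
  rw [hq]; exact aeval_memR hm q

lemma lam_cfc (lam : S →⋆ₐ[ℂ] ℂ) {m : Mat n} (hm : m ∈ S) (hherm : m.IsHermitian)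
    (f : ℝ → ℝ) {r : ℝ} (hr : r ∈ spectrum ℝ m) (hlam : lam ⟨m, hm⟩ = (r : ℂ))
    (h2 : cfc f m ∈ S) : lam ⟨cfc f m, h2⟩ = ((f r : ℝ) : ℂ) := by
  obtain ⟨q, hq, hrep⟩ := exists_poly hherm f
  have hC : cfc f m = Polynomial.aeval m (q.map (algebraMap ℝ ℂ)) := by
    rw [Polynomial.aeval_map_algebraMap]; exact hrep
  have hsub : (⟨cfc f m, h2⟩ : S) = Polynomial.aeval (⟨m, hm⟩ : S) (q.map (algebraMap ℝ ℂ)) :=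
    Subtype.ext (by show cfc f m = _; rw [hC]; exact Polynomial.aeval_algHom_apply S.subtype ⟨m, hm⟩ _)
  rw [hsub, ← Polynomial.aeval_algHom_apply lam, hlam]
  have : ((r : ℂ)) = algebraMap ℝ ℂ r := rfl
  rw [this, Polynomial.aeval_map_algebraMap, Polynomial.aeval_algebraMap_apply_eq_algebraMap_eval,
    hq r hr]
  rfl

lemma lam_nonneg (lam : S →⋆ₐ[ℂ] ℂ) {m : Mat n} (hm : m ∈ S) (hpsd : m.PosSemidef) :
    0 ≤ lam ⟨m, hm⟩ := by
  obtain ⟨r, hr, hlam⟩ := lam_real lam hm hpsd.isHermitian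
  rw [hlam, Complex.zero_le_real]
  rw [Matrix.IsHermitian.spectrum_real_eq_range_eigenvalues hpsd.isHermitian] at hr
  obtain ⟨i, rfl⟩ := hr
  exact hpsd.eigenvalues_nonneg i

lemma proj_spectrum (hn : 0 < n) {d : Mat n} (hd : IsProjection d) :
    spectrum ℝ d ⊆ {0, 1} := by
  haveI : Nonempty (Fin n) := ⟨⟨0, hn⟩⟩
  have hsa : IsSelfAdjoint d := hd.1
  have h0 : cfc (fun x : ℝ => x * x - x) d = 0 := by
    rw [cfc_sub (fun x : ℝ => x * x) (fun x : ℝ => x) d (contOn _) (contOn _),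
      cfc_mul (fun x : ℝ => x) (fun x : ℝ => x) d (contOn _) (contOn _),
      cfc_id' ℝ d, hd.2, sub_self]
  intro x hx
  have hmap := cfc_map_spectrum (R := ℝ) (fun x : ℝ => x * x - x) d hsa (contOn _)
  have hmem : x * x - x ∈ spectrum ℝ (0 : Mat n) := by
    rw [← h0, hmap]; exact ⟨x, hx, rfl⟩
  rw [spectrum.zero_eq] at hmem
  have hx0 : x * (x - 1) = 0 := by
    have : x * x - x = 0 := hmem
    ring_nf; ring_nf at this; linarith
  rcases mul_eq_zero.mp hx0 with h | h
  · exact Or.inl h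
  · exact Or.inr (by simp; linarith)

lemma cfc_proj (hn : 0 < n) {d : Mat n} (hd : IsProjection d) (f : ℝ → ℝ) :
    cfc f d = algebraMap ℝ (Mat n) (f 0) + (f 1 - f 0) • d := by
  have hsa : IsSelfAdjoint d := hd.1
  have hsub := proj_spectrum hn hd
  have h1 : cfc f d = cfc (fun x : ℝ => f 0 + (f 1 - f 0) * x) d := by
    apply cfc_congr
    intro x hx
    rcases hsub hx with h | h
    · simp_all
    · simp only [Set.mem_singleton_iff] at h; subst h; ring
  rw [h1, cfc_add d (fun _ : ℝ => f 0) (fun x : ℝ => (f 1 - f 0) * x) (contOn _) (contOn _),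
    cfc_const (f 0) d hsa,
    cfc_const_mul (f 1 - f 0) (fun x : ℝ => x) d (contOn _), cfc_id' ℝ d]

lemma specProj_eq {a : Mat n} (ha : a.IsHermitian) (S : Set ℝ) :
    specProj a S = cfc (Set.indicator S fun _ => (1 : ℝ)) a := by
  rw [specProj, dif_pos ha]; exact (ha.cfc_eq _).symm

lemma specProj_psd {a : Mat n} (ha : a.IsHermitian) (S : Set ℝ) :
    (specProj a S).PosSemidef := by
  rw [specProj_eq ha]
  exact cfc_psd ha fun x => Set.indicator_nonneg (by intros; norm_num) x

lemma specProj_memS {a : Mat n} (hmem : a ∈ S) (ha : a.IsHermitian) (X : Set ℝ) :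
    specProj a X ∈ S := by
  rw [specProj_eq ha]; exact cfc_memS hmem ha _

lemma specProj_herm {a : Mat n} (ha : a.IsHermitian) (X : Set ℝ) :
    (specProj a X).IsHermitian := by
  rw [specProj_eq ha]
  have : IsSelfAdjoint (cfc (Set.indicator X fun _ => (1 : ℝ)) a) := cfc_predicate _ _
  rw [Matrix.IsHermitian, ← Matrix.star_eq_conjTranspose]
  exact this

lemma specProj_Ioi {a : Mat n} (ha : a.IsHermitian) (t : ℝ) :
    specProj a (Set.Ioi t) = 1 - specProj a (Set.Iic t) := by
  rw [specProj_eq ha, specProj_eq ha]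
  have h := cfc_sub (fun _ : ℝ => (1 : ℝ)) (Set.indicator (Set.Iic t) fun _ => (1 : ℝ)) a
    (contOn _) (contOn _)
  rw [cfc_const (1 : ℝ) a ha.isSelfAdjoint, map_one] at h
  rw [← h]
  apply cfc_congr
  intro x _
  by_cases hx : x ≤ t <;> simp [Set.indicator, hx, not_le]

lemma specProj_mono {a : Mat n} (ha : a.IsHermitian) {x y : ℝ} (hxy : x ≤ y) :
    (specProj a (Set.Iic y) - specProj a (Set.Iic x)).PosSemidef := by
  rw [specProj_eq ha, specProj_eq ha]
  have h := cfc_sub (Set.indicator (Set.Iic y) fun _ => (1 : ℝ))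
    (Set.indicator (Set.Iic x) fun _ => (1 : ℝ)) a (contOn _) (contOn _)
  rw [← h]
  apply cfc_psd ha
  intro t
  by_cases h1 : t ≤ x
  · simp [Set.indicator, h1, le_trans h1 hxy]
  · by_cases h2 : t ≤ y <;> simp [Set.indicator, h1, h2]

lemma specProj_all_one {a : Mat n} (ha : a.IsHermitian) {x : ℝ}
    (hx : ∀ i, ha.eigenvalues i ≤ x) : specProj a (Set.Iic x) = 1 := by
  rw [specProj_eq ha, ← cfc_one ℝ a ha.isSelfAdjoint]
  apply cfc_congr
  intro y hy
  rw [Matrix.IsHermitian.spectrum_real_eq_range_eigenvalues ha] at hy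
  obtain ⟨i, rfl⟩ := hy
  simp [Set.indicator, hx i]

lemma specProj_projection {a : Mat n} (ha : a.IsHermitian) (X : Set ℝ) :
    IsProjection (specProj a X) := by
  constructor
  · have := specProj_herm ha X
    rwa [Matrix.IsHermitian, ← Matrix.star_eq_conjTranspose] at this
  · rw [specProj_eq ha]
    have h := cfc_mul (Set.indicator X fun _ => (1 : ℝ)) (Set.indicator X fun _ => (1 : ℝ)) a
      (contOn _) (contOn _)
    rw [← h]
    apply cfc_congr
    intro x _
    by_cases h : x ∈ X <;> simp [Set.indicator, h]

lemma lam_sub (lam : S →⋆ₐ[ℂ] ℂ) {u v : Mat n} (hu : u ∈ S) (hv : v ∈ S) (h : u - v ∈ S) :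
    lam ⟨u - v, h⟩ = lam ⟨u, hu⟩ - lam ⟨v, hv⟩ := by
  rw [show (⟨u - v, h⟩ : S) = ⟨u, hu⟩ - ⟨v, hv⟩ from Subtype.ext rfl, map_sub]

lemma lam_one (lam : S →⋆ₐ[ℂ] ℂ) (h : (1 : Mat n) ∈ S) : lam ⟨1, h⟩ = 1 := by
  rw [show (⟨1, h⟩ : S) = 1 from Subtype.ext rfl, map_one]

lemma affine_eq_cfc (hn : 0 < n) {d : Mat n} (hd : IsProjection d) (s K : ℝ) :
    algebraMap ℝ (Mat n) s + (K - s) • d = cfc (fun x : ℝ => s + (K - s) * x) d := by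
  rw [cfc_proj hn hd, show s + (K - s) * 0 = s by ring, show s + (K - s) * 1 - s = K - s by ring]

lemma affine_herm (hn : 0 < n) {d : Mat n} (hd : IsProjection d) (s K : ℝ) :
    (algebraMap ℝ (Mat n) s + (K - s) • d).IsHermitian := by
  rw [affine_eq_cfc hn hd]
  have h : IsSelfAdjoint (cfc (fun x : ℝ => s + (K - s) * x) d) := cfc_predicate _ d
  rw [Matrix.IsHermitian, ← Matrix.star_eq_conjTranspose]
  exact h

lemma affine_mem {d : Mat n} (hd : d ∈ S) (s K : ℝ) :
    algebraMap ℝ (Mat n) s + (K - s) • d ∈ S := by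
  apply add_mem
  · rw [IsScalarTower.algebraMap_apply ℝ ℂ (Mat n)]
    exact S.algebraMap_mem _
  · rw [← algebraMap_smul ℂ (K - s) d]
    exact S.smul_mem hd _

lemma specProj_affine (hn : 0 < n) {d : Mat n} (hd : IsProjection d) (s K : ℝ) (X : Set ℝ) :
    specProj (algebraMap ℝ (Mat n) s + (K - s) • d) X
      = algebraMap ℝ (Mat n) (X.indicator (fun _ => (1 : ℝ)) s)
        + (X.indicator (fun _ => (1 : ℝ)) K - X.indicator (fun _ => (1 : ℝ)) s) • d := by
  rw [specProj_eq (affine_herm hn hd s K), affine_eq_cfc hn hd]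
  rw [← cfc_comp (Set.indicator X fun _ => (1 : ℝ)) (fun x : ℝ => s + (K - s) * x) d (show IsSelfAdjoint d from hd.1)
    ((Matrix.finite_real_spectrum.image _).continuousOn _) (contOn _)]
  rw [cfc_proj hn hd]
  have e0 : s + (K - s) * 0 = s := by ring
  have e1 : s + (K - s) * 1 = K := by ring
  simp only [Function.comp_apply, e0, e1]

end Aux

theorem aux_main {n : ℕ} (hn : 0 < n)
    (a : Mat n) (ha : a.IsHermitian) (C : StarSubalgebra ℂ (Mat n)) (s : ℝ)
    (dO : Mat n) (hdOmem : dO ∈ C) (hdOherm : dO.IsHermitian)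
    (hdOge : specLE a dO)
    (hdOleast : ∀ b ∈ C, b.IsHermitian → specLE a b → specLE dO b)
    (d : Mat n) (hdmem : d ∈ C) (hdproj : IsProjection d)
    (hdge : loewnerLE (specProj a (Set.Ioi s)) d)
    (hdleast : ∀ p ∈ C, IsProjection p →
      loewnerLE (specProj a (Set.Ioi s)) p → loewnerLE d p) :
    ∀ lam : C →⋆ₐ[ℂ] ℂ,
      ((s : ℂ) < lam ⟨dO, hdOmem⟩ → lam ⟨d, hdmem⟩ = 1) ∧
      (lam ⟨d, hdmem⟩ = 1 → (s : ℂ) ≤ lam ⟨dO, hdOmem⟩) := by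
  intro lam
  obtain ⟨r, hrspec, hrlam⟩ := Aux.lam_real lam hdOmem hdOherm
  have hd01 : lam ⟨d, hdmem⟩ = 0 ∨ lam ⟨d, hdmem⟩ = 1 := by
    have hsq : lam ⟨d, hdmem⟩ * lam ⟨d, hdmem⟩ = lam ⟨d, hdmem⟩ := by
      rw [← map_mul]; congr 1; exact Subtype.ext hdproj.2
    have h2 : lam ⟨d, hdmem⟩ * (lam ⟨d, hdmem⟩ - 1) = 0 := by ring_nf; linear_combination hsq
    rcases mul_eq_zero.mp h2 with h | h
    · exact Or.inl h
    · exact Or.inr (by linear_combination h)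
  -- value of lam on the spectral projection of dO at level t
  have hprojval : ∀ t : ℝ, ∀ hm : specProj dO (Set.Iic t) ∈ C,
      lam ⟨specProj dO (Set.Iic t), hm⟩
        = (((Set.Iic t).indicator (fun _ => (1 : ℝ)) r : ℝ) : ℂ) := by
    intro t hm
    have hm' : cfc (Set.indicator (Set.Iic t) fun _ => (1 : ℝ)) dO ∈ C :=
      Aux.cfc_memS hdOmem hdOherm _
    have heq : (⟨specProj dO (Set.Iic t), hm⟩ : C) = ⟨_, hm'⟩ :=
      Subtype.ext (Aux.specProj_eq hdOherm _)
    rw [heq, Aux.lam_cfc lam hdOmem hdOherm _ hrspec hrlam hm']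
  constructor
  · intro hslt
    have hsr : s < r := by rwa [hrlam, Complex.real_lt_real] at hslt
    rcases hd01 with h0 | h1
    swap
    · exact h1
    exfalso
    haveI : Nonempty (Fin n) := ⟨⟨0, hn⟩⟩
    set K := max s (Finset.univ.sup' Finset.univ_nonempty ha.eigenvalues) + 1 with hK
    have hsK : s < K := lt_of_le_of_lt (le_max_left _ _) (lt_add_one _)
    have hevK : ∀ i, ha.eigenvalues i ≤ K := fun i =>
      le_trans (le_trans (Finset.le_sup' _ (Finset.mem_univ i)) (le_max_right _ _))
        (le_of_lt (lt_add_one _))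
    set b := algebraMap ℝ (Mat n) s + (K - s) • d with hb
    have hbmem : b ∈ C := Aux.affine_mem hdmem s K
    have hbherm : b.IsHermitian := Aux.affine_herm hn hdproj s K
    have hble : specLE a b := by
      intro x
      have hbp := Aux.specProj_affine hn hdproj s K (Set.Iic x)
      show (specProj a (Set.Iic x) - specProj b (Set.Iic x)).PosSemidef
      rw [hb, hbp]
      by_cases h1x : x < s
      · rw [Set.indicator_of_notMem (by simp only [Set.mem_Iic]; linarith),
          Set.indicator_of_notMem (by simp only [Set.mem_Iic]; linarith)]
        simpa using Aux.specProj_psd ha (Set.Iic x)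
      · push_neg at h1x
        by_cases h2x : x < K
        · rw [Set.indicator_of_mem (by simpa using h1x),
            Set.indicator_of_notMem (by simp only [Set.mem_Iic]; linarith)]
          have hbp2 : algebraMap ℝ (Mat n) (1 : ℝ) + ((0 : ℝ) - 1) • d = 1 - d := by
            simp [neg_smul, sub_eq_add_neg]
          rw [hbp2]
          have hd1 : (d - specProj a (Set.Ioi s)).PosSemidef := hdge
          rw [Aux.specProj_Ioi ha s] at hd1
          have hd2 := Aux.specProj_mono ha h1x
          have hsum := hd1.add hd2
          convert hsum using 1
          abel
        · push_neg at h2x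
          rw [Set.indicator_of_mem (by simpa using h1x),
            Set.indicator_of_mem (by simp only [Set.mem_Iic]; linarith)]
          have hbp2 : algebraMap ℝ (Mat n) (1 : ℝ) + ((1 : ℝ) - 1) • d = 1 := by simp
          rw [hbp2, Aux.specProj_all_one ha (fun i => le_trans (hevK i) h2x), sub_self]
          exact Matrix.PosSemidef.zero
    have hle : (specProj dO (Set.Iic s) - specProj b (Set.Iic s)).PosSemidef :=
      hdOleast b hbmem hbherm hble s
    have hbps : specProj b (Set.Iic s) = 1 - d := by
      rw [hb, Aux.specProj_affine hn hdproj s K (Set.Iic s),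
        Set.indicator_of_mem (by simp),
        Set.indicator_of_notMem (by simp only [Set.mem_Iic]; linarith)]
      simp [neg_smul, sub_eq_add_neg]
    rw [hbps] at hle
    have hm1 : specProj dO (Set.Iic s) ∈ C := Aux.specProj_memS hdOmem hdOherm _
    have hm2 : (1 : Mat n) - d ∈ C := sub_mem (one_mem _) hdmem
    have hmem2 : specProj dO (Set.Iic s) - (1 - d) ∈ C := sub_mem hm1 hm2
    have hpos := Aux.lam_nonneg lam hmem2 hle
    rw [Aux.lam_sub lam hm1 hm2 hmem2, Aux.lam_sub lam (one_mem _) hdmem hm2,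
      Aux.lam_one lam (one_mem _), h0, hprojval s hm1,
      Set.indicator_of_notMem (by simp only [Set.mem_Iic]; linarith)] at hpos
    norm_num at hpos
  · intro h1
    rw [hrlam, Complex.real_le_real]
    by_contra hrs
    push_neg at hrs
    set e := specProj dO (Set.Iic r) with he
    have hemem : e ∈ C := Aux.specProj_memS hdOmem hdOherm _
    have hpmem : (1 : Mat n) - e ∈ C := sub_mem (one_mem _) hemem
    have heproj : IsProjection e := Aux.specProj_projection hdOherm _
    have hpproj : IsProjection (1 - e) := by
      constructor
      · rw [star_sub, star_one, heproj.1]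
      · calc (1 - e) * (1 - e) = 1 - e - e + e * e := by noncomm_ring
          _ = 1 - e := by rw [heproj.2]; abel
    have hge : loewnerLE (specProj a (Set.Ioi s)) (1 - e) := by
      show ((1 - e) - specProj a (Set.Ioi s)).PosSemidef
      rw [Aux.specProj_Ioi ha s]
      have h2 : (specProj a (Set.Iic r) - e).PosSemidef := hdOge r
      have h3 := Aux.specProj_mono ha (le_of_lt hrs)
      have hsum := h2.add h3
      convert hsum using 1
      abel
    have hdp : ((1 - e) - d).PosSemidef := hdleast (1 - e) hpmem hpproj hge
    have hmem2 : (1 : Mat n) - e - d ∈ C := sub_mem hpmem hdmem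
    have hpos := Aux.lam_nonneg lam hmem2 hdp
    rw [Aux.lam_sub lam hpmem hdmem hmem2, Aux.lam_sub lam (one_mem _) hemem hpmem,
      Aux.lam_one lam (one_mem _), h1, hprojval r hemem,
      Set.indicator_of_mem (by simp)] at hpos
    norm_num at hpos

/-- Relation between the outer daseinisation `δᵒ(a)_C` and the outer
daseinisation of the spectral projection `χ_{(s,∞)}(a)` in `C`, evaluated at characters. -/
theorem outer_daseinisation_vs_proj {n : ℕ} (hn : 0 < n)
    (a : Mat n) (ha : a.IsHermitian) (C : Ctx n) (s : ℝ)
    (dO : Mat n) (hdOmem : dO ∈ C.alg) (hdOherm : dO.IsHermitian)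
    (hdOge : specLE a dO)
    (hdOleast : ∀ b ∈ C.alg, b.IsHermitian → specLE a b → specLE dO b)
    (d : Mat n) (hdmem : d ∈ C.alg) (hdproj : IsProjection d)
    (hdge : loewnerLE (specProj a (Set.Ioi s)) d)
    (hdleast : ∀ p ∈ C.alg, IsProjection p →
      loewnerLE (specProj a (Set.Ioi s)) p → loewnerLE d p) :
    ∀ lam : Character C.alg,
      ((s : ℂ) < lam ⟨dO, hdOmem⟩ → lam ⟨d, hdmem⟩ = 1) ∧
      (lam ⟨d, hdmem⟩ = 1 → (s : ℂ) ≤ lam ⟨dO, hdOmem⟩) :=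
  aux_main hn a ha C.alg s dO hdOmem hdOherm hdOge hdOleast d hdmem hdproj hdge hdleast

end
end

section
/- Let A = M_n(ℂ), let a ∈ A be Hermitian, let C be a context and let s, r ∈ ℝ with s < r. Suppose d_i = δⁱ(a)_C and d_o = δᵒ(a)_C are the inner and outer daseinisations of a in C (the ≤ₛ-greatest element of {b ∈ C Hermitian : b ≤ₛ a} and the ≤ₛ-least element of {b ∈ C Hermitian : a ≤ₛ b}, respectively), and suppose d₁ is the least projection of C above χ_{(−∞,r)}(a) and d₂ is the least projection of C above χ_{(s,∞)}(a), in the Löwner order. Then for every character λ of C: (i) if λ(d_i) < r and λ(d_o) > s, then λ(d₁) = 1 and λ(d₂) = 1; and (ii) if λ(d₁) = 1 and λ(d₂) = 1, then λ(d_i) ≤ r and λ(d_o) ≥ s. -/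
open scoped ComplexOrder

noncomputable section

section AuxDaseinisation
open Matrix Polynomial

lemma myContOn (f : ℝ → ℝ) (s : Set ℝ) (hs : s.Finite) : ContinuousOn f s := by
  rw [continuousOn_iff_continuous_restrict]
  have : Finite s := hs
  exact continuous_of_discreteTopology

lemma specContOn {n : ℕ} (f : ℝ → ℝ) (a : Mat n) : ContinuousOn f (spectrum ℝ a) :=
  myContOn f _ a.finite_real_spectrum

lemma specProj_eq {n : ℕ} {a : Mat n} (ha : a.IsHermitian) (S : Set ℝ) :
    specProj a S = cfc (Set.indicator S fun _ => (1 : ℝ)) a := by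
  rw [specProj, dif_pos ha, ha.cfc_eq]

lemma cfc_herm {n : ℕ} (f : ℝ → ℝ) (a : Mat n) : (cfc f a).IsHermitian :=
  cfc_predicate (R := ℝ) f a

lemma cfc_psd {n : ℕ} {a : Mat n} (ha : a.IsHermitian) {f : ℝ → ℝ} (hf : ∀ x, 0 ≤ f x) :
    (cfc f a).PosSemidef := by
  rw [ha.cfc_eq, Matrix.IsHermitian.cfc]
  rw [Unitary.conjStarAlgAut_apply, Matrix.star_eq_conjTranspose]
  refine Matrix.PosSemidef.mul_mul_conjTranspose_same ?_ _
  refine Matrix.posSemidef_diagonal_iff.mpr fun i => ?_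
  show (0:ℂ) ≤ ((f (ha.eigenvalues i) : ℝ) : ℂ)
  exact Complex.zero_le_real.mpr (hf _)

lemma specProj_herm {n : ℕ} {a : Mat n} (ha : a.IsHermitian) (S : Set ℝ) :
    (specProj a S).IsHermitian := by
  rw [specProj_eq ha]; exact cfc_herm _ _

lemma indicator_mul_self (S : Set ℝ) (x : ℝ) :
    Set.indicator S (fun _ => (1:ℝ)) x * Set.indicator S (fun _ => (1:ℝ)) x
      = Set.indicator S (fun _ => (1:ℝ)) x := by
  by_cases hx : x ∈ S <;> simp [hx]

lemma specProj_isProj {n : ℕ} {a : Mat n} (ha : a.IsHermitian) (S : Set ℝ) :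
    IsProjection (specProj a S) := by
  refine ⟨(specProj_herm ha S).symm ▸ (specProj_herm ha S), ?_⟩
  rw [specProj_eq ha, ← cfc_mul _ _ a (specContOn _ a) (specContOn _ a)]
  exact cfc_congr fun x _ => indicator_mul_self S x

lemma specProj_psd {n : ℕ} {a : Mat n} (ha : a.IsHermitian) (S : Set ℝ) :
    (specProj a S).PosSemidef := by
  rw [specProj_eq ha]
  exact cfc_psd ha fun x => Set.indicator_nonneg (fun _ _ => zero_le_one) x

lemma specProj_mono {n : ℕ} {a : Mat n} (ha : a.IsHermitian) {S T : Set ℝ} (hST : S ⊆ T) :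
    loewnerLE (specProj a S) (specProj a T) := by
  rw [loewnerLE, specProj_eq ha, specProj_eq ha,
    ← cfc_sub _ _ a (specContOn _ a) (specContOn _ a)]
  refine cfc_psd ha fun x => ?_
  by_cases hx : x ∈ S
  · simp [hx, hST hx]
  · by_cases hx' : x ∈ T <;> simp [hx, hx']

lemma specProj_compl {n : ℕ} {a : Mat n} (ha : a.IsHermitian) (S : Set ℝ) :
    specProj a Sᶜ = 1 - specProj a S := by
  rw [eq_sub_iff_add_eq, specProj_eq ha, specProj_eq ha,
    ← cfc_add a _ _ (specContOn _ a) (specContOn _ a)]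
  have : (fun x => Set.indicator Sᶜ (fun _ => (1:ℝ)) x + Set.indicator S (fun _ => (1:ℝ)) x)
      = fun _ => (1:ℝ) := by
    funext x
    by_cases hx : x ∈ S <;> simp [hx]
  rw [this, cfc_const_one ℝ a]

lemma specProj_le_one {n : ℕ} {a : Mat n} (ha : a.IsHermitian) (S : Set ℝ) :
    loewnerLE (specProj a S) 1 := by
  have h := specProj_psd ha Sᶜ
  rwa [specProj_compl ha] at h

lemma specProj_eq_one {n : ℕ} {a : Mat n} (ha : a.IsHermitian) {S : Set ℝ}
    (h : spectrum ℝ a ⊆ S) : specProj a S = 1 := by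
  rw [specProj_eq ha]
  have : (spectrum ℝ a).EqOn (Set.indicator S fun _ => (1:ℝ)) (fun _ => 1) := fun x hx => by
    simp [Set.indicator_of_mem (h hx)]
  rw [cfc_congr this, cfc_const_one ℝ a]

lemma specProj_eq_zero {n : ℕ} {a : Mat n} (ha : a.IsHermitian) {S : Set ℝ}
    (h : ∀ t ∈ spectrum ℝ a, t ∉ S) : specProj a S = 0 := by
  rw [specProj_eq ha]
  have : (spectrum ℝ a).EqOn (Set.indicator S fun _ => (1:ℝ)) (fun _ => 0) := fun x hx => by
    simp [Set.indicator_of_notMem (h x hx)]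
  rw [cfc_congr this, cfc_const_zero ℝ a]

lemma loewner_trans {n : ℕ} {a b c : Mat n} (h1 : loewnerLE a b) (h2 : loewnerLE b c) :
    loewnerLE a c := by
  have := h2.add h1
  rwa [loewnerLE, ← sub_add_sub_cancel c b a]

lemma loewner_one_sub {n : ℕ} {a b : Mat n} (h : loewnerLE a b) :
    loewnerLE (1 - b) (1 - a) := by
  have : (1 - a) - (1 - b) = b - a := by abel
  rw [loewnerLE, this]; exact h

lemma psd_antisymm {n : ℕ} {A : Mat n} (h1 : A.PosSemidef) (h2 : (-A).PosSemidef) : A = 0 := by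
  have hv : ∀ x, A *ᵥ x = 0 := by
    intro x
    refine (h1.dotProduct_mulVec_zero_iff x).mp ?_
    have ha := h1.dotProduct_mulVec_nonneg x
    have hb := h2.dotProduct_mulVec_nonneg x
    rw [Matrix.neg_mulVec, dotProduct_neg] at hb
    exact le_antisymm (neg_nonneg.mp hb) ha
  ext i j
  have := congrFun (hv (Pi.single j 1)) i
  simpa using this

lemma isProj_herm {n : ℕ} {p : Mat n} (hp : IsProjection p) : p.IsHermitian := hp.1

lemma isProj_psd {n : ℕ} {p : Mat n} (hp : IsProjection p) : p.PosSemidef := by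
  have hh : pᴴ = p := by rw [← Matrix.star_eq_conjTranspose, hp.1]
  have h : p = pᴴ * p := by rw [hh, hp.2]
  rw [h]
  exact Matrix.posSemidef_conjTranspose_mul_self p

lemma isProj_compl {n : ℕ} {p : Mat n} (hp : IsProjection p) : IsProjection (1 - p) := by
  constructor
  · rw [star_sub, star_one, hp.1]
  · have := hp.2
    simp only [mul_sub, sub_mul, one_mul, mul_one, this]
    abel

lemma proj_mul_eq {n : ℕ} {p q : Mat n} (hp : IsProjection p) (hq : IsProjection q)
    (hle : loewnerLE p q) : q * p = p := by
  have hpH : pᴴ = p := by rw [← Matrix.star_eq_conjTranspose, hp.1]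
  have hq1 : (1 - q).PosSemidef := isProj_psd (isProj_compl hq)
  have k2 : (p * (1 - q) * pᴴ).PosSemidef := hq1.mul_mul_conjTranspose_same p
  have k3 : (p * (q - p) * pᴴ).PosSemidef := hle.mul_mul_conjTranspose_same p
  have e2 : p * (1 - q) * pᴴ = p - p * q * p := by
    rw [hpH, mul_sub, mul_one, sub_mul, hp.2]
  have e3 : p * (q - p) * pᴴ = p * q * p - p := by
    rw [hpH, mul_sub, sub_mul, hp.2, hp.2]
  rw [e2] at k2
  rw [e3] at k3
  have h0 : p - p * q * p = 0 := psd_antisymm k2 (by rwa [neg_sub])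
  have hx : ((1 - q) * p)ᴴ * ((1 - q) * p) = p - p * q * p := by
    rw [Matrix.conjTranspose_mul, hpH, Matrix.conjTranspose_sub, Matrix.conjTranspose_one, (by rw [← Matrix.star_eq_conjTranspose, hq.1] : qᴴ = q)]
    calc p * (1 - q) * ((1 - q) * p) = p * ((1 - q) * (1 - q)) * p := by
          rw [mul_assoc, mul_assoc, mul_assoc]
      _ = p * (1 - q) * p := by rw [(isProj_compl hq).2]
      _ = p - p * q * p := by rw [mul_sub, mul_one, sub_mul, hp.2]
  have hz : (1 - q) * p = 0 := Matrix.conjTranspose_mul_self_eq_zero.mp (by rw [hx, h0])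
  rw [sub_mul, one_mul, sub_eq_zero] at hz
  exact hz.symm

/-- interpolating polynomial for `f` on the spectrum of `a` -/
def interpPoly {n : ℕ} (a : Mat n) (f : ℝ → ℝ) : ℝ[X] :=
  Lagrange.interpolate (Matrix.finite_real_spectrum (A := a)).toFinset id f

lemma interpPoly_eval {n : ℕ} (a : Mat n) (f : ℝ → ℝ) {t : ℝ} (ht : t ∈ spectrum ℝ a) :
    (interpPoly a f).eval t = f t := by
  have ht' : t ∈ (Matrix.finite_real_spectrum (A := a)).toFinset := by
    simpa [Set.Finite.mem_toFinset] using ht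
  simpa [interpPoly] using Lagrange.eval_interpolate_at_node f (Set.injOn_id _) ht'

lemma cfc_eq_aeval {n : ℕ} {a : Mat n} (ha : a.IsHermitian) (f : ℝ → ℝ) :
    cfc f a = aeval a (interpPoly a f) := by
  have hsa : IsSelfAdjoint a := ha
  rw [← cfc_polynomial (R := ℝ) (interpPoly a f) a hsa]
  exact cfc_congr fun t ht => (interpPoly_eval a f ht).symm

lemma aeval_mem {n : ℕ} {C : StarSubalgebra ℂ (Mat n)} {a : Mat n} (haC : a ∈ C)
    (q : ℝ[X]) : aeval a q ∈ C := by
  have h1 : aeval a q ∈ Algebra.adjoin ℝ {a} := by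
    rw [Algebra.adjoin_singleton_eq_range_aeval]
    exact ⟨q, rfl⟩
  have h2 : Algebra.adjoin ℝ {a} ≤ (C.toSubalgebra.restrictScalars ℝ) := by
    refine Algebra.adjoin_le ?_
    intro x hx
    rw [Set.mem_singleton_iff] at hx
    subst hx
    simpa [Subalgebra.mem_restrictScalars] using haC
  have := h2 h1
  simpa [Subalgebra.mem_restrictScalars] using this

lemma cfc_mem' {n : ℕ} {C : StarSubalgebra ℂ (Mat n)} {a : Mat n} (haC : a ∈ C)
    (ha : a.IsHermitian) (f : ℝ → ℝ) : cfc f a ∈ C := by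
  rw [cfc_eq_aeval ha f]
  exact aeval_mem haC _

lemma specProj_mem {n : ℕ} {C : StarSubalgebra ℂ (Mat n)} {a : Mat n} (haC : a ∈ C)
    (ha : a.IsHermitian) (S : Set ℝ) : specProj a S ∈ C := by
  rw [specProj_eq ha]
  exact cfc_mem' haC ha _

/-- The key character lemma. -/
lemma char_spec {n : ℕ} {C : StarSubalgebra ℂ (Mat n)} {a : Mat n}
    (haC : a ∈ C) (ha : a.IsHermitian) (lam : Character C) :
    ∃ t : ℝ, lam ⟨a, haC⟩ = (t : ℂ) ∧
      ∀ f : ℝ → ℝ, ∀ hm : cfc f a ∈ C, lam ⟨cfc f a, hm⟩ = (f t : ℂ) := by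
  have hsa : IsSelfAdjoint a := ha
  set x : C := ⟨a, haC⟩ with hx
  set ξ : ℂ := lam x with hξ
  set s : Finset ℝ := (Matrix.finite_real_spectrum (A := a)).toFinset with hs
  have key : ∀ (q : ℝ[X]) (hm : aeval a q ∈ C),
      lam ⟨aeval a q, hm⟩ = (q.map (algebraMap ℝ ℂ)).eval ξ := by
    intro q hm
    have h3 := aeval_algHom_apply C.subtype x (q.map (algebraMap ℝ ℂ))
    have hq : aeval a (q.map (algebraMap ℝ ℂ)) = aeval a q :=
      Polynomial.aeval_map_algebraMap ℂ a q
    have hval : ((aeval x (q.map (algebraMap ℝ ℂ)) : C) : Mat n) = aeval a q := by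
      rw [← hq]
      exact h3.symm
    have hsub : (⟨aeval a q, hm⟩ : C) = aeval x (q.map (algebraMap ℝ ℂ)) :=
      Subtype.ext hval.symm
    rw [hsub, ← aeval_algHom_apply lam x (q.map (algebraMap ℝ ℂ))]
    rw [aeval_def, eval₂_eq_eval_map, Algebra.algebraMap_self, Polynomial.map_id]
  -- the vanishing polynomial
  set P : ℝ[X] := ∏ u ∈ s, (X - Polynomial.C u) with hP
  have hPa : aeval a P = 0 := by
    rw [← cfc_polynomial (R := ℝ) P a hsa]
    have h4 : (spectrum ℝ a).EqOn P.eval (fun _ => 0) := by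
      intro t ht
      have ht' : t ∈ s := by simpa [hs, Set.Finite.mem_toFinset] using ht
      simp only [hP, eval_prod, eval_sub, eval_X, eval_C]
      exact Finset.prod_eq_zero ht' (sub_self t)
    rw [cfc_congr h4, cfc_const_zero ℝ a]
  have hPm : aeval a P ∈ C := by rw [hPa]; exact zero_mem _
  have h0 : (P.map (algebraMap ℝ ℂ)).eval ξ = 0 := by
    rw [← key P hPm]
    have h5 : (⟨aeval a P, hPm⟩ : C) = 0 := Subtype.ext (by simp [hPa])
    rw [h5, map_zero]
  have h6 : ∃ u ∈ s, ξ - (u : ℂ) = 0 := by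
    rw [hP] at h0
    simp only [Polynomial.map_prod, Polynomial.map_sub, map_X, map_C, eval_prod, eval_sub,
      eval_X, eval_C] at h0
    simpa using Finset.prod_eq_zero_iff.mp h0
  obtain ⟨t, hts, hteq⟩ := h6
  have hxi : ξ = (t : ℂ) := sub_eq_zero.mp hteq
  have htspec : t ∈ spectrum ℝ a := (Set.Finite.mem_toFinset _).mp hts
  refine ⟨t, hxi, ?_⟩
  intro f hm
  have hm' : aeval a (interpPoly a f) ∈ C := by rw [← cfc_eq_aeval ha f]; exact hm
  have h7 : (⟨cfc f a, hm⟩ : C) = ⟨aeval a (interpPoly a f), hm'⟩ :=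
    Subtype.ext (cfc_eq_aeval ha f)
  rw [h7, key _ hm', hxi, Polynomial.eval_map]
  have h8 : ((t : ℝ) : ℂ) = algebraMap ℝ ℂ t := rfl
  rw [h8, Polynomial.eval₂_at_apply, interpPoly_eval a f htspec]
  rfl

lemma char_one_of_loewner {n : ℕ} {C : StarSubalgebra ℂ (Mat n)} {p q : Mat n}
    (hp : p ∈ C) (hq : q ∈ C) (hpp : IsProjection p) (hqq : IsProjection q)
    (hle : loewnerLE p q) (lam : Character C) (h1 : lam ⟨p, hp⟩ = 1) : lam ⟨q, hq⟩ = 1 := by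
  have hmul : q * p = p := proj_mul_eq hpp hqq hle
  have h2 : (⟨q, hq⟩ : C) * ⟨p, hp⟩ = ⟨p, hp⟩ := Subtype.ext (by simpa using hmul)
  have h3 := congrArg lam h2
  rw [_root_.map_mul, h1, mul_one] at h3
  exact h3

lemma char_proj_cases {n : ℕ} {C : StarSubalgebra ℂ (Mat n)} {p : Mat n}
    (hp : p ∈ C) (hpp : IsProjection p) (lam : Character C) :
    lam ⟨p, hp⟩ = 0 ∨ lam ⟨p, hp⟩ = 1 := by
  have h2 : (⟨p, hp⟩ : C) * ⟨p, hp⟩ = ⟨p, hp⟩ := Subtype.ext (by simpa using hpp.2)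
  have h3 := congrArg lam h2
  rw [_root_.map_mul] at h3
  have h4 : lam ⟨p, hp⟩ * (lam ⟨p, hp⟩ - 1) = 0 := by
    rw [mul_sub, h3, mul_one, sub_self]
  rcases mul_eq_zero.mp h4 with h | h
  · exact Or.inl h
  · exact Or.inr (by rwa [sub_eq_zero] at h)

lemma proj_spectrum {n : ℕ} (hn : 0 < n) {e : Mat n} (he : IsProjection e) :
    spectrum ℝ e ⊆ {0, 1} := by
  have hsa : IsSelfAdjoint e := he.1
  have h2 : cfc (fun t : ℝ => t * t - t) e = 0 := by
    rw [cfc_sub (fun t : ℝ => t * t) (fun t : ℝ => t) e (specContOn _ e) (specContOn _ e),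
      cfc_mul _ _ e (specContOn _ e) (specContOn _ e), cfc_id' ℝ e, he.2, sub_self]
  haveI : Nonempty (Fin n) := ⟨⟨0, hn⟩⟩
  have h3 := cfc_map_spectrum (R := ℝ) (fun t => t * t - t) e hsa (specContOn _ e)
  rw [h2] at h3
  intro t ht
  have h5 : t * t - t ∈ spectrum ℝ (0 : Mat n) := h3 ▸ Set.mem_image_of_mem _ ht
  rw [spectrum.zero_eq] at h5
  have h6 : t * (t - 1) = 0 := by
    have : t * t - t = 0 := h5
    ring_nf
    ring_nf at this
    linarith
  rcases mul_eq_zero.mp h6 with h | h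
  · exact Or.inl h
  · exact Or.inr (by rwa [sub_eq_zero] at h)

lemma cfc_proj_eq {n : ℕ} (hn : 0 < n) {e : Mat n} (he : IsProjection e) (f : ℝ → ℝ) :
    cfc f e = algebraMap ℝ (Mat n) (f 0) + (f 1 - f 0) • e := by
  have hsa : IsSelfAdjoint e := he.1
  have hspec := proj_spectrum hn he
  have h1 : cfc f e = cfc (fun t => f 0 + (f 1 - f 0) * t) e := by
    refine cfc_congr fun t ht => ?_
    rcases hspec ht with h | h
    · subst h; simp
    · rw [Set.mem_singleton_iff] at h
      subst h
      show f 1 = f 0 + (f 1 - f 0) * 1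
      ring
  rw [h1, cfc_const_add (f 0) (fun t => (f 1 - f 0) * t) e (specContOn _ e) hsa,
    cfc_const_mul (f 1 - f 0) (fun t : ℝ => t) e (specContOn _ e), cfc_id' ℝ e]

lemma char_specProj {n : ℕ} {C : StarSubalgebra ℂ (Mat n)} {a : Mat n} (haC : a ∈ C)
    (ha : a.IsHermitian) (lam : Character C) {t : ℝ}
    (ht : lam ⟨a, haC⟩ = (t : ℂ)) (hchar : ∀ f : ℝ → ℝ, ∀ hm : cfc f a ∈ C,
      lam ⟨cfc f a, hm⟩ = (f t : ℂ)) (S : Set ℝ) :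
    lam ⟨specProj a S, specProj_mem haC ha S⟩
      = ((Set.indicator S (fun _ => (1:ℝ)) t : ℝ) : ℂ) := by
  have h1 : (⟨specProj a S, specProj_mem haC ha S⟩ : C)
      = ⟨cfc (Set.indicator S fun _ => (1:ℝ)) a, cfc_mem' haC ha _⟩ :=
    Subtype.ext (specProj_eq ha S)
  rw [h1, hchar _ _]

lemma part_ii_d1 {n : ℕ} {a : Mat n} (ha : a.IsHermitian) {C : StarSubalgebra ℂ (Mat n)}
    {r : ℝ} {dI : Mat n} (hdImem : dI ∈ C) (hdIherm : dI.IsHermitian)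
    (hdIle : specLE dI a)
    {d₁ : Mat n} (hd₁mem : d₁ ∈ C) (hd₁proj : IsProjection d₁)
    (hd₁least : ∀ p ∈ C, IsProjection p →
      loewnerLE (specProj a (Set.Iio r)) p → loewnerLE d₁ p)
    (lam : Character C) (h1 : lam ⟨d₁, hd₁mem⟩ = 1) :
    lam ⟨dI, hdImem⟩ ≤ (r : ℂ) := by
  obtain ⟨t₀, ht₀, hchar⟩ := char_spec hdImem hdIherm lam
  set q : Mat n := specProj dI (Set.Iic r) with hq
  have hqm : q ∈ C := specProj_mem hdImem hdIherm _
  have hqproj : IsProjection q := specProj_isProj hdIherm _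
  have hle : loewnerLE d₁ q := by
    refine hd₁least q hqm hqproj ?_
    refine loewner_trans (specProj_mono ha (Set.Iio_subset_Iic_self)) ?_
    exact hdIle r
  have hq1 : lam ⟨q, hqm⟩ = 1 :=
    char_one_of_loewner hd₁mem hqm hd₁proj hqproj hle lam h1
  have hval := char_specProj hdImem hdIherm lam ht₀ hchar (Set.Iic r)
  rw [hq1] at hval
  by_contra hcon
  have ht0r : ¬ t₀ ≤ r := by
    intro hle'
    exact hcon (ht₀ ▸ Complex.real_le_real.mpr hle')
  rw [Set.indicator_of_notMem (by simpa using ht0r)] at hval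
  simp at hval

lemma part_ii_d2 {n : ℕ} {a : Mat n} (ha : a.IsHermitian) {C : StarSubalgebra ℂ (Mat n)}
    {s : ℝ} {dO : Mat n} (hdOmem : dO ∈ C) (hdOherm : dO.IsHermitian)
    (hdOge : specLE a dO)
    {d₂ : Mat n} (hd₂mem : d₂ ∈ C) (hd₂proj : IsProjection d₂)
    (hd₂least : ∀ p ∈ C, IsProjection p →
      loewnerLE (specProj a (Set.Ioi s)) p → loewnerLE d₂ p)
    (lam : Character C) (h2 : lam ⟨d₂, hd₂mem⟩ = 1) :
    (s : ℂ) ≤ lam ⟨dO, hdOmem⟩ := by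
  obtain ⟨t₁, ht₁, hchar⟩ := char_spec hdOmem hdOherm lam
  by_contra hcon
  have hts : t₁ < s := by
    by_contra hts
    push_neg at hts
    exact hcon (ht₁ ▸ Complex.real_le_real.mpr hts)
  set p : Mat n := specProj dO (Set.Iic t₁) with hp
  have hpm : p ∈ C := specProj_mem hdOmem hdOherm _
  have hpproj : IsProjection p := specProj_isProj hdOherm _
  have hpm' : (1 : Mat n) - p ∈ C := sub_mem (one_mem _) hpm
  have hle : loewnerLE d₂ (1 - p) := by
    refine hd₂least _ hpm' (isProj_compl hpproj) ?_
    have e1 : loewnerLE (specProj a (Set.Ioi s)) (specProj a (Set.Ioi t₁)) :=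
      specProj_mono ha (Set.Ioi_subset_Ioi hts.le)
    have e2 : specProj a (Set.Ioi t₁) = 1 - specProj a (Set.Iic t₁) := by
      rw [← Set.compl_Iic, specProj_compl ha]
    have e3 : loewnerLE (1 - specProj a (Set.Iic t₁)) (1 - p) :=
      loewner_one_sub (hdOge t₁)
    exact loewner_trans e1 (e2 ▸ e3)
  have hone : lam ⟨(1 : Mat n) - p, hpm'⟩ = 1 :=
    char_one_of_loewner hd₂mem hpm' hd₂proj (isProj_compl hpproj) hle lam h2
  have hsplit : (⟨(1 : Mat n) - p, hpm'⟩ : C) = 1 - ⟨p, hpm⟩ := Subtype.ext rfl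
  rw [hsplit, map_sub, _root_.map_one] at hone
  have hpval := char_specProj hdOmem hdOherm lam ht₁ hchar (Set.Iic t₁)
  rw [Set.indicator_of_mem (by simp : t₁ ∈ Set.Iic t₁)] at hpval
  rw [hpval] at hone
  norm_num at hone

lemma specProj_cfc_proj {n : ℕ} (hn : 0 < n) {e : Mat n} (he : IsProjection e)
    (g : ℝ → ℝ) (S : Set ℝ) :
    specProj (cfc g e) S = algebraMap ℝ (Mat n) (Set.indicator S (fun _ => (1:ℝ)) (g 0))
      + (Set.indicator S (fun _ => (1:ℝ)) (g 1) - Set.indicator S (fun _ => (1:ℝ)) (g 0)) • e := by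
  have hsa : IsSelfAdjoint e := he.1
  have hbh : (cfc g e).IsHermitian := cfc_herm g e
  rw [specProj_eq hbh, ← cfc_comp (Set.indicator S fun _ => (1:ℝ)) g e hsa
    (myContOn _ _ ((Matrix.finite_real_spectrum (A := e)).image g)) (specContOn g e)]
  exact cfc_proj_eq hn he _

lemma part_i_d1 {n : ℕ} (hn : 0 < n) {a : Mat n} (ha : a.IsHermitian)
    {C : StarSubalgebra ℂ (Mat n)} {r : ℝ}
    {dI : Mat n} (hdImem : dI ∈ C) (hdIherm : dI.IsHermitian)
    (hdIgreatest : ∀ b ∈ C, b.IsHermitian → specLE b a → specLE b dI)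
    {d₁ : Mat n} (hd₁mem : d₁ ∈ C) (hd₁proj : IsProjection d₁)
    (hd₁ge : loewnerLE (specProj a (Set.Iio r)) d₁)
    (lam : Character C) (hlt : lam ⟨dI, hdImem⟩ < (r : ℂ)) : lam ⟨d₁, hd₁mem⟩ = 1 := by
  haveI : Nonempty (Fin n) := ⟨⟨0, hn⟩⟩
  obtain ⟨t₀, ht₀, hchar⟩ := char_spec hdImem hdIherm lam
  have ht₀r : t₀ < r := Complex.real_lt_real.mp (ht₀ ▸ hlt)
  set sa : Finset ℝ := (Matrix.finite_real_spectrum (A := a)).toFinset with hsa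
  have hsane : sa.Nonempty := ⟨ha.eigenvalues ⟨0, hn⟩,
    (Set.Finite.mem_toFinset _).mpr (ha.eigenvalues_mem_spectrum_real ⟨0, hn⟩)⟩
  set m : ℝ := min t₀ (sa.min' hsane) with hm
  have hmspec : ∀ u ∈ spectrum ℝ a, m ≤ u := fun u hu =>
    le_trans (min_le_right _ _) (sa.min'_le u ((Set.Finite.mem_toFinset _).mpr hu))
  have hmt₀ : m ≤ t₀ := min_le_left _ _
  set e : Mat n := 1 - d₁ with he
  have heproj : IsProjection e := isProj_compl hd₁proj
  have heC : e ∈ C := sub_mem (one_mem _) hd₁mem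
  have heherm : e.IsHermitian := isProj_herm heproj
  set g : ℝ → ℝ := fun t => m + (r - m) * t with hg
  have hg0 : g 0 = m := by simp [hg]
  have hg1 : g 1 = r := by simp [hg]
  set b : Mat n := cfc g e with hb
  have hbherm : b.IsHermitian := cfc_herm g e
  have hbC : b ∈ C := cfc_mem' heC heherm g
  have hPb : ∀ x : ℝ, specProj b (Set.Iic x)
      = algebraMap ℝ (Mat n) (Set.indicator (Set.Iic x) (fun _ => (1:ℝ)) m)
        + (Set.indicator (Set.Iic x) (fun _ => (1:ℝ)) r
           - Set.indicator (Set.Iic x) (fun _ => (1:ℝ)) m) • e := by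
    intro x
    rw [hb, specProj_cfc_proj hn heproj g _, hg0, hg1]
  have hPbmid : ∀ x : ℝ, m ≤ x → x < r → specProj b (Set.Iic x) = d₁ := by
    intro x hx hxr
    rw [hPb x, Set.indicator_of_mem (by simpa using hx),
      Set.indicator_of_notMem (by simpa using not_le.mpr hxr), _root_.map_one]
    rw [he]
    simp
  have hble : specLE b a := by
    intro x
    rcases lt_or_ge x m with hx | hx
    · have h1 : specProj a (Set.Iic x) = 0 := specProj_eq_zero ha fun t ht hmem =>
        absurd (le_trans (hmspec t ht) (by simpa using hmem) : m ≤ x) (not_le.mpr hx)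
      have h2 : specProj b (Set.Iic x) = 0 := by
        rw [hPb x, Set.indicator_of_notMem (by simpa using not_le.mpr hx),
          Set.indicator_of_notMem (by simpa using not_le.mpr (lt_trans (lt_of_lt_of_le hx hmt₀) ht₀r))]
        simp
      rw [loewnerLE, h1, h2, sub_zero]
      exact Matrix.PosSemidef.zero
    · rcases lt_or_ge x r with hxr | hxr
      · rw [hPbmid x hx hxr]
        exact loewner_trans (specProj_mono ha (fun t ht => lt_of_le_of_lt ht hxr)) hd₁ge
      · have h2 : specProj b (Set.Iic x) = 1 := by
          rw [hPb x, Set.indicator_of_mem (by simpa using hx),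
            Set.indicator_of_mem (by simpa using hxr)]
          simp
        rw [h2]
        exact specProj_le_one ha _
  have hbdI : specLE b dI := hdIgreatest b hbC hbherm hble
  have hled : loewnerLE (specProj dI (Set.Iic t₀)) d₁ := by
    have h3 := hbdI t₀
    rwa [hPbmid t₀ hmt₀ ht₀r] at h3
  have hval := char_specProj hdImem hdIherm lam ht₀ hchar (Set.Iic t₀)
  rw [Set.indicator_of_mem (show t₀ ∈ Set.Iic t₀ by simp)] at hval
  exact char_one_of_loewner (specProj_mem hdImem hdIherm _) hd₁mem
    (specProj_isProj hdIherm _) hd₁proj hled lam (by rw [hval]; norm_num)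

lemma part_i_d2 {n : ℕ} (hn : 0 < n) {a : Mat n} (ha : a.IsHermitian)
    {C : StarSubalgebra ℂ (Mat n)} {s : ℝ}
    {dO : Mat n} (hdOmem : dO ∈ C) (hdOherm : dO.IsHermitian)
    (hdOleast : ∀ b ∈ C, b.IsHermitian → specLE a b → specLE dO b)
    {d₂ : Mat n} (hd₂mem : d₂ ∈ C) (hd₂proj : IsProjection d₂)
    (hd₂ge : loewnerLE (specProj a (Set.Ioi s)) d₂)
    (lam : Character C) (hgt : (s : ℂ) < lam ⟨dO, hdOmem⟩) : lam ⟨d₂, hd₂mem⟩ = 1 := by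
  haveI : Nonempty (Fin n) := ⟨⟨0, hn⟩⟩
  obtain ⟨t₁, ht₁, hchar⟩ := char_spec hdOmem hdOherm lam
  have hst₁ : s < t₁ := Complex.real_lt_real.mp (ht₁ ▸ hgt)
  set sa : Finset ℝ := (Matrix.finite_real_spectrum (A := a)).toFinset with hsa
  have hsane : sa.Nonempty := ⟨ha.eigenvalues ⟨0, hn⟩,
    (Set.Finite.mem_toFinset _).mpr (ha.eigenvalues_mem_spectrum_real ⟨0, hn⟩)⟩
  set M : ℝ := max t₁ (sa.max' hsane) with hM
  have hMspec : ∀ u ∈ spectrum ℝ a, u ≤ M := fun u hu =>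
    le_trans (sa.le_max' u ((Set.Finite.mem_toFinset _).mpr hu)) (le_max_right _ _)
  have hMt₁ : t₁ ≤ M := le_max_left _ _
  have hsM : s < M := lt_of_lt_of_le hst₁ hMt₁
  set e : Mat n := 1 - d₂ with he
  have heproj : IsProjection e := isProj_compl hd₂proj
  have heC : e ∈ C := sub_mem (one_mem _) hd₂mem
  have heherm : e.IsHermitian := isProj_herm heproj
  set g : ℝ → ℝ := fun t => M + (s - M) * t with hg
  have hg0 : g 0 = M := by simp [hg]
  have hg1 : g 1 = s := by simp [hg]
  set b : Mat n := cfc g e with hb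
  have hbherm : b.IsHermitian := cfc_herm g e
  have hbC : b ∈ C := cfc_mem' heC heherm g
  have hPb : ∀ x : ℝ, specProj b (Set.Iic x)
      = algebraMap ℝ (Mat n) (Set.indicator (Set.Iic x) (fun _ => (1:ℝ)) M)
        + (Set.indicator (Set.Iic x) (fun _ => (1:ℝ)) s
           - Set.indicator (Set.Iic x) (fun _ => (1:ℝ)) M) • e := by
    intro x
    rw [hb, specProj_cfc_proj hn heproj g _, hg0, hg1]
  have hPbmid : ∀ x : ℝ, s ≤ x → x < M → specProj b (Set.Iic x) = e := by
    intro x hx hxM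
    rw [hPb x, Set.indicator_of_notMem (by simpa using not_le.mpr hxM),
      Set.indicator_of_mem (by simpa using hx)]
    simp
  have hble : specLE a b := by
    intro x
    rcases lt_or_ge x s with hx | hx
    · have h2 : specProj b (Set.Iic x) = 0 := by
        rw [hPb x, Set.indicator_of_notMem (by simpa using not_le.mpr (lt_trans hx hsM)),
          Set.indicator_of_notMem (by simpa using not_le.mpr hx)]
        simp
      rw [loewnerLE, h2, sub_zero]
      exact specProj_psd ha _
    · rcases lt_or_ge x M with hxM | hxM
      · rw [hPbmid x hx hxM]
        have e2 : specProj a (Set.Ioi s) = 1 - specProj a (Set.Iic s) := by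
          rw [← Set.compl_Iic, specProj_compl ha]
        have e3 : loewnerLE e (1 - specProj a (Set.Ioi s)) := by
          rw [he]
          exact loewner_one_sub hd₂ge
        have e4 : (1 : Mat n) - specProj a (Set.Ioi s) = specProj a (Set.Iic s) := by
          rw [e2]
          simp
        refine loewner_trans (e4 ▸ e3) (specProj_mono ha (fun t ht => le_trans ht hx))
      · have h2 : specProj b (Set.Iic x) = 1 := by
          rw [hPb x, Set.indicator_of_mem (by simpa using hxM),
            Set.indicator_of_mem (by simpa using (le_trans hst₁.le (le_trans hMt₁ hxM)))]
          simp
        have h1 : specProj a (Set.Iic x) = 1 := specProj_eq_one ha fun u hu =>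
          by simpa using le_trans (hMspec u hu) hxM
        rw [loewnerLE, h1, h2, sub_self]
        exact Matrix.PosSemidef.zero
  have hbdO : specLE dO b := hdOleast b hbC hbherm hble
  have hled : loewnerLE e (specProj dO (Set.Iic s)) := by
    have h3 := hbdO s
    rwa [hPbmid s le_rfl hsM] at h3
  rcases char_proj_cases hd₂mem hd₂proj lam with h0 | h1
  · exfalso
    have heval : lam ⟨e, heC⟩ = 1 := by
      have hsplit : (⟨e, heC⟩ : C) = 1 - ⟨d₂, hd₂mem⟩ := Subtype.ext rfl
      rw [hsplit, map_sub, _root_.map_one, h0, sub_zero]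
    have hone := char_one_of_loewner heC (specProj_mem hdOmem hdOherm _) heproj
      (specProj_isProj hdOherm _) hled lam heval
    have hval := char_specProj hdOmem hdOherm lam ht₁ hchar (Set.Iic s)
    rw [Set.indicator_of_notMem (by simpa using not_le.mpr hst₁)] at hval
    rw [hone] at hval
    norm_num at hval
  · exact h1

end AuxDaseinisation

/-- Combined relation between the two-sided daseinisation of `a` in `C` and
the outer daseinisations of the spectral projections `χ_{(-∞,r)}(a)` and `χ_{(s,∞)}(a)`. -/
theorem two_sided_daseinisation_vs_proj {n : ℕ} (hn : 0 < n)
    (a : Mat n) (ha : a.IsHermitian) (C : Ctx n) (s r : ℝ) (hsr : s < r)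
    (dI : Mat n) (hdImem : dI ∈ C.alg) (hdIherm : dI.IsHermitian)
    (hdIle : specLE dI a)
    (hdIgreatest : ∀ b ∈ C.alg, b.IsHermitian → specLE b a → specLE b dI)
    (dO : Mat n) (hdOmem : dO ∈ C.alg) (hdOherm : dO.IsHermitian)
    (hdOge : specLE a dO)
    (hdOleast : ∀ b ∈ C.alg, b.IsHermitian → specLE a b → specLE dO b)
    (d₁ : Mat n) (hd₁mem : d₁ ∈ C.alg) (hd₁proj : IsProjection d₁)
    (hd₁ge : loewnerLE (specProj a (Set.Iio r)) d₁)
    (hd₁least : ∀ p ∈ C.alg, IsProjection p →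
      loewnerLE (specProj a (Set.Iio r)) p → loewnerLE d₁ p)
    (d₂ : Mat n) (hd₂mem : d₂ ∈ C.alg) (hd₂proj : IsProjection d₂)
    (hd₂ge : loewnerLE (specProj a (Set.Ioi s)) d₂)
    (hd₂least : ∀ p ∈ C.alg, IsProjection p →
      loewnerLE (specProj a (Set.Ioi s)) p → loewnerLE d₂ p) :
    ∀ lam : Character C.alg,
      (lam ⟨dI, hdImem⟩ < (r : ℂ) ∧ (s : ℂ) < lam ⟨dO, hdOmem⟩ →
        lam ⟨d₁, hd₁mem⟩ = 1 ∧ lam ⟨d₂, hd₂mem⟩ = 1) ∧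
      (lam ⟨d₁, hd₁mem⟩ = 1 ∧ lam ⟨d₂, hd₂mem⟩ = 1 →
        lam ⟨dI, hdImem⟩ ≤ (r : ℂ) ∧ (s : ℂ) ≤ lam ⟨dO, hdOmem⟩) := by
  intro lam
  constructor
  · rintro ⟨h1, h2⟩
    exact ⟨part_i_d1 hn ha hdImem hdIherm hdIgreatest hd₁mem hd₁proj hd₁ge lam h1,
      part_i_d2 hn ha hdOmem hdOherm hdOleast hd₂mem hd₂proj hd₂ge lam h2⟩
  · rintro ⟨h1, h2⟩
    exact ⟨part_ii_d1 ha hdImem hdIherm hdIle hd₁mem hd₁proj hd₁least lam h1,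
      part_ii_d2 ha hdOmem hdOherm hdOge hd₂mem hd₂proj hd₂least lam h2⟩


end
end

section
/- Let A = M_n(ℂ), let a ∈ A be Hermitian, and suppose that for every context D an outer daseinisation d_D = δᵒ(a)_D exists, i.e. d_D ∈ D is Hermitian, a ≤ₛ d_D, and d_D ≤ₛ b for every Hermitian b ∈ D with a ≤ₛ b. Then: (i) for all contexts D ⊆ C and every character λ of C, λ(d_C) ≤ λ(d_D); and (ii) for every context C and every x ∈ ℝ, the set U = {(D,λ) ∈ Σ_e : D ⊆ C and λ(d_D) > x} is Σ↓-open. -/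
open scoped ComplexOrder

noncomputable section

/-! ### Auxiliary lemmas on the matrix functional calculus -/

section CfcAux
variable {n : ℕ} {A : Mat n}

lemma mcfc_mul (hA : A.IsHermitian) (f g : ℝ → ℝ) :
    hA.cfc f * hA.cfc g = hA.cfc fun x => f x * g x := by
  have h : ∀ {a b c d e f : Mat n}, (a*b*c)*(d*e*f) = a*(b*(c*d)*e)*f := fun {a b c d e f} => by
    simp only [mul_assoc]
  rw [Matrix.IsHermitian.cfc, Matrix.IsHermitian.cfc, Matrix.IsHermitian.cfc, ← map_mul,
    Matrix.diagonal_mul_diagonal]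
  have : (fun i => ((RCLike.ofReal : ℝ → ℂ) ∘ f ∘ hA.eigenvalues) i *
        ((RCLike.ofReal : ℝ → ℂ) ∘ g ∘ hA.eigenvalues) i)
      = (RCLike.ofReal : ℝ → ℂ) ∘ (fun x => f x * g x) ∘ hA.eigenvalues := by
    funext i; simp
  rw [this]

lemma mcfc_sub (hA : A.IsHermitian) (f g : ℝ → ℝ) :
    hA.cfc f - hA.cfc g = hA.cfc fun x => f x - g x := by
  rw [Matrix.IsHermitian.cfc, Matrix.IsHermitian.cfc, Matrix.IsHermitian.cfc,
    ← map_sub, Matrix.diagonal_sub]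
  have : (fun i => ((RCLike.ofReal : ℝ → ℂ) ∘ f ∘ hA.eigenvalues) i -
        ((RCLike.ofReal : ℝ → ℂ) ∘ g ∘ hA.eigenvalues) i)
      = (RCLike.ofReal : ℝ → ℂ) ∘ (fun x => f x - g x) ∘ hA.eigenvalues := by
    funext i; simp
  rw [this]

lemma mcfc_add (hA : A.IsHermitian) (f g : ℝ → ℝ) :
    hA.cfc f + hA.cfc g = hA.cfc fun x => f x + g x := by
  rw [Matrix.IsHermitian.cfc, Matrix.IsHermitian.cfc, Matrix.IsHermitian.cfc,
    ← map_add, Matrix.diagonal_add]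
  have : (fun i => ((RCLike.ofReal : ℝ → ℂ) ∘ f ∘ hA.eigenvalues) i +
        ((RCLike.ofReal : ℝ → ℂ) ∘ g ∘ hA.eigenvalues) i)
      = (RCLike.ofReal : ℝ → ℂ) ∘ (fun x => f x + g x) ∘ hA.eigenvalues := by
    funext i; simp
  rw [this]

lemma mcfc_id (hA : A.IsHermitian) : hA.cfc (fun x => x) = A := by
  rw [Matrix.IsHermitian.cfc]
  exact hA.spectral_theorem.symm

lemma mcfc_const (hA : A.IsHermitian) (c : ℝ) :
    hA.cfc (fun _ => c) = (c : ℂ) • 1 := by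
  rw [Matrix.IsHermitian.cfc]
  have : Matrix.diagonal ((RCLike.ofReal : ℝ → ℂ) ∘ (fun _ : ℝ => c) ∘ hA.eigenvalues)
      = (c : ℂ) • (1 : Mat n) := by
    ext i j
    by_cases h : i = j <;> simp [Matrix.diagonal_apply, Matrix.one_apply, h]
  rw [this, map_smul, map_one]

lemma mcfc_one (hA : A.IsHermitian) : hA.cfc (fun _ => (1:ℝ)) = 1 := by
  rw [mcfc_const]; simp

lemma mcfc_psd (hA : A.IsHermitian) {f : ℝ → ℝ} (hf : ∀ x, 0 ≤ f x) :
    (hA.cfc f).PosSemidef := by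
  rw [Matrix.IsHermitian.cfc, Unitary.conjStarAlgAut_apply, Matrix.star_eq_conjTranspose]
  exact (Matrix.PosSemidef.diagonal (fun i => by
    simpa using Complex.zero_le_real.mpr (hf _))).mul_mul_conjTranspose_same _

lemma mcfc_pow (hA : A.IsHermitian) (f : ℝ → ℝ) (k : ℕ) :
    hA.cfc f ^ k = hA.cfc fun x => f x ^ k := by
  induction k with
  | zero => simpa using (mcfc_one hA).symm
  | succ k ih => rw [pow_succ, ih, mcfc_mul]; simp [pow_succ]

lemma mcfc_eval (hA : A.IsHermitian) (p : Polynomial ℝ) :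
    hA.cfc (fun x => p.eval x) = Polynomial.aeval A p := by
  induction p using Polynomial.induction_on' with
  | add p q hp hq =>
      rw [map_add, ← hp, ← hq, mcfc_add]
      simp
  | monomial k c =>
      rw [Polynomial.aeval_monomial]
      have : hA.cfc (fun x => Polynomial.eval x (Polynomial.monomial k c))
          = hA.cfc (fun _ => c) * hA.cfc (fun x => x) ^ k := by
        rw [mcfc_pow, mcfc_mul]
        simp [Polynomial.eval_monomial]
      rw [this, mcfc_id, mcfc_const]
      congr 1
      rw [IsScalarTower.algebraMap_apply ℝ ℂ (Mat n), Algebra.algebraMap_eq_smul_one]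
      simp

lemma mcfc_congr (hA : A.IsHermitian) {f g : ℝ → ℝ}
    (h : ∀ i, f (hA.eigenvalues i) = g (hA.eigenvalues i)) : hA.cfc f = hA.cfc g := by
  rw [Matrix.IsHermitian.cfc, Matrix.IsHermitian.cfc]
  have : (RCLike.ofReal : ℝ → ℂ) ∘ f ∘ hA.eigenvalues
      = (RCLike.ofReal : ℝ → ℂ) ∘ g ∘ hA.eigenvalues := by
    funext i; simp [h i]
  rw [this]

lemma mcfc_mem {S : StarSubalgebra ℂ (Mat n)} (hA : A.IsHermitian) (hAS : A ∈ S) (f : ℝ → ℝ) :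
    hA.cfc f ∈ S := by
  classical
  set s : Finset ℝ := Finset.image hA.eigenvalues Finset.univ with hs
  set p : Polynomial ℝ := Lagrange.interpolate s id f with hp
  have hfp : hA.cfc f = hA.cfc fun x => p.eval x := by
    refine mcfc_congr hA fun i => ?_
    exact (Lagrange.eval_interpolate_at_node f (Set.injOn_id _)
      (Finset.mem_image_of_mem hA.eigenvalues (Finset.mem_univ i))).symm
  rw [hfp, mcfc_eval hA p, ← Polynomial.aeval_map_algebraMap ℂ A p]
  set q := p.map (algebraMap ℝ ℂ)
  have : Polynomial.aeval A q = S.subtype (Polynomial.aeval (⟨A, hAS⟩ : S) q) := by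
    rw [← Polynomial.aeval_algHom_apply]
    rfl
  rw [this]
  exact SetLike.coe_mem _

end CfcAux

/-! ### Characters on subalgebras -/

section CharAux
variable {n : ℕ} {S : StarSubalgebra ℂ (Mat n)}

lemma char_im_zero (φ : Character S) {r : Mat n} (hr : r ∈ S) (hherm : r.IsHermitian) :
    (φ ⟨r, hr⟩).im = 0 := by
  have hstar : star (⟨r, hr⟩ : S) = ⟨r, hr⟩ := Subtype.ext (by
    simpa [Matrix.star_eq_conjTranspose] using hherm.eq)
  have h1 := map_star φ (⟨r, hr⟩ : S)
  rw [hstar] at h1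
  have h2 : (starRingEnd ℂ) (φ ⟨r, hr⟩) = φ ⟨r, hr⟩ := by
    simpa using h1.symm
  exact Complex.conj_eq_iff_im.mp h2

lemma char_psd_nonneg (φ : Character S) {r : Mat n} (hr : r ∈ S) (hpsd : r.PosSemidef) :
    0 ≤ φ ⟨r, hr⟩ := by
  set z := φ ⟨r, hr⟩ with hzdef
  have hann : Polynomial.aeval (⟨r, hr⟩ : S) (minpoly ℂ r) = 0 := by
    have h := Polynomial.aeval_algHom_apply S.subtype.toAlgHom (⟨r, hr⟩ : S) (minpoly ℂ r)
    have hval : (Polynomial.aeval (⟨r, hr⟩ : S) (minpoly ℂ r) : Mat n) = 0 := by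
      calc (Polynomial.aeval (⟨r, hr⟩ : S) (minpoly ℂ r) : Mat n)
          = S.subtype.toAlgHom (Polynomial.aeval (⟨r, hr⟩ : S) (minpoly ℂ r)) := rfl
        _ = Polynomial.aeval (S.subtype.toAlgHom (⟨r, hr⟩ : S)) (minpoly ℂ r) := h.symm
        _ = Polynomial.aeval r (minpoly ℂ r) := rfl
        _ = 0 := minpoly.aeval ℂ r
    exact Subtype.ext (by simpa using hval)
  have hroot : (minpoly ℂ r).IsRoot z := by
    have h1 := Polynomial.aeval_algHom_apply φ.toAlgHom (⟨r, hr⟩ : S) (minpoly ℂ r)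
    rw [hann, map_zero] at h1
    simpa [Polynomial.IsRoot.def, ← Polynomial.coe_aeval_eq_eval] using h1
  set f := (Matrix.toLinAlgEquiv' : Mat n ≃ₐ[ℂ] _) r with hf
  have hmin : minpoly ℂ f = minpoly ℂ r := minpoly.algEquiv_eq _ r
  have heig : Module.End.HasEigenvalue f z :=
    Module.End.hasEigenvalue_of_isRoot (by rw [hmin]; exact hroot)
  obtain ⟨v, hv⟩ := heig.exists_hasEigenvector
  have hfv : r.mulVec v = z • v := by
    have h2 := hv.apply_eq_smul
    rw [hf] at h2
    simpa [Matrix.toLinAlgEquiv'_apply, Matrix.toLin'_apply] using h2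
  have hq := hpsd.dotProduct_mulVec_nonneg v
  rw [hfv] at hq
  have hdot : dotProduct (star v) (z • v) = z * dotProduct (star v) v := by
    simp [dotProduct_smul, smul_eq_mul]
  rw [hdot] at hq
  have hpos : 0 < dotProduct (star v) v :=
    Matrix.dotProduct_star_self_pos_iff.mpr hv.right
  set c := dotProduct (star v) v with hc
  have hcim : c.im = 0 := ((Complex.le_def.mp hpos.le).2).symm
  have hcre : 0 < c.re := by
    have h3 := Complex.lt_def.mp hpos
    simpa using h3.1
  have hqre : 0 ≤ (z * c).re := (Complex.le_def.mp hq).1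
  have hqim : (z * c).im = 0 := ((Complex.le_def.mp hq).2).symm
  rw [Complex.mul_re] at hqre
  rw [Complex.mul_im] at hqim
  have hzim : z.im = 0 := by
    rw [hcim] at hqim
    simp at hqim
    rcases hqim with h | h
    · exact h
    · exact absurd h hcre.ne'
  refine Complex.le_def.mpr ⟨?_, by simp [hzim]⟩
  simp only [Complex.zero_re]
  rw [hcim, hzim] at hqre
  nlinarith

lemma specProj_Iic_eq {q : Mat n} (hq : q.IsHermitian) (x : ℝ) :
    specProj q (Set.Iic x) = hq.cfc (Set.indicator (Set.Iic x) fun _ => (1 : ℝ)) := by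
  rw [specProj, dif_pos hq]

/-- The key monotonicity: characters are monotone w.r.t. the spectral order. -/
lemma char_specLE_mono (φ : Character S) {p q : Mat n} (hp : p ∈ S) (hq : q ∈ S)
    (hph : p.IsHermitian) (hqh : q.IsHermitian) (hle : specLE p q) :
    φ ⟨p, hp⟩ ≤ φ ⟨q, hq⟩ := by
  by_contra hcon
  set s := φ ⟨p, hp⟩ with hs
  set t := φ ⟨q, hq⟩ with ht
  have hsim : s.im = 0 := char_im_zero φ hp hph
  have htim : t.im = 0 := char_im_zero φ hq hqh
  have htre : t.re < s.re := by
    by_contra hle'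
    push_neg at hle'
    exact hcon (Complex.le_def.mpr ⟨hle', by rw [hsim, htim]⟩)
  clear hcon
  set x : ℝ := (t.re + s.re) / 2 with hxdef
  have hx1 : t.re < x := by rw [hxdef]; linarith
  have hx2 : x < s.re := by rw [hxdef]; linarith
  set χ : ℝ → ℝ := Set.indicator (Set.Iic x) (fun _ => (1 : ℝ)) with hχ
  have hχ0 : ∀ y, 0 ≤ χ y := fun y =>
    Set.indicator_apply_nonneg (fun _ => by norm_num)
  have hχ1 : ∀ y, χ y ≤ 1 := fun y => by
    rw [hχ]
    by_cases hy : y ∈ Set.Iic x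
    · rw [Set.indicator_of_mem hy]
    · rw [Set.indicator_of_notMem hy]; norm_num
  -- the spectral projections
  set Ep := hph.cfc χ with hEp
  set Eq' := hqh.cfc χ with hEq
  have hEp_mem : Ep ∈ S := mcfc_mem hph hp χ
  have hEq_mem : Eq' ∈ S := mcfc_mem hqh hq χ
  have hEp_psd : Ep.PosSemidef := mcfc_psd hph hχ0
  have hEq_psd : Eq'.PosSemidef := mcfc_psd hqh hχ0
  -- (1) difference is PSD
  have hdiff : (Ep - Eq').PosSemidef := by
    have h := hle x
    rw [loewnerLE, specProj_Iic_eq hqh x, specProj_Iic_eq hph x] at h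
    exact h
  have h1 : 0 ≤ φ ⟨Ep - Eq', sub_mem hEp_mem hEq_mem⟩ :=
    char_psd_nonneg φ _ hdiff
  have e1 : (⟨Ep - Eq', sub_mem hEp_mem hEq_mem⟩ : S)
      = ⟨Ep, hEp_mem⟩ - ⟨Eq', hEq_mem⟩ := rfl
  rw [e1, map_sub] at h1
  -- pointwise nonneg auxiliary functions
  have hprod_p : ∀ y, 0 ≤ (x - y) * χ y := by
    intro y
    by_cases hy : y ∈ Set.Iic x
    · have hyx : y ≤ x := Set.mem_Iic.mp hy
      rw [hχ, Set.indicator_of_mem hy, mul_one]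
      exact sub_nonneg.mpr hyx
    · rw [hχ, Set.indicator_of_notMem hy, mul_zero]
  have hprod_q : ∀ y, 0 ≤ (y - x) * (1 - χ y) := by
    intro y
    by_cases hy : y ∈ Set.Iic x
    · rw [hχ, Set.indicator_of_mem hy]
      norm_num
    · have hyx : x < y := by
        simpa using hy
      rw [hχ, Set.indicator_of_notMem hy, sub_zero, mul_one]
      exact sub_nonneg.mpr hyx.le
  -- (2) (x•1 - p) * Ep is PSD
  set Gp := hph.cfc (fun y => x - y) with hGp
  have hGp_mem : Gp ∈ S := mcfc_mem hph hp _
  have h2psd : (Gp * Ep).PosSemidef := by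
    rw [hGp, hEp, mcfc_mul]
    exact mcfc_psd hph hprod_p
  have h2 : 0 ≤ φ ⟨Gp * Ep, mul_mem hGp_mem hEp_mem⟩ := char_psd_nonneg φ _ h2psd
  have e2 : (⟨Gp * Ep, mul_mem hGp_mem hEp_mem⟩ : S) = ⟨Gp, hGp_mem⟩ * ⟨Ep, hEp_mem⟩ := rfl
  rw [e2, map_mul] at h2
  have eGp : (⟨Gp, hGp_mem⟩ : S) = (x : ℂ) • (1 : S) - ⟨p, hp⟩ := by
    apply Subtype.ext
    show Gp = (((x : ℂ) • (1 : S) - ⟨p, hp⟩ : S) : Mat n)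
    rw [hGp, ← mcfc_sub hph (fun _ => x) (fun y => y), mcfc_const, mcfc_id]
    rfl
  have hφGp : φ ⟨Gp, hGp_mem⟩ = (x : ℂ) - s := by
    rw [eGp, map_sub, map_smul, map_one, hs]
    simp
  rw [hφGp] at h2
  -- (3) (q - x•1) * (1 - Eq') is PSD
  set Gq := hqh.cfc (fun y => y - x) with hGq
  have hGq_mem : Gq ∈ S := mcfc_mem hqh hq _
  set Hq := hqh.cfc (fun y => 1 - χ y) with hHq
  have hHq_mem : Hq ∈ S := mcfc_mem hqh hq _
  have h3psd : (Gq * Hq).PosSemidef := by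
    rw [hGq, hHq, mcfc_mul]
    exact mcfc_psd hqh hprod_q
  have h3 : 0 ≤ φ ⟨Gq * Hq, mul_mem hGq_mem hHq_mem⟩ := char_psd_nonneg φ _ h3psd
  have e3 : (⟨Gq * Hq, mul_mem hGq_mem hHq_mem⟩ : S) = ⟨Gq, hGq_mem⟩ * ⟨Hq, hHq_mem⟩ := rfl
  rw [e3, map_mul] at h3
  have eGq : (⟨Gq, hGq_mem⟩ : S) = ⟨q, hq⟩ - (x : ℂ) • (1 : S) := by
    apply Subtype.ext
    show Gq = ((⟨q, hq⟩ - (x : ℂ) • (1 : S) : S) : Mat n)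
    rw [hGq, ← mcfc_sub hqh (fun y => y) (fun _ => x), mcfc_const, mcfc_id]
    rfl
  have hφGq : φ ⟨Gq, hGq_mem⟩ = t - (x : ℂ) := by
    rw [eGq, map_sub, map_smul, map_one, ht]
    simp
  have eHq : (⟨Hq, hHq_mem⟩ : S) = (1 : S) - ⟨Eq', hEq_mem⟩ := by
    apply Subtype.ext
    show Hq = (((1 : S) - ⟨Eq', hEq_mem⟩ : S) : Mat n)
    rw [hHq, ← mcfc_sub hqh (fun _ => (1:ℝ)) χ, mcfc_one]
    rfl
  have hφHq : φ ⟨Hq, hHq_mem⟩ = 1 - φ ⟨Eq', hEq_mem⟩ := by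
    rw [eHq, map_sub, map_one]
  rw [hφGq, hφHq] at h3
  -- extract real inequalities
  set av := φ ⟨Ep, hEp_mem⟩ with hav
  set bv := φ ⟨Eq', hEq_mem⟩ with hbv
  have haim : av.im = 0 := char_im_zero φ hEp_mem hEp_psd.isHermitian
  have hbim : bv.im = 0 := char_im_zero φ hEq_mem hEq_psd.isHermitian
  have hab : bv.re ≤ av.re := by
    have h4 := (Complex.le_def.mp h1).1
    simpa using h4
  have h2re : 0 ≤ (x - s.re) * av.re := by
    have h5 := (Complex.le_def.mp h2).1
    rw [Complex.mul_re, Complex.sub_re, Complex.sub_im, Complex.ofReal_re,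
      Complex.ofReal_im, hsim, haim] at h5
    simpa using h5
  have h3re : 0 ≤ (t.re - x) * (1 - bv.re) := by
    have h6 := (Complex.le_def.mp h3).1
    rw [Complex.mul_re, Complex.sub_re, Complex.sub_im, Complex.ofReal_re,
      Complex.ofReal_im, htim] at h6
    simp only [Complex.sub_re, Complex.sub_im, Complex.one_re, Complex.one_im, hbim] at h6
    simpa using h6
  have hav0 : av.re ≤ 0 := by
    by_contra hpos
    push_neg at hpos
    have hneg : (x - s.re) * av.re < 0 :=
      mul_neg_of_neg_of_pos (by linarith) hpos
    exact absurd h2re (not_le.mpr hneg)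
  have hbv1 : 1 ≤ bv.re := by
    by_contra hlt1
    push_neg at hlt1
    have hneg : (t.re - x) * (1 - bv.re) < 0 :=
      mul_neg_of_neg_of_pos (by linarith) (by linarith)
    exact absurd h3re (not_le.mpr hneg)
  have : (1 : ℝ) ≤ 0 := le_trans hbv1 (le_trans hab hav0)
  exact absurd this (by norm_num)

end CharAux

/-- If every context admits an outer daseinisation `d_D = δᵒ(a)_D` of a
Hermitian `a`, then (i) characters evaluate antitonely on the daseinisations along inclusions
of contexts, and (ii) for each context `C` and `x : ℝ`, the set
`{(D,λ) : D ⊆ C, λ(d_D) > x}` is Σ↓-open. -/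
theorem outer_daseinisation_gives_sigma_down_open {n : ℕ} (hn : 0 < n)
    (a : Mat n) (ha : a.IsHermitian)
    (d : Ctx n → Mat n)
    (hmem : ∀ D : Ctx n, d D ∈ D.alg)
    (hherm : ∀ D : Ctx n, (d D).IsHermitian)
    (hge : ∀ D : Ctx n, specLE a (d D))
    (hleast : ∀ D : Ctx n, ∀ b ∈ D.alg, b.IsHermitian → specLE a b → specLE (d D) b) :
    (∀ C D : Ctx n, ∀ h : D.alg ≤ C.alg, ∀ lam : Character C.alg,
      lam ⟨d C, hmem C⟩ ≤ lam ⟨d D, h (hmem D)⟩) ∧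
    (∀ C : Ctx n, ∀ x : ℝ,
      IsSigmaDownOpen {z : SigmaE n |
        z.1.alg ≤ C.alg ∧ (x : ℂ) < z.2 ⟨d z.1, hmem z.1⟩}) := by
  have parti : ∀ C D : Ctx n, ∀ h : D.alg ≤ C.alg, ∀ lam : Character C.alg,
      lam ⟨d C, hmem C⟩ ≤ lam ⟨d D, h (hmem D)⟩ := by
    intro C D h lam
    have hkey : specLE (d C) (d D) :=
      hleast C (d D) (h (hmem D)) (hherm D) (hge D)
    exact char_specLE_mono lam (hmem C) (h (hmem D)) (hherm C) (hherm D) hkey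
  refine ⟨parti, ?_⟩
  intro C x
  constructor
  · -- openness of each slice
    intro C'
    by_cases hsub : C'.alg ≤ C.alg
    · have hset : {φ : Character C'.alg |
          (⟨C', φ⟩ : SigmaE n) ∈ {z : SigmaE n |
            z.1.alg ≤ C.alg ∧ (x : ℂ) < z.2 ⟨d z.1, hmem z.1⟩}}
          = (fun φ : Character C'.alg => (φ ⟨d C', hmem C'⟩).re) ⁻¹' Set.Ioi x := by
        ext φ
        simp only [Set.mem_setOf_eq, Set.mem_preimage, Set.mem_Ioi]
        constructor
        · rintro ⟨-, hlt⟩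
          have := (Complex.lt_def.mp hlt).1
          simpa using this
        · intro hlt
          refine ⟨hsub, ?_⟩
          rw [Complex.lt_def]
          refine ⟨by simpa using hlt, ?_⟩
          rw [char_im_zero φ (hmem C') (hherm C')]
          simp
      rw [hset]
      have hcont : Continuous fun φ : Character C'.alg => (φ ⟨d C', hmem C'⟩).re := by
        have hcoe : Continuous fun φ : Character C'.alg => (φ : C'.alg → ℂ) :=
          continuous_induced_dom
        exact Complex.continuous_re.comp ((continuous_apply (⟨d C', hmem C'⟩ : C'.alg)).comp hcoe)
      exact isOpen_Ioi.preimage hcont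
    · have hset : {φ : Character C'.alg |
          (⟨C', φ⟩ : SigmaE n) ∈ {z : SigmaE n |
            z.1.alg ≤ C.alg ∧ (x : ℂ) < z.2 ⟨d z.1, hmem z.1⟩}} = ∅ := by
        ext φ
        simp only [Set.mem_setOf_eq, Set.mem_empty_iff_false, iff_false, not_and]
        intro hc
        exact absurd hc hsub
      rw [hset]
      exact isOpen_empty
  · -- downward closure
    rintro C' D h φ ⟨hsub, hlt⟩
    refine ⟨le_trans h hsub, ?_⟩
    show (x : ℂ) < resChar h φ ⟨d D, hmem D⟩
    have hres : resChar h φ ⟨d D, hmem D⟩ = φ ⟨d D, h (hmem D)⟩ := rfl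
    rw [hres]
    exact lt_of_lt_of_le hlt (parti C' D h φ)

end
end
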